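/- arXiv:math-ph/0603041 — 9 statements merged into one kernel-verified Lean document; each statement's English description precedes it below -/
import Mathlib

section
/- Let q > 0 and p be real numbers, and define y : ℝ → ℝ by y(t) := sqrt((q·cos t + p·sin t)² + sin²t/q²). Then y(t) > 0 for all t, y is twice differentiable on ℝ, it satisfies the differential equation y''(t) + y(t) - 1/y(t)³ = 0 for all t ∈ ℝ, and it has the initial data y(0) = q and y'(0) = p. -/
open Real

private lemma aux_A_deriv (q p t : ℝ) :
    HasDerivAt (fun s => q * Real.cos s + p * Real.sin s)
      (p * Real.cos t - q * Real.sin t) t := by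
  have := ((Real.hasDerivAt_cos t).const_mul q).add ((Real.hasDerivAt_sin t).const_mul p)
  exact this.congr_deriv (by ring)

private lemma aux_g_deriv (q p t : ℝ) :
    HasDerivAt (fun s => (q * Real.cos s + p * Real.sin s) ^ 2 + (Real.sin s) ^ 2 / q ^ 2)
      (2 * (q * Real.cos t + p * Real.sin t) * (p * Real.cos t - q * Real.sin t)
        + 2 * Real.sin t * Real.cos t / q ^ 2) t := by
  have h1 := (aux_A_deriv q p t).pow 2
  have h2 := ((Real.hasDerivAt_sin t).pow 2).div_const (q ^ 2)
  have := h1.add h2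
  exact this.congr_deriv (by push_cast; ring)

private lemma aux_g1_deriv (q p t : ℝ) :
    HasDerivAt (fun s => 2 * (q * Real.cos s + p * Real.sin s) * (p * Real.cos s - q * Real.sin s)
        + 2 * Real.sin s * Real.cos s / q ^ 2)
      (2 * (p * Real.cos t - q * Real.sin t) ^ 2
        - 2 * (q * Real.cos t + p * Real.sin t) ^ 2
        + 2 * ((Real.cos t) ^ 2 - (Real.sin t) ^ 2) / q ^ 2) t := by
  have hB : HasDerivAt (fun s => p * Real.cos s - q * Real.sin s)
      (-(q * Real.cos t + p * Real.sin t)) t := by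
    have := ((Real.hasDerivAt_cos t).const_mul p).sub ((Real.hasDerivAt_sin t).const_mul q)
    exact this.congr_deriv (by ring)
  have h1 := ((aux_A_deriv q p t).const_mul 2).mul hB
  have h2 := (((Real.hasDerivAt_sin t).const_mul 2).mul (Real.hasDerivAt_cos t)).div_const (q ^ 2)
  have := h1.add h2
  exact this.congr_deriv (by ring)

private lemma aux_key (p q s c : ℝ) (hq : q ≠ 0) (h : s ^ 2 + c ^ 2 = 1) :
    2 * ((q*c+p*s)^2 + s^2/q^2) * (2*(p*c-q*s)^2 - 2*(q*c+p*s)^2 + 2*(c^2-s^2)/q^2)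
      - (2*(q*c+p*s)*(p*c-q*s) + 2*s*c/q^2)^2
    = 4 - 4*((q*c+p*s)^2 + s^2/q^2)^2 := by
  field_simp
  linear_combination 4*q^4*(s^2+c^2+1) * h

private lemma aux_ode (s N M : ℝ) (hs : 0 < s) (hkey : 2*s^2*N - M^2 = 4 - 4*s^4) :
    (N*(2*s) - M*(2*(M/(2*s))))/(2*s)^2 + s - 1/s^3 = 0 := by
  have hs0 : s ≠ 0 := hs.ne'
  field_simp
  linear_combination hkey

/-- Proposition 4.1: the classical trajectory for the perturbed harmonic oscillator
`p²/2 + q²/2 + 1/(2q²)` in terms of the unperturbed harmonic motion. -/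
theorem perturbed_HO_trajectory (q p : ℝ) (hq : 0 < q)
    (y : ℝ → ℝ)
    (hy : y = fun t => Real.sqrt ((q * Real.cos t + p * Real.sin t) ^ 2
      + (Real.sin t) ^ 2 / q ^ 2)) :
    (∀ t, 0 < y t) ∧
    Differentiable ℝ y ∧ Differentiable ℝ (deriv y) ∧
    (∀ t : ℝ, deriv (deriv y) t + y t - 1 / (y t) ^ 3 = 0) ∧
    y 0 = q ∧ deriv y 0 = p := by
  have hq0 : q ≠ 0 := ne_of_gt hq
  set g : ℝ → ℝ := fun t => (q * Real.cos t + p * Real.sin t) ^ 2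
      + (Real.sin t) ^ 2 / q ^ 2 with hgdef
  set g1 : ℝ → ℝ := fun t => 2 * (q * Real.cos t + p * Real.sin t)
      * (p * Real.cos t - q * Real.sin t) + 2 * Real.sin t * Real.cos t / q ^ 2 with hg1def
  set g2 : ℝ → ℝ := fun t => 2 * (p * Real.cos t - q * Real.sin t) ^ 2
      - 2 * (q * Real.cos t + p * Real.sin t) ^ 2
      + 2 * ((Real.cos t) ^ 2 - (Real.sin t) ^ 2) / q ^ 2 with hg2def
  have hgpos : ∀ t, 0 < g t := by
    intro t
    rcases eq_or_ne (Real.sin t) 0 with h | h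
    · have hcos : Real.cos t ^ 2 = 1 := by
        have := Real.sin_sq_add_cos_sq t
        nlinarith [this, sq_nonneg (Real.sin t), h]
      have heq : g t = q ^ 2 := by
        simp only [hgdef, h]
        field_simp
        linear_combination q ^ 4 * hcos
      rw [heq]; positivity
    · have h1 : 0 < (Real.sin t) ^ 2 / q ^ 2 := by positivity
      have h2 := sq_nonneg (q * Real.cos t + p * Real.sin t)
      simp only [hgdef]
      linarith
  have hgne : ∀ t, g t ≠ 0 := fun t => ne_of_gt (hgpos t)
  have hsqpos : ∀ t, 0 < Real.sqrt (g t) := fun t => Real.sqrt_pos.mpr (hgpos t)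
  have hgd : ∀ t, HasDerivAt g (g1 t) t := fun t => aux_g_deriv q p t
  have hg1d : ∀ t, HasDerivAt g1 (g2 t) t := fun t => aux_g1_deriv q p t
  have hyd : ∀ t, HasDerivAt y (g1 t / (2 * Real.sqrt (g t))) t := by
    intro t
    rw [hy]
    exact (hgd t).sqrt (hgne t)
  have hderiv : deriv y = fun t => g1 t / (2 * Real.sqrt (g t)) :=
    funext fun t => (hyd t).deriv
  have hDd : ∀ t, HasDerivAt (deriv y)
      ((g2 t * (2 * Real.sqrt (g t)) - g1 t * (2 * (g1 t / (2 * Real.sqrt (g t)))))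
        / (2 * Real.sqrt (g t)) ^ 2) t := by
    intro t
    rw [hderiv]
    exact (hg1d t).div (((hgd t).sqrt (hgne t)).const_mul 2)
      (mul_ne_zero two_ne_zero (ne_of_gt (hsqpos t)))
  have key : ∀ t, 2 * g t * g2 t - (g1 t) ^ 2 = 4 - 4 * (g t) ^ 2 := fun t =>
    aux_key p q (Real.sin t) (Real.cos t) hq0 (Real.sin_sq_add_cos_sq t)
  refine ⟨fun t => by rw [hy]; exact hsqpos t,
    fun t => (hyd t).differentiableAt,
    fun t => (hDd t).differentiableAt,
    ?_, ?_, ?_⟩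
  · intro t
    have hdd := (hDd t).deriv
    have hyt : y t = Real.sqrt (g t) := by rw [hy]
    rw [hdd, hyt]
    set s := Real.sqrt (g t) with hs
    have hs2 : s ^ 2 = g t := Real.sq_sqrt (hgpos t).le
    have hspos : 0 < s := hsqpos t
    have hkey := key t
    rw [← hs2] at hkey
    exact aux_ode s (g2 t) (g1 t) hspos (by linarith [hkey])
  · rw [hy]
    simp [Real.sqrt_sq hq.le]
  · rw [hderiv]
    show g1 0 / (2 * Real.sqrt (g 0)) = p
    have hg0 : g 0 = q ^ 2 := by simp [hgdef]
    have hg10 : g1 0 = 2 * q * p := by simp [hg1def]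
    rw [hg0, hg10, Real.sqrt_sq hq.le]
    field_simp
end

section
/- Let g > 0, q > 0 and p be real numbers, and define y : ℝ → ℝ by y(t) := sqrt((q·cosh t + p·sinh t)² + 2g²·sinh²t/q²). Then y(t) > 0 for all t, y is twice differentiable on ℝ, it satisfies the differential equation y''(t) - y(t) - 2g²/y(t)³ = 0 for all t ∈ ℝ, and it has the initial data y(0) = q and y'(0) = p. -/
/-- Remark 6.2: the classical trajectory for the perturbed inverted oscillator
`H_g⁻ = p²/2 - q²/2 + g²/q²` in terms of the unperturbed hyperbolic motion. -/
theorem perturbed_IHO_trajectory_g (g q p : ℝ) (hg : 0 < g) (hq : 0 < q)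
    (y : ℝ → ℝ)
    (hy : y = fun t => Real.sqrt ((q * Real.cosh t + p * Real.sinh t) ^ 2
      + 2 * g ^ 2 * (Real.sinh t) ^ 2 / q ^ 2)) :
    (∀ t, 0 < y t) ∧
    Differentiable ℝ y ∧ Differentiable ℝ (deriv y) ∧
    (∀ t : ℝ, deriv (deriv y) t - y t - 2 * g ^ 2 / (y t) ^ 3 = 0) ∧
    y 0 = q ∧ deriv y 0 = p := by
  have hqne : q ≠ 0 := hq.ne'
  set c : ℝ := 2 * g ^ 2 / q ^ 2 with hc
  have hcq : c * q ^ 2 = 2 * g ^ 2 := by rw [hc]; field_simp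
  have hcpos : 0 < c := by positivity
  set X : ℝ → ℝ := fun t => q * Real.cosh t + p * Real.sinh t with hX
  set V : ℝ → ℝ := fun t => q * Real.sinh t + p * Real.cosh t with hV
  set u : ℝ → ℝ := fun t => X t ^ 2 + c * Real.sinh t ^ 2 with huu
  set U : ℝ → ℝ := fun t => 2 * X t * V t + c * (2 * Real.sinh t * Real.cosh t) with hUU
  set W : ℝ → ℝ := fun t =>
    2 * (V t ^ 2 + X t ^ 2) + c * (2 * (Real.cosh t ^ 2 + Real.sinh t ^ 2)) with hWW
  have hyu : y = fun t => Real.sqrt (u t) := by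
    rw [hy]; funext t; congr 1
    simp only [huu, hX, hc]; ring
  have hupos : ∀ t, 0 < u t := by
    intro t
    rcases eq_or_ne (Real.sinh t) 0 with h | h
    · have ht : t = 0 := Real.sinh_eq_zero.mp h
      subst ht
      have h0 : u 0 = q ^ 2 := by simp [huu, hX]
      rw [h0]; positivity
    · simp only [huu]
      have h1 : 0 < c * Real.sinh t ^ 2 := by positivity
      nlinarith [sq_nonneg (X t)]
  have hypos : ∀ t, 0 < y t := fun t => by
    rw [hyu]; exact Real.sqrt_pos.mpr (hupos t)
  have hsne : ∀ t, Real.sqrt (u t) ≠ 0 := fun t =>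
    (Real.sqrt_pos.mpr (hupos t)).ne'
  have hXd : ∀ t, HasDerivAt X (V t) t := fun t => by
    exact
      ((Real.hasDerivAt_cosh t).const_mul q).add ((Real.hasDerivAt_sinh t).const_mul p)
  have hVd : ∀ t, HasDerivAt V (X t) t := fun t => by
    exact
      ((Real.hasDerivAt_sinh t).const_mul q).add ((Real.hasDerivAt_cosh t).const_mul p)
  have hud : ∀ t, HasDerivAt u (U t) t := fun t => by
    have h1 := ((hXd t).pow 2).add (((Real.hasDerivAt_sinh t).pow 2).const_mul c)
    refine h1.congr_deriv ?_
    simp only [hUU]; push_cast; ring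
  have hUd : ∀ t, HasDerivAt U (W t) t := fun t => by
    have h1 := (((hXd t).mul (hVd t)).const_mul 2).add
      ((((Real.hasDerivAt_sinh t).mul (Real.hasDerivAt_cosh t)).const_mul 2).const_mul c)
    have h2 : U = fun t => 2 * (X t * V t) + c * (2 * (Real.sinh t * Real.cosh t)) := by
      funext t; simp [hUU]; ring
    rw [h2]
    refine h1.congr_deriv ?_
    simp only [hWW]; ring
  have hyd : ∀ t, HasDerivAt y (U t / (2 * Real.sqrt (u t))) t := fun t => by
    have h1 := (Real.hasDerivAt_sqrt (hupos t).ne').comp t (hud t)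
    rw [hyu]
    refine h1.congr_deriv ?_
    field_simp
  have hderiv : deriv y = fun t => U t / (2 * Real.sqrt (u t)) :=
    funext fun t => (hyd t).deriv
  have hDd : ∀ t, HasDerivAt (fun t => U t / (2 * Real.sqrt (u t)))
      ((W t * (2 * Real.sqrt (u t)) - U t * (2 * (1 / (2 * Real.sqrt (u t)) * U t))) /
        (2 * Real.sqrt (u t)) ^ 2) t := fun t => by
    have hden : HasDerivAt (fun t => 2 * Real.sqrt (u t))
        (2 * (1 / (2 * Real.sqrt (u t)) * U t)) t :=
      ((Real.hasDerivAt_sqrt (hupos t).ne').comp t (hud t)).const_mul 2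
    exact (hUd t).div hden (mul_ne_zero two_ne_zero (hsne t))
  have hderiv2 : ∀ t, deriv (deriv y) t =
      (W t * (2 * Real.sqrt (u t)) - U t * (2 * (1 / (2 * Real.sqrt (u t)) * U t))) /
        (2 * Real.sqrt (u t)) ^ 2 := by
    intro t
    rw [hderiv]
    exact (hDd t).deriv
  refine ⟨hypos, fun t => (hyd t).differentiableAt, ?_, ?_, ?_, ?_⟩
  · rw [hderiv]
    exact fun t => (hDd t).differentiableAt
  · intro t
    have hcosh : Real.cosh t ^ 2 - Real.sinh t ^ 2 = 1 := Real.cosh_sq_sub_sinh_sq t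
    set s := Real.sqrt (u t) with hs
    have hspos : 0 < s := Real.sqrt_pos.mpr (hupos t)
    have hs2 : s ^ 2 = u t := Real.sq_sqrt (hupos t).le
    have key : 2 * W t * s ^ 2 - U t ^ 2 = 4 * s ^ 4 + 8 * g ^ 2 := by
      have hs4 : s ^ 4 = u t ^ 2 := by rw [show s ^ 4 = (s ^ 2) ^ 2 by ring, hs2]
      rw [hs2, hs4]
      simp only [huu, hUU, hWW, hX, hV]
      linear_combination (4 * c * q ^ 2 * (Real.cosh t ^ 2 - Real.sinh t ^ 2 + 1)) * hcosh
        + 4 * hcq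
    have hyt : y t = s := by rw [hyu]
    rw [hderiv2 t, hyt, ← hs]
    have h4 : (W t * (2 * s) - U t * (2 * (1 / (2 * s) * U t))) / (2 * s) ^ 2
        = (2 * W t * s ^ 2 - U t ^ 2) / (4 * s ^ 3) := by
      rw [div_eq_div_iff (by positivity) (by positivity)]
      field_simp
      ring
    rw [h4, key]
    field_simp
    ring
  · rw [hyu]
    have h0 : u 0 = q ^ 2 := by simp [huu, hX]
    simp only [h0, Real.sqrt_sq hq.le]
  · rw [hderiv]
    have h0 : u 0 = q ^ 2 := by simp [huu, hX]
    have hU0 : U 0 = 2 * q * p := by simp [hUU, hX, hV]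
    simp only [hU0, h0, Real.sqrt_sq hq.le]
    field_simp
end

section
/- Let a, b, c, d be real numbers with a·d - b·c = 1. Then ∫₀^π ds / ((a·cos s + c·sin s)² + (b·cos s + d·sin s)²) = π. -/
open Real intervalIntegral Set Filter Topology

lemma Qpos (a b c d : ℝ) (h : (a * d - b * c) ^ 2 = 1) (s : ℝ) :
    0 < (a * Real.cos s + c * Real.sin s) ^ 2 + (b * Real.cos s + d * Real.sin s) ^ 2 := by
  have hpy := Real.sin_sq_add_cos_sq s
  set x := a * Real.cos s + c * Real.sin s with hx
  set y := b * Real.cos s + d * Real.sin s with hy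
  set u := d * Real.cos s - b * Real.sin s with hu
  set v := c * Real.cos s - a * Real.sin s with hv
  have key : x * u - y * v = (a * d - b * c) * (Real.sin s ^ 2 + Real.cos s ^ 2) := by
    rw [hx, hy, hu, hv]; ring
  have key2 : (x * u - y * v) ^ 2 = 1 := by
    rw [key, hpy, mul_one, h]
  have cauchy : (x * u - y * v) ^ 2 ≤ (x ^ 2 + y ^ 2) * (u ^ 2 + v ^ 2) := by
    nlinarith [sq_nonneg (x * v + y * u)]
  by_contra hcon
  push_neg at hcon
  have h1 : (x ^ 2 + y ^ 2) * (u ^ 2 + v ^ 2) ≤ 0 :=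
    mul_nonpos_of_nonpos_of_nonneg hcon (by positivity)
  linarith

lemma Qintegrable (a b c d : ℝ) (h : (a * d - b * c) ^ 2 = 1) (p q : ℝ) :
    IntervalIntegrable (fun s => 1 / ((a * Real.cos s + c * Real.sin s) ^ 2
      + (b * Real.cos s + d * Real.sin s) ^ 2)) MeasureTheory.volume p q := by
  apply Continuous.intervalIntegrable
  apply Continuous.div continuous_const
  · continuity
  · exact fun s => (Qpos a b c d h s).ne'

lemma half_integral (a b c d : ℝ) (h : (a * d - b * c) ^ 2 = 1) :
    ∫ s in (0 : ℝ)..(Real.pi / 2),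
      1 / ((a * Real.cos s + c * Real.sin s) ^ 2
          + (b * Real.cos s + d * Real.sin s) ^ 2)
      = Real.pi / 2 - Real.arctan (a * c + b * d) := by
  set C : ℝ := c ^ 2 + d ^ 2 with hC
  set B : ℝ := a * c + b * d with hB
  have hCpos : 0 < C := by
    have cauchy : (a * d - b * c) ^ 2 ≤ (a ^ 2 + b ^ 2) * (c ^ 2 + d ^ 2) := by
      nlinarith [sq_nonneg (a * c + b * d)]
    nlinarith [sq_nonneg a, sq_nonneg b]
  set F : ℝ → ℝ := fun s => if s = Real.pi / 2 then Real.pi / 2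
      else Real.arctan (C * Real.tan s + B) with hF
  have hπ : (0:ℝ) ≤ Real.pi / 2 := by positivity
  have hcont : ContinuousOn F (Icc 0 (Real.pi / 2)) := by
    intro x hx
    by_cases hxe : x = Real.pi / 2
    · subst hxe
      rw [← continuousWithinAt_diff_self]
      have hsub : Icc (0:ℝ) (Real.pi/2) \ {Real.pi/2} ⊆ Iio (Real.pi/2) := by
        intro y hy
        exact lt_of_le_of_ne hy.1.2 hy.2
      have hlim : Tendsto (fun s => Real.arctan (C * Real.tan s + B))
          (𝓝[<] (Real.pi/2)) (𝓝 (Real.pi/2)) := by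
        have h1 : Tendsto (fun s => C * Real.tan s + B) (𝓝[<] (Real.pi/2)) atTop :=
          (Real.tendsto_tan_pi_div_two.const_mul_atTop hCpos).atTop_add tendsto_const_nhds
        exact (Real.tendsto_arctan_atTop.mono_right nhdsWithin_le_nhds).comp h1
      have h2 : Tendsto F (𝓝[<] (Real.pi/2)) (𝓝 (Real.pi/2)) := by
        apply hlim.congr'
        filter_upwards [self_mem_nhdsWithin] with y hy
        simp [hF, (Set.mem_Iio.mp hy).ne]
      have h3 := h2.mono_left (nhdsWithin_mono _ hsub)
      simpa [ContinuousWithinAt, hF] using h3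
    · have hxlt : x < Real.pi / 2 := lt_of_le_of_ne hx.2 hxe
      have hev : (fun y => Real.arctan (C * Real.tan y + B)) =ᶠ[𝓝 x] F := by
        filter_upwards [eventually_lt_nhds hxlt] with y hy
        simp [hF, ne_of_lt hy]
      have hcos : Real.cos x ≠ 0 := by
        have := Real.cos_pos_of_mem_Ioo ⟨by linarith [hx.1, Real.pi_pos], hxlt⟩
        exact this.ne'
      have hca : ContinuousAt (fun y => Real.arctan (C * Real.tan y + B)) x :=
        Real.continuous_arctan.continuousAt.comp
          ((((Real.continuousAt_tan.mpr hcos).const_mul C).add continuousAt_const))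
      exact (hca.congr hev).continuousWithinAt
  have hderiv : ∀ x ∈ Ioo (0:ℝ) (Real.pi/2),
      HasDerivWithinAt F (1 / ((a * Real.cos x + c * Real.sin x) ^ 2
          + (b * Real.cos x + d * Real.sin x) ^ 2)) (Ioi x) x := by
    intro x hx
    have hcos : Real.cos x ≠ 0 :=
      (Real.cos_pos_of_mem_Ioo ⟨by linarith [hx.1], hx.2⟩).ne'
    have h1 : HasDerivAt (fun y => Real.arctan (C * Real.tan y + B))
        ((1 / (1 + (C * Real.tan x + B) ^ 2)) * (C * (1 / Real.cos x ^ 2))) x :=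
      by have := (Real.hasDerivAt_arctan (C * Real.tan x + B)).comp x
          (((Real.hasDerivAt_tan hcos).const_mul C).add_const B); exact this
    have hev : F =ᶠ[𝓝 x] fun y => Real.arctan (C * Real.tan y + B) := by
      filter_upwards [eventually_lt_nhds hx.2] with y hy
      simp [hF, ne_of_lt hy]
    have h2 : HasDerivAt F ((1 / (1 + (C * Real.tan x + B) ^ 2)) * (C * (1 / Real.cos x ^ 2))) x :=
      h1.congr_of_eventuallyEq hev
    have hQ := Qpos a b c d h x
    have hpy := Real.sin_sq_add_cos_sq x
    have heq : (1 / (1 + (C * Real.tan x + B) ^ 2)) * (C * (1 / Real.cos x ^ 2))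
        = 1 / ((a * Real.cos x + c * Real.sin x) ^ 2 + (b * Real.cos x + d * Real.sin x) ^ 2) := by
      have h1p : (0:ℝ) < 1 + (C * Real.tan x + B) ^ 2 := by positivity
      rw [Real.tan_eq_sin_div_cos] at *
      rw [hC, hB] at *
      field_simp
      rw [eq_div_iff (by convert hQ.ne' using 1; ring)]
      linear_combination Real.cos x ^ 2 * h
    rw [heq] at h2
    exact h2.hasDerivWithinAt
  rw [intervalIntegral.integral_eq_sub_of_hasDeriv_right_of_le hπ hcont hderiv
    (Qintegrable a b c d h 0 (Real.pi/2))]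
  have hne : (0:ℝ) ≠ Real.pi / 2 := by
    have := Real.pi_pos; intro hh; linarith
  simp only [hF, if_pos rfl, if_neg hne, Real.tan_zero, mul_zero, zero_add]

/-- Lemma 3.2 (key computation): `∫₀^π ds / e^{2u₊(s)} = π` where
`e^{2u₊(s)} = (a cos s + c sin s)² + (b cos s + d sin s)²` and `ad - bc = 1`. -/
theorem integral_inv_sq_modulus (a b c d : ℝ) (h : a * d - b * c = 1) :
    ∫ s in (0 : ℝ)..Real.pi,
      1 / ((a * Real.cos s + c * Real.sin s) ^ 2
          + (b * Real.cos s + d * Real.sin s) ^ 2) = Real.pi := by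
  have h2 : (a * d - b * c) ^ 2 = 1 := by rw [h]; norm_num
  have h2' : (-a * d - -b * c) ^ 2 = 1 := by nlinarith
  have hsplit := intervalIntegral.integral_add_adjacent_intervals
    (Qintegrable a b c d h2 0 (Real.pi/2)) (Qintegrable a b c d h2 (Real.pi/2) Real.pi)
  rw [← hsplit, half_integral a b c d h2]
  have hsecond : (∫ s in (Real.pi/2)..Real.pi,
      1 / ((a * Real.cos s + c * Real.sin s) ^ 2
          + (b * Real.cos s + d * Real.sin s) ^ 2))
      = Real.pi / 2 - Real.arctan (-a * c + -b * d) := by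
    rw [← half_integral (-a) (-b) c d h2']
    have := intervalIntegral.integral_comp_sub_left
      (fun s => 1 / ((a * Real.cos s + c * Real.sin s) ^ 2
          + (b * Real.cos s + d * Real.sin s) ^ 2)) Real.pi
      (a := 0) (b := Real.pi/2)
    rw [show Real.pi - Real.pi / 2 = Real.pi / 2 by ring, show Real.pi - 0 = Real.pi by ring] at this
    rw [← this]
    congr 1
    funext s
    rw [Real.cos_pi_sub, Real.sin_pi_sub]
    ring_nf
  rw [hsecond]
  have : Real.arctan (-a * c + -b * d) = - Real.arctan (a * c + b * d) := by
    rw [← Real.arctan_neg]; ring_nf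
  rw [this]
  ring
end

section
/- Let a, b, c, d be real numbers with a·d - b·c = 1, and define θ : ℝ → ℝ by θ(t) := ∫₀^t ds / ((a·cos s + c·sin s)² + (b·cos s + d·sin s)²). Then θ(t + π) = θ(t) + π for every real t. -/
open Real intervalIntegral

private lemma key_integral (p q r : ℝ) (hp : 0 < p) (hpr : p * r - q ^ 2 = 1) (t : ℝ) :
    (∫ s in t..(t + Real.pi),
      1 / ((p * Real.cos s + q * Real.sin s) ^ 2
          + (q * Real.cos s + r * Real.sin s) ^ 2)) = Real.pi := by
  set Dn : ℝ → ℝ := fun s => p * Real.cos s ^ 2 + 2 * q * (Real.cos s * Real.sin s)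
      + r * Real.sin s ^ 2 with hDndef
  set Nn : ℝ → ℝ := fun s => q * (Real.cos s ^ 2 - Real.sin s ^ 2)
      + (r - p) * (Real.cos s * Real.sin s) with hNndef
  have pyth : ∀ x : ℝ, Real.sin x ^ 2 + Real.cos x ^ 2 = 1 := Real.sin_sq_add_cos_sq
  have hDn : ∀ x : ℝ, 0 < Dn x := by
    intro x
    have h1 := pyth x
    have hx : p * Dn x = (p * Real.cos x + q * Real.sin x) ^ 2 + Real.sin x ^ 2 := by
      simp only [hDndef]
      linear_combination (Real.sin x ^ 2) * hpr
    have hx2 : 0 < (p * Real.cos x + q * Real.sin x) ^ 2 + Real.sin x ^ 2 := by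
      rcases eq_or_ne (Real.sin x) 0 with hs | hs
      · have hc : Real.cos x ^ 2 = 1 := by rw [hs] at h1; linarith
        have : (p * Real.cos x + q * Real.sin x) ^ 2 = p ^ 2 := by
          rw [hs]; nlinarith [hc]
        rw [this]
        nlinarith [sq_nonneg (Real.sin x), sq_pos_of_pos hp]
      · have : 0 < Real.sin x ^ 2 := sq_pos_iff.mpr hs
        nlinarith [sq_nonneg (p * Real.cos x + q * Real.sin x)]
    nlinarith [hx, hx2, hp]
  have hsum : ∀ x : ℝ,
      (p * Real.cos x + q * Real.sin x) ^ 2 + (q * Real.cos x + r * Real.sin x) ^ 2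
        = Dn x ^ 2 + Nn x ^ 2 := by
    intro x
    have h1 := pyth x
    simp only [hDndef, hNndef]
    linear_combination (-((p * Real.cos x + q * Real.sin x) ^ 2
      + (q * Real.cos x + r * Real.sin x) ^ 2)) * h1
  have hD : ∀ x : ℝ, 0 < (p * Real.cos x + q * Real.sin x) ^ 2
      + (q * Real.cos x + r * Real.sin x) ^ 2 := by
    intro x
    rw [hsum x]
    exact add_pos_of_pos_of_nonneg (pow_pos (hDn x) 2) (sq_nonneg _)
  set F : ℝ → ℝ := fun s => s + Real.arctan (Nn s / Dn s) with hFdef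
  have hF : ∀ x : ℝ, HasDerivAt F
      (1 / ((p * Real.cos x + q * Real.sin x) ^ 2
          + (q * Real.cos x + r * Real.sin x) ^ 2)) x := by
    intro x
    have hcos := Real.hasDerivAt_cos x
    have hsin := Real.hasDerivAt_sin x
    have hNum : HasDerivAt Nn
        (-4 * q * (Real.cos x * Real.sin x) + (r - p) * (Real.cos x ^ 2 - Real.sin x ^ 2)) x := by
      have : HasDerivAt Nn
          (q * (2 * Real.cos x ^ 1 * (-Real.sin x) - 2 * Real.sin x ^ 1 * Real.cos x)
            + (r - p) * ((-Real.sin x) * Real.sin x + Real.cos x * Real.cos x)) x :=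
        (((hcos.pow 2).sub (hsin.pow 2)).const_mul q).add ((hcos.mul hsin).const_mul (r - p))
      convert this using 1
      ring
    have hDen : HasDerivAt Dn
        (2 * (r - p) * (Real.cos x * Real.sin x) + 2 * q * (Real.cos x ^ 2 - Real.sin x ^ 2)) x := by
      have : HasDerivAt Dn
          (p * (2 * Real.cos x ^ 1 * (-Real.sin x))
            + 2 * q * ((-Real.sin x) * Real.sin x + Real.cos x * Real.cos x)
            + r * (2 * Real.sin x ^ 1 * Real.cos x)) x :=
        (((hcos.pow 2).const_mul p).add ((hcos.mul hsin).const_mul (2 * q))).add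
          ((hsin.pow 2).const_mul r)
      convert this using 1
      ring
    have hne : Dn x ≠ 0 := ne_of_gt (hDn x)
    have hq1 : HasDerivAt (fun s => Nn s / Dn s)
        (((-4 * q * (Real.cos x * Real.sin x) + (r - p) * (Real.cos x ^ 2 - Real.sin x ^ 2)) * Dn x
          - Nn x * (2 * (r - p) * (Real.cos x * Real.sin x)
              + 2 * q * (Real.cos x ^ 2 - Real.sin x ^ 2))) / Dn x ^ 2) x :=
      hNum.div hDen hne
    have harc : HasDerivAt (fun s => Real.arctan (Nn s / Dn s))
        ((1 / (1 + (Nn x / Dn x) ^ 2)) *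
          (((-4 * q * (Real.cos x * Real.sin x) + (r - p) * (Real.cos x ^ 2 - Real.sin x ^ 2)) * Dn x
            - Nn x * (2 * (r - p) * (Real.cos x * Real.sin x)
                + 2 * q * (Real.cos x ^ 2 - Real.sin x ^ 2))) / Dn x ^ 2)) x :=
      hq1.arctan
    have hid := (hasDerivAt_id x).add harc
    refine hid.congr_deriv (Eq.symm ?_)
    have h1 := pyth x
    have hDnx := hDn x
    have hDx := hD x
    have hsx := hsum x
    have key : (-4 * q * (Real.cos x * Real.sin x) + (r - p) * (Real.cos x ^ 2 - Real.sin x ^ 2)) * Dn x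
        - Nn x * (2 * (r - p) * (Real.cos x * Real.sin x)
            + 2 * q * (Real.cos x ^ 2 - Real.sin x ^ 2))
        = 1 - (Dn x ^ 2 + Nn x ^ 2) := by
      simp only [hDndef, hNndef]
      linear_combination ((p * r - q ^ 2) * (Real.sin x ^ 2 + Real.cos x ^ 2 + 1)) * h1 + hpr
    have h2 : 1 + (Nn x / Dn x) ^ 2 = (Dn x ^ 2 + Nn x ^ 2) / Dn x ^ 2 := by
      field_simp
    have h3 : (0:ℝ) < Dn x ^ 2 + Nn x ^ 2 := by rw [← hsx]; exact hDx
    rw [hsx, key, h2]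
    rw [one_div_div]
    field_simp
    ring
  have hcont : Continuous fun s : ℝ =>
      1 / ((p * Real.cos s + q * Real.sin s) ^ 2 + (q * Real.cos s + r * Real.sin s) ^ 2) := by
    apply Continuous.div continuous_const
    · fun_prop
    · intro x; exact ne_of_gt (hD x)
  rw [intervalIntegral.integral_eq_sub_of_hasDerivAt (fun x _ => hF x)
    (hcont.intervalIntegrable _ _)]
  simp only [hFdef]
  have e1 : Nn (t + Real.pi) = Nn t := by
    simp only [hNndef, Real.cos_add_pi, Real.sin_add_pi]; ring
  have e2 : Dn (t + Real.pi) = Dn t := by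
    simp only [hDndef, Real.cos_add_pi, Real.sin_add_pi]; ring
  rw [e1, e2]
  ring

/-- Lemma 3.2 (quasi-periodicity): the phase `θ₊(t)` satisfies `θ₊(t+π) = θ₊(t) + π`. -/
theorem theta_quasi_periodic (a b c d : ℝ) (h : a * d - b * c = 1)
    (θ : ℝ → ℝ)
    (hθ : θ = fun t => ∫ s in (0 : ℝ)..t,
      1 / ((a * Real.cos s + c * Real.sin s) ^ 2
          + (b * Real.cos s + d * Real.sin s) ^ 2)) :
    ∀ t : ℝ, θ (t + Real.pi) = θ t + Real.pi := by
  have hk0 : (0:ℝ) < a ^ 2 + b ^ 2 + c ^ 2 + d ^ 2 + 2 := by positivity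
  set k : ℝ := Real.sqrt (a ^ 2 + b ^ 2 + c ^ 2 + d ^ 2 + 2) with hkdef
  have hk2 : k ^ 2 = a ^ 2 + b ^ 2 + c ^ 2 + d ^ 2 + 2 := Real.sq_sqrt hk0.le
  have hk : 0 < k := Real.sqrt_pos.mpr hk0
  set p : ℝ := (a ^ 2 + b ^ 2 + 1) / k with hpdef
  set q : ℝ := (a * c + b * d) / k with hqdef
  set r : ℝ := (c ^ 2 + d ^ 2 + 1) / k with hrdef
  have hp : 0 < p := by apply div_pos (by positivity) hk
  have hpr : p * r - q ^ 2 = 1 := by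
    simp only [hpdef, hqdef, hrdef]
    field_simp
    linear_combination (a * d - b * c + 1) * h - hk2
  have hden : ∀ s : ℝ,
      (a * Real.cos s + c * Real.sin s) ^ 2 + (b * Real.cos s + d * Real.sin s) ^ 2
      = (p * Real.cos s + q * Real.sin s) ^ 2 + (q * Real.cos s + r * Real.sin s) ^ 2 := by
    intro s
    have e1 : p ^ 2 + q ^ 2 = a ^ 2 + b ^ 2 := by
      simp only [hpdef, hqdef]
      rw [div_pow, div_pow, ← add_div, div_eq_iff (by positivity), hk2]
      linear_combination (-(a * d - b * c + 1)) * h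
    have e2 : q * (p + r) = a * c + b * d := by
      simp only [hpdef, hqdef, hrdef]
      rw [← add_div, div_mul_div_comm, div_eq_iff (by positivity)]
      linear_combination (-(a * c + b * d)) * hk2
    have e3 : q ^ 2 + r ^ 2 = c ^ 2 + d ^ 2 := by
      simp only [hqdef, hrdef]
      rw [div_pow, div_pow, ← add_div, div_eq_iff (by positivity), hk2]
      linear_combination (-(a * d - b * c + 1)) * h
    linear_combination (-(Real.cos s ^ 2)) * e1 - (2 * Real.cos s * Real.sin s) * e2
      - (Real.sin s ^ 2) * e3
  intro t
  rw [hθ]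
  simp only [hden]
  have hcont : Continuous fun s : ℝ =>
      1 / ((p * Real.cos s + q * Real.sin s) ^ 2 + (q * Real.cos s + r * Real.sin s) ^ 2) := by
    apply Continuous.div continuous_const
    · fun_prop
    · intro x
      rw [← hden x]
      have h1 := Real.sin_sq_add_cos_sq x
      have h2 : (a ^ 2 + b ^ 2 + c ^ 2 + d ^ 2) *
          ((a * Real.cos x + c * Real.sin x) ^ 2 + (b * Real.cos x + d * Real.sin x) ^ 2)
          = (c * (a * Real.cos x + c * Real.sin x) + d * (b * Real.cos x + d * Real.sin x)) ^ 2
            + (a * (a * Real.cos x + c * Real.sin x) + b * (b * Real.cos x + d * Real.sin x)) ^ 2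
            + Real.cos x ^ 2 + Real.sin x ^ 2 := by
        linear_combination ((a * d - b * c + 1) * (Real.cos x ^ 2 + Real.sin x ^ 2)) * h
      apply ne_of_gt
      nlinarith [h2, h1, sq_nonneg (c * (a * Real.cos x + c * Real.sin x) + d * (b * Real.cos x + d * Real.sin x)),
        sq_nonneg (a * (a * Real.cos x + c * Real.sin x) + b * (b * Real.cos x + d * Real.sin x)),
        sq_nonneg a, sq_nonneg b, sq_nonneg c, sq_nonneg d]
  have hi1 : IntervalIntegrable _ MeasureTheory.volume 0 t := hcont.intervalIntegrable 0 t
  have hi2 : IntervalIntegrable _ MeasureTheory.volume t (t + Real.pi) :=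
    hcont.intervalIntegrable t (t + Real.pi)
  have hsplit := intervalIntegral.integral_add_adjacent_intervals hi1 hi2
  rw [← hsplit, key_integral p q r hp hpr t]
end

section
/- Let g > 0 and define, for t ∈ ℝ, the classical fidelity F_C(t,g) := (1/π) ∫_{ℝ²} exp(-q² - p² + g²/((q·cos t + p·sin t)² + 2g²·sin²t/q²) - g²/q²) dq dp, where the integrand is taken to be 0 on the line q = 0. Then F_C(t,g) ≥ e^{-2g} for every real t. -/
open MeasureTheory

open MeasureTheory Set Real

lemma sub_inv_image (g : ℝ) (hg : 0 < g) :
    (fun x : ℝ => x - g / x) '' Ioi 0 = univ := by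
  apply eq_univ_of_forall
  intro u
  set R := Real.sqrt (u ^ 2 + 4 * g) with hR
  have hR2 : R ^ 2 = u ^ 2 + 4 * g := Real.sq_sqrt (by positivity)
  have hRu : -u < R := by
    rcases le_or_gt (-u) 0 with h | h
    · exact lt_of_le_of_lt h (Real.sqrt_pos.mpr (by nlinarith))
    · have := (Real.lt_sqrt (le_of_lt h)).mpr (show (-u)^2 < u^2 + 4*g by nlinarith)
      simpa using this
  refine ⟨(u + R) / 2, by simp only [mem_Ioi]; linarith, ?_⟩
  have hx0 : (u + R) / 2 ≠ 0 := by intro h; rw [div_eq_zero_iff] at h; rcases h with h | h <;> linarith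
  have hgx : g / ((u + R) / 2) = (u + R) / 2 - u := by
    rw [div_eq_iff hx0]
    linear_combination (-(1/4)) * hR2
  simp only [hgx]
  ring

lemma ginv_image (g : ℝ) (hg : 0 < g) :
    (fun x : ℝ => g / x) '' Ioi 0 = Ioi 0 := by
  ext y
  constructor
  · rintro ⟨x, hx, rfl⟩; exact div_pos hg hx
  · intro hy
    exact ⟨g / y, div_pos hg hy, by field_simp⟩

lemma glasser_K (g : ℝ) (hg : 0 < g) :
    ∫ x in Ioi (0:ℝ), Real.exp (-(x - g / x) ^ 2) = Real.sqrt π / 2 := by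
  have hsub_deriv : ∀ x ∈ Ioi (0:ℝ),
      HasDerivWithinAt (fun x : ℝ => x - g / x) (1 + g / x ^ 2) (Ioi 0) x := by
    intro x hx
    have hx0 : x ≠ 0 := ne_of_gt hx
    have h2 : HasDerivAt (fun y : ℝ => y - g * y⁻¹) (1 - g * (-(x ^ 2)⁻¹)) x :=
      (hasDerivAt_id x).sub ((hasDerivAt_inv hx0).const_mul g)
    have h3 : HasDerivAt (fun y : ℝ => y - g / y) (1 + g / x ^ 2) x := by
      simp only [div_eq_mul_inv]
      convert h2 using 1
      ring
    exact h3.hasDerivWithinAt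
  have hsub_inj : InjOn (fun x : ℝ => x - g / x) (Ioi 0) := by
    have : StrictMonoOn (fun x : ℝ => x - g / x) (Ioi 0) := by
      intro a ha b hb hab
      have : g / b < g / a := div_lt_div_of_pos_left hg ha hab
      simp only
      linarith
    exact this.injOn
  have hginv_deriv : ∀ x ∈ Ioi (0:ℝ),
      HasDerivWithinAt (fun x : ℝ => g / x) (-(g / x ^ 2)) (Ioi 0) x := by
    intro x hx
    have hx0 : x ≠ 0 := ne_of_gt hx
    have h2 : HasDerivAt (fun y : ℝ => g * y⁻¹) (g * (-(x ^ 2)⁻¹)) x :=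
      (hasDerivAt_inv hx0).const_mul g
    have h3 : HasDerivAt (fun y : ℝ => g / y) (-(g / x ^ 2)) x := by
      simp only [div_eq_mul_inv]
      convert h2 using 1
      ring
    exact h3.hasDerivWithinAt
  have hginv_inj : InjOn (fun x : ℝ => g / x) (Ioi 0) := by
    intro a ha b hb hab
    simp only at hab
    rw [div_eq_div_iff (ne_of_gt ha) (ne_of_gt hb)] at hab
    exact (mul_left_cancel₀ (ne_of_gt hg) hab.symm)
  -- identity for the exponent
  have hexp_id : ∀ x : ℝ, x ≠ 0 → (x - g / x) ^ 2 = x ^ 2 - 2 * g + g ^ 2 / x ^ 2 := by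
    intro x hx0; field_simp; ring
  -- integrability of the main integrand on Ioi 0
  have integ1 : IntegrableOn (fun x : ℝ => Real.exp (-(x - g / x) ^ 2)) (Ioi 0) := by
    have hbound : Integrable (fun x : ℝ => Real.exp (2 * g) * Real.exp (-x ^ 2)) := by
      have := (integrable_exp_neg_mul_sq (show (0:ℝ) < 1 by norm_num)).const_mul (Real.exp (2 * g))
      simpa using this
    apply (hbound.integrableOn).mono' ?_ ?_
    · apply Measurable.aestronglyMeasurable
      have hm1 : Measurable fun x : ℝ => x - g / x :=
        measurable_id.sub (measurable_const.div measurable_id)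
      exact ((hm1.pow_const 2).neg).exp
    · filter_upwards [ae_restrict_mem measurableSet_Ioi] with x hx
      rw [Real.norm_eq_abs, abs_of_pos (Real.exp_pos _), ← Real.exp_add]
      apply Real.exp_le_exp.mpr
      rw [hexp_id x (ne_of_gt hx)]
      have : 0 ≤ g ^ 2 / x ^ 2 := by positivity
      linarith
  -- substitution y = g / x turns the weighted integral into the plain one
  have step1 : ∫ x in Ioi (0:ℝ), (g / x ^ 2) * Real.exp (-(x - g / x) ^ 2)
      = ∫ x in Ioi (0:ℝ), Real.exp (-(x - g / x) ^ 2) := by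
    conv_rhs => rw [← ginv_image g hg]
    rw [integral_image_eq_integral_abs_deriv_smul measurableSet_Ioi hginv_deriv hginv_inj]
    apply setIntegral_congr_fun measurableSet_Ioi
    intro x hx
    have hx0 : x ≠ 0 := ne_of_gt hx
    have h1 : g / (g / x) = x := by field_simp
    have h2 : |(-(g / x ^ 2))| = g / x ^ 2 := by
      rw [abs_neg, abs_of_pos (by positivity)]
    simp only [smul_eq_mul, h2, h1]
    congr 1
    ring
  have integ2 : IntegrableOn (fun x : ℝ => (g / x ^ 2) * Real.exp (-(x - g / x) ^ 2)) (Ioi 0) := by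
    have := (integrableOn_image_iff_integrableOn_abs_deriv_smul measurableSet_Ioi
      hginv_deriv hginv_inj (fun y => Real.exp (-(y - g / y) ^ 2)))
    rw [ginv_image g hg] at this
    have h2 := this.mp integ1
    apply h2.congr_fun ?_ measurableSet_Ioi
    intro x hx
    have hx0 : x ≠ 0 := ne_of_gt hx
    have h1 : g / (g / x) = x := by field_simp
    have h2 : |(-(g / x ^ 2))| = g / x ^ 2 := by rw [abs_neg, abs_of_pos (by positivity)]
    simp only [smul_eq_mul, h2, h1]
    congr 1
    ring
  -- the main substitution u = x - g/x
  have main : Real.sqrt π = (∫ x in Ioi (0:ℝ), Real.exp (-(x - g / x) ^ 2))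
      + ∫ x in Ioi (0:ℝ), (g / x ^ 2) * Real.exp (-(x - g / x) ^ 2) := by
    have h0 : Real.sqrt π = ∫ x : ℝ, Real.exp (-x ^ 2) := by
      have := integral_gaussian (1:ℝ)
      simp only [neg_mul, one_mul, div_one] at this
      rw [this]
    rw [h0, ← setIntegral_univ, ← sub_inv_image g hg,
      integral_image_eq_integral_abs_deriv_smul measurableSet_Ioi hsub_deriv hsub_inj]
    rw [← integral_add integ1 integ2]
    apply setIntegral_congr_fun measurableSet_Ioi
    intro x hx
    have h2 : |1 + g / x ^ 2| = 1 + g / x ^ 2 := abs_of_pos (by positivity)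
    simp only [smul_eq_mul, h2]
    ring
  rw [step1] at main
  linarith

lemma glasser (g : ℝ) (hg : 0 < g) :
    ∫ x : ℝ, Real.exp (-x ^ 2 - g ^ 2 / x ^ 2) = Real.sqrt π * Real.exp (-(2 * g)) := by
  have heven : (fun x : ℝ => Real.exp (-x ^ 2 - g ^ 2 / x ^ 2))
      = fun x : ℝ => Real.exp (-|x| ^ 2 - g ^ 2 / |x| ^ 2) := by
    funext x; rw [sq_abs]
  rw [heven]
  rw [integral_comp_abs (f := fun x : ℝ => Real.exp (-x ^ 2 - g ^ 2 / x ^ 2))]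
  have : ∫ x in Ioi (0:ℝ), Real.exp (-x ^ 2 - g ^ 2 / x ^ 2)
      = ∫ x in Ioi (0:ℝ), Real.exp (-(x - g / x) ^ 2) * Real.exp (-(2 * g)) := by
    apply setIntegral_congr_fun measurableSet_Ioi
    intro x hx
    have hx0 : x ≠ 0 := ne_of_gt hx
    show Real.exp (-x ^ 2 - g ^ 2 / x ^ 2) = Real.exp (-(x - g / x) ^ 2) * Real.exp (-(2 * g))
    rw [← Real.exp_add]
    congr 1
    field_simp
    ring
  rw [this, integral_mul_const, glasser_K g hg]
  ring


open MeasureTheory Set Real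

section helper

theorem poly_key (g s c q p A W : ℝ) (hsc : s^2 + c^2 = 1)
    (hA : A = q*c + p*s) (hW : W = q*s - p*c) :
    g^2*q^4 ≤ (g^2*q^2 + (q^2+p^2)*q^4/2)*A^2 + 2*g^4*s^2 + (q^2+p^2)*q^2*g^2*s^2 := by
  have hAW : A^2 + W^2 = q^2 + p^2 := by subst hA hW; linear_combination (q^2+p^2)*hsc
  have hqAW : q = A*c + W*s := by subst hA hW; linear_combination (-q)*hsc
  have hc1 : c^2 ≤ 1 := by nlinarith [sq_nonneg s]
  have key : g^2*q^4 = g^2*q^2*A^2*c^2 + 2*g^2*q^2*(A*c*W*s) + g^2*q^2*W^2*s^2 := by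
    linear_combination g^2*q^2*(q + A*c + W*s) * hqAW
  have c1 : 2*g^2*q^2*(A*c*W*s) ≤ A^2*W^2*q^4/2 + 2*g^4*s^2*c^2 := by
    nlinarith [sq_nonneg (A*W*q^2 - 2*g^2*(s*c))]
  have c2 : 2*g^4*s^2*c^2 ≤ 2*g^4*s^2 := by
    nlinarith [mul_nonneg (mul_nonneg (sq_nonneg (g^2)) (sq_nonneg s)) (sub_nonneg.mpr hc1)]
  have e3 : (q^2+p^2)*q^4*A^2/2 - A^2*W^2*q^4/2 = A^2*A^2*q^4/2 := by
    linear_combination (-(q^4*A^2/2))*hAW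
  have c3 : A^2*W^2*q^4/2 ≤ (q^2+p^2)*q^4*A^2/2 := by nlinarith [sq_nonneg (A^2*q^2)]
  have c4 : g^2*q^2*A^2*c^2 ≤ g^2*q^2*A^2 := by
    nlinarith [mul_nonneg (mul_nonneg (sq_nonneg g) (sq_nonneg q))
      (mul_nonneg (sq_nonneg A) (sub_nonneg.mpr hc1))]
  have e5 : (q^2+p^2)*q^2*g^2*s^2 - g^2*q^2*W^2*s^2 = g^2*q^2*A^2*s^2 := by
    linear_combination (-(g^2*q^2*s^2))*hAW
  have c5 : g^2*q^2*W^2*s^2 ≤ (q^2+p^2)*q^2*g^2*s^2 := by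
    nlinarith [mul_nonneg (mul_nonneg (sq_nonneg g) (sq_nonneg q))
      (mul_nonneg (sq_nonneg A) (sq_nonneg s))]
  linarith [c1,c2,c3,c4,c5]

/-- The crucial pointwise bound: for `q ≠ 0` the exponent is at most `-(q²+p²)/2`. -/
theorem exponent_le (g s c q p : ℝ) (hg : 0 < g) (hsc : s^2 + c^2 = 1) (hq : q ≠ 0) :
    - q^2 - p^2 + g^2 / ((q*c + p*s)^2 + 2*g^2*s^2/q^2) - g^2/q^2 ≤ -(q^2 + p^2)/2 := by
  have hq2 : (0:ℝ) < q^2 := by positivity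
  have hD0 : 0 ≤ (q*c + p*s)^2 + 2*g^2*s^2/q^2 := by positivity
  have hgq : 0 ≤ g^2/q^2 := by positivity
  rcases eq_or_lt_of_le hD0 with hD | hD
  · rw [← hD, div_zero]
    nlinarith [sq_nonneg q, sq_nonneg p]
  · have main : g^2 / ((q*c + p*s)^2 + 2*g^2*s^2/q^2) ≤ g^2/q^2 + (q^2+p^2)/2 := by
      rw [div_le_iff₀ hD]
      have h4 : (0:ℝ) < q^4 := by positivity
      have expand : (g^2/q^2 + (q^2+p^2)/2) * ((q*c + p*s)^2 + 2*g^2*s^2/q^2) * q^4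
          = (g^2*q^2 + (q^2+p^2)*q^4/2)*(q*c+p*s)^2 + 2*g^4*s^2 + (q^2+p^2)*q^2*g^2*s^2 := by
        field_simp
        ring
      have poly := poly_key g s c q p (q*c+p*s) (q*s-p*c) hsc rfl rfl
      have : g^2 * q^4 ≤ (g^2/q^2 + (q^2+p^2)/2) * ((q*c + p*s)^2 + 2*g^2*s^2/q^2) * q^4 := by
        rw [expand]; exact poly
      exact le_of_mul_le_mul_right this h4
    linarith

end helper

/-- Proposition 4.3(i), lower bound: the Gaussian classical fidelity for the
perturbed harmonic oscillator satisfies `F_C(t,g) ≥ e^{-2g}`. -/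
theorem classical_fidelity_HO_lower_bound (g : ℝ) (hg : 0 < g) (t : ℝ) :
    Real.exp (-(2 * g)) ≤
      (1 / Real.pi) * ∫ x : ℝ × ℝ,
        (if x.1 = 0 then 0 else
          Real.exp (- x.1 ^ 2 - x.2 ^ 2
            + g ^ 2 / ((x.1 * Real.cos t + x.2 * Real.sin t) ^ 2
                + 2 * g ^ 2 * (Real.sin t) ^ 2 / x.1 ^ 2)
            - g ^ 2 / x.1 ^ 2)) := by
  have hsc : (Real.sin t)^2 + (Real.cos t)^2 = 1 := Real.sin_sq_add_cos_sq t
  set h : ℝ × ℝ → ℝ := fun x =>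
    (if x.1 = 0 then 0 else
      Real.exp (- x.1 ^ 2 - x.2 ^ 2
        + g ^ 2 / ((x.1 * Real.cos t + x.2 * Real.sin t) ^ 2
            + 2 * g ^ 2 * (Real.sin t) ^ 2 / x.1 ^ 2)
        - g ^ 2 / x.1 ^ 2)) with hh
  set L : ℝ × ℝ → ℝ := fun x =>
    (if x.1 = 0 then 0 else Real.exp (- x.1 ^ 2 - x.2 ^ 2 - g^2/x.1^2)) with hL
  set L' : ℝ × ℝ → ℝ := fun x =>
    Real.exp (- x.1 ^ 2 - g^2/x.1^2) * Real.exp (- x.2 ^ 2) with hL'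
  set G : ℝ × ℝ → ℝ := fun x =>
    Real.exp (-(1/2) * x.1 ^ 2) * Real.exp (-(1/2) * x.2 ^ 2) with hG
  -- the set where the first coordinate vanishes is null
  have hnull : (volume : Measure (ℝ × ℝ)) {x : ℝ × ℝ | x.1 = 0} = 0 := by
    have : {x : ℝ × ℝ | x.1 = 0} = ({0} : Set ℝ) ×ˢ (univ : Set ℝ) := by
      ext x
      simp only [Set.mem_setOf_eq, Set.mem_prod, Set.mem_singleton_iff, Set.mem_univ, and_true]
    rw [this, Measure.volume_eq_prod, Measure.prod_prod]
    simp
  -- L and L' agree a.e.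
  have haeLL' : L =ᵐ[volume] L' := by
    have : {x : ℝ × ℝ | ¬ L x = L' x} ⊆ {x : ℝ × ℝ | x.1 = 0} := by
      intro x hx
      by_contra hx1
      simp only [mem_setOf_eq] at hx hx1
      apply hx
      rw [hL, hL']
      simp only [if_neg hx1, ← Real.exp_add]
      congr 1
      ring
    exact ae_iff.mpr (measure_mono_null this hnull)
  -- integrability of L'
  have hint1 : Integrable (fun q : ℝ => Real.exp (- q ^ 2 - g^2/q^2)) := by
    have hbound : Integrable (fun q : ℝ => Real.exp (-q ^ 2)) := by
      simpa using integrable_exp_neg_mul_sq (show (0:ℝ) < 1 by norm_num)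
    apply hbound.mono' ?_ ?_
    · apply Measurable.aestronglyMeasurable
      have hm1 : Measurable fun q : ℝ => - q ^ 2 - g^2/q^2 :=
        ((measurable_id.pow_const 2).neg).sub (measurable_const.div (measurable_id.pow_const 2))
      exact hm1.exp
    · filter_upwards with q
      rw [Real.norm_eq_abs, abs_of_pos (Real.exp_pos _)]
      apply Real.exp_le_exp.mpr
      have : 0 ≤ g^2/q^2 := by positivity
      linarith
  have hint2 : Integrable (fun p : ℝ => Real.exp (- p ^ 2)) := by
    simpa using integrable_exp_neg_mul_sq (show (0:ℝ) < 1 by norm_num)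
  have hL'int : Integrable L' := by
    rw [hL', Measure.volume_eq_prod]
    exact hint1.mul_prod hint2
  have hLint : Integrable L := hL'int.congr haeLL'.symm
  -- integral of L'
  have hL'val : ∫ x : ℝ × ℝ, L' x = Real.pi * Real.exp (-(2 * g)) := by
    have heq : ∫ x : ℝ × ℝ, L' x
        = (∫ q : ℝ, Real.exp (- q ^ 2 - g^2/q^2)) * ∫ p : ℝ, Real.exp (- p ^ 2) := by
      rw [hL', Measure.volume_eq_prod]
      exact integral_prod_mul (fun q : ℝ => Real.exp (- q ^ 2 - g^2/q^2)) (fun p : ℝ => Real.exp (- p ^ 2))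
    rw [heq, glasser g hg]
    have h2 : ∫ p : ℝ, Real.exp (- p ^ 2) = Real.sqrt Real.pi := by
      have := integral_gaussian (1:ℝ)
      simp only [neg_mul, one_mul, div_one] at this
      rw [this]
    rw [h2]
    rw [show Real.sqrt Real.pi * Real.exp (-(2*g)) * Real.sqrt Real.pi
        = (Real.sqrt Real.pi * Real.sqrt Real.pi) * Real.exp (-(2*g)) by ring,
      Real.mul_self_sqrt Real.pi_pos.le]
  -- measurability of h
  have hmeas : Measurable h := by
    rw [hh]
    apply Measurable.ite
    · exact measurable_fst (measurableSet_singleton 0)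
    · exact measurable_const
    · have m1 : Measurable fun x : ℝ × ℝ => - x.1 ^ 2 - x.2 ^ 2 :=
        ((measurable_fst.pow_const 2).neg).sub (measurable_snd.pow_const 2)
      have m2 : Measurable fun x : ℝ × ℝ =>
          g ^ 2 / ((x.1 * Real.cos t + x.2 * Real.sin t) ^ 2
            + 2 * g ^ 2 * (Real.sin t) ^ 2 / x.1 ^ 2) :=
        measurable_const.div ((((measurable_fst.mul_const _).add
          (measurable_snd.mul_const _)).pow_const 2).add
          (measurable_const.div (measurable_fst.pow_const 2)))
      have m3 : Measurable fun x : ℝ × ℝ => g ^ 2 / x.1 ^ 2 :=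
        measurable_const.div (measurable_fst.pow_const 2)
      exact ((m1.add m2).sub m3).exp
  -- G is integrable
  have hGint : Integrable G := by
    rw [hG, Measure.volume_eq_prod]
    exact (integrable_exp_neg_mul_sq (show (0:ℝ) < 1/2 by norm_num)).mul_prod
      (integrable_exp_neg_mul_sq (show (0:ℝ) < 1/2 by norm_num))
  -- h is dominated by G
  have hbound : ∀ x : ℝ × ℝ, h x ≤ G x := by
    intro x
    rw [hh, hG]
    by_cases hx1 : x.1 = 0
    · simp only [if_pos hx1]
      positivity
    · simp only [if_neg hx1]
      rw [← Real.exp_add]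
      apply Real.exp_le_exp.mpr
      have := exponent_le g (Real.sin t) (Real.cos t) x.1 x.2 hg hsc hx1
      have heq : (x.1 * Real.cos t + x.2 * Real.sin t)
          = (x.1 * Real.cos t + x.2 * Real.sin t) := rfl
      -- the key inequality, note orders of terms
      calc - x.1 ^ 2 - x.2 ^ 2
            + g ^ 2 / ((x.1 * Real.cos t + x.2 * Real.sin t) ^ 2
                + 2 * g ^ 2 * (Real.sin t) ^ 2 / x.1 ^ 2)
            - g ^ 2 / x.1 ^ 2
          ≤ -(x.1^2 + x.2^2)/2 := by
            have h2 := exponent_le g (Real.sin t) (Real.cos t) x.1 x.2 hg hsc hx1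
            calc - x.1 ^ 2 - x.2 ^ 2
                + g ^ 2 / ((x.1 * Real.cos t + x.2 * Real.sin t) ^ 2
                    + 2 * g ^ 2 * (Real.sin t) ^ 2 / x.1 ^ 2)
                - g ^ 2 / x.1 ^ 2
              = - x.1^2 - x.2^2 + g^2 / ((x.1*Real.cos t + x.2*Real.sin t)^2
                  + 2*g^2*(Real.sin t)^2/x.1^2) - g^2/x.1^2 := by ring_nf
            _ ≤ -(x.1^2 + x.2^2)/2 := h2
        _ = -(1/2) * x.1 ^ 2 + -(1/2) * x.2 ^ 2 := by ring
  have hhnonneg : ∀ x : ℝ × ℝ, 0 ≤ h x := by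
    intro x
    rw [hh]
    by_cases hx1 : x.1 = 0
    · simp [if_pos hx1]
    · simp only [if_neg hx1]
      positivity
  -- h is integrable
  have hhint : Integrable h := by
    apply hGint.mono' hmeas.aestronglyMeasurable
    filter_upwards with x
    rw [Real.norm_eq_abs, abs_of_nonneg (hhnonneg x)]
    exact hbound x
  -- L ≤ h pointwise
  have hLh : ∀ x : ℝ × ℝ, L x ≤ h x := by
    intro x
    rw [hL, hh]
    by_cases hx1 : x.1 = 0
    · simp [if_pos hx1]
    · simp only [if_neg hx1]
      apply Real.exp_le_exp.mpr
      have hD0 : 0 ≤ ((x.1 * Real.cos t + x.2 * Real.sin t) ^ 2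
          + 2 * g ^ 2 * (Real.sin t) ^ 2 / x.1 ^ 2) := by positivity
      have : 0 ≤ g ^ 2 / ((x.1 * Real.cos t + x.2 * Real.sin t) ^ 2
          + 2 * g ^ 2 * (Real.sin t) ^ 2 / x.1 ^ 2) := by positivity
      linarith
  have hmono : ∫ x : ℝ × ℝ, L x ≤ ∫ x : ℝ × ℝ, h x := integral_mono hLint hhint hLh
  have hLval : ∫ x : ℝ × ℝ, L x = Real.pi * Real.exp (-(2 * g)) := by
    rw [integral_congr_ae haeLL', hL'val]
  have hfinal : Real.pi * Real.exp (-(2 * g)) ≤ ∫ x : ℝ × ℝ, h x := hLval ▸ hmono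
  have hpi : (0:ℝ) < Real.pi := Real.pi_pos
  calc Real.exp (-(2 * g)) = (1 / Real.pi) * (Real.pi * Real.exp (-(2 * g))) := by
        field_simp
    _ ≤ (1 / Real.pi) * ∫ x : ℝ × ℝ, h x := by
        apply mul_le_mul_of_nonneg_left hfinal (by positivity)
end

section
/- Let g > 0 and define, for t ∈ ℝ, F̃_C(t,g) := (1/π) · vol{(q,p) ∈ ℝ² : q ≠ 0, q² + p² ≤ 1, and q² + p² + 2g²/q² - 2g²/((q·cos t + p·sin t)² + 2g²·sin²t/q²) ≤ 1}, where vol denotes two-dimensional Lebesgue measure. Then F̃_C(t,g) ≥ 1 - 2√2·g for every real t. -/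
open MeasureTheory


noncomputable def Faux (g k α β : ℝ) (q : ℝ) : ℝ :=
  (1/2) * Real.sqrt ((β - q ^ 2) * (q ^ 2 - α))
  + (1/4) * Real.arcsin ((2 * q ^ 2 - 1) / k)
  - (Real.sqrt 2 * g / 2) * Real.arcsin ((q ^ 2 - 4 * g ^ 2) / (k * q ^ 2))

lemma ne_pm_one {u v : ℝ} (h : 1 - u ^ 2 = v ^ 2) (hv : 0 < v) : u ≠ -1 ∧ u ≠ 1 := by
  constructor <;> rintro rfl <;> nlinarith

set_option maxHeartbeats 1000000 in
lemma hasDeriv_Faux {g k α β : ℝ} (hg : 0 < g) (hk : 0 < k)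
    (hk2 : k ^ 2 = 1 - 8 * g ^ 2) (hα : α = (1 - k) / 2) (hβ : β = (1 + k) / 2)
    {x : ℝ} (hx0 : 0 < x) (hxa : α < x ^ 2) (hxb : x ^ 2 < β) :
    HasDerivAt (Faux g k α β) (Real.sqrt (1 - x ^ 2 - 2 * g ^ 2 / x ^ 2)) x := by
  have hg2 : g ^ 2 = (1 - k ^ 2) / 8 := by linarith
  have hab : α + β = 1 := by rw [hα, hβ]; ring
  have hprod : α * β = 2 * g ^ 2 := by rw [hα, hβ, hg2]; ring
  have hP : 0 < (β - x ^ 2) * (x ^ 2 - α) := by nlinarith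
  have hR0 : 0 < Real.sqrt ((β - x ^ 2) * (x ^ 2 - α)) := Real.sqrt_pos.2 hP
  have hR2 : Real.sqrt ((β - x ^ 2) * (x ^ 2 - α)) ^ 2 = (β - x ^ 2) * (x ^ 2 - α) :=
    Real.sq_sqrt hP.le
  set R := Real.sqrt ((β - x ^ 2) * (x ^ 2 - α)) with hR
  clear_value R
  have h2' : Real.sqrt 2 ^ 2 = 2 := Real.sq_sqrt (by norm_num)
  have hs2pos : (0:ℝ) < Real.sqrt 2 := by positivity
  set c := Real.sqrt 2 with hc
  clear_value c
  have hxne : x ≠ 0 := hx0.ne'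
  have hq2 : HasDerivAt (fun q : ℝ => q ^ 2) (2 * x) x := by
    simpa using hasDerivAt_pow 2 x
  -- first term
  have hPd : HasDerivAt (fun q : ℝ => (β - q ^ 2) * (q ^ 2 - α))
      ((-(2 * x)) * (x ^ 2 - α) + (β - x ^ 2) * (2 * x)) x :=
    (hq2.const_sub β).mul (hq2.sub_const α)
  have h1 : HasDerivAt (fun q : ℝ => Real.sqrt ((β - q ^ 2) * (q ^ 2 - α)))
      (x * (1 - 2 * x ^ 2) / R) x := by
    have h := (Real.hasDerivAt_sqrt hP.ne').comp x hPd
    rw [← hR] at h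
    refine h.congr_deriv ?_
    symm
    field_simp
    linear_combination (-1) * hab
  -- second term
  have hu1 : HasDerivAt (fun q : ℝ => (2 * q ^ 2 - 1) / k) (2 * (2 * x) / k) x :=
    ((hq2.const_mul 2).sub_const 1).div_const k
  have hs1 : 1 - ((2 * x ^ 2 - 1) / k) ^ 2 = (2 * R / k) ^ 2 := by
    rw [div_pow, div_pow, mul_pow, hR2]
    subst hα hβ
    field_simp
    ring
  have hsq1 : Real.sqrt (1 - ((2 * x ^ 2 - 1) / k) ^ 2) = 2 * R / k := by
    rw [hs1, Real.sqrt_sq (by positivity)]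
  obtain ⟨hne1, hne1'⟩ := ne_pm_one hs1 (by positivity)
  have h2 : HasDerivAt (fun q : ℝ => Real.arcsin ((2 * q ^ 2 - 1) / k)) (2 * x / R) x := by
    have h := (Real.hasDerivAt_arcsin hne1 hne1').comp x hu1
    rw [hsq1] at h
    refine h.congr_deriv ?_
    symm
    field_simp
  -- third term
  have hden : k * x ^ 2 ≠ 0 := by positivity
  have hu2 : HasDerivAt (fun q : ℝ => (q ^ 2 - 4 * g ^ 2) / (k * q ^ 2))
      (8 * g ^ 2 / (k * x ^ 3)) x := by
    have h := (hq2.sub_const (4 * g ^ 2)).div (hq2.const_mul k) hden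
    refine h.congr_deriv ?_
    symm
    field_simp
    ring
  have hs2 : 1 - ((x ^ 2 - 4 * g ^ 2) / (k * x ^ 2)) ^ 2
      = (2 * c * g * R / (k * x ^ 2)) ^ 2 := by
    have e : (2 * c * g * R / (k * x ^ 2)) ^ 2
        = 8 * g ^ 2 * ((β - x ^ 2) * (x ^ 2 - α)) / (k ^ 2 * x ^ 4) := by
      rw [div_pow, show (2 * c * g * R) ^ 2 = 2 ^ 2 * c ^ 2 * g ^ 2 * R ^ 2 by ring,
        h2', hR2]
      ring
    rw [e]
    subst hα hβ
    rw [hg2]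
    field_simp
    ring
  have hsq2 : Real.sqrt (1 - ((x ^ 2 - 4 * g ^ 2) / (k * x ^ 2)) ^ 2)
      = 2 * c * g * R / (k * x ^ 2) := by
    rw [hs2, Real.sqrt_sq (by positivity)]
  obtain ⟨hne2, hne2'⟩ := ne_pm_one hs2 (by positivity)
  have h3 : HasDerivAt (fun q : ℝ => Real.arcsin ((q ^ 2 - 4 * g ^ 2) / (k * q ^ 2)))
      (2 * c * g / (x * R)) x := by
    have h := (Real.hasDerivAt_arcsin hne2 hne2').comp x hu2
    rw [hsq2] at h
    refine h.congr_deriv ?_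
    symm
    field_simp
    linear_combination 4 * h2'
  -- combine
  have htot := ((h1.const_mul (1/2 : ℝ)).add (h2.const_mul (1/4 : ℝ))).sub
      (h3.const_mul (c * g / 2))
  have hval : Real.sqrt (1 - x ^ 2 - 2 * g ^ 2 / x ^ 2) = R / x := by
    have harg : 1 - x ^ 2 - 2 * g ^ 2 / x ^ 2 = ((β - x ^ 2) * (x ^ 2 - α)) / x ^ 2 := by
      subst hα hβ
      rw [hg2]
      field_simp
      ring
    rw [harg, Real.sqrt_div hP.le, Real.sqrt_sq hx0.le, hR]
  rw [hval]
  unfold Faux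
  rw [← hc]
  refine htot.congr_deriv ?_
  symm
  field_simp
  linear_combination (8*g^2) * h2' + 8 * hR2 + 8 * x^2 * hab - 8 * hprod

set_option maxHeartbeats 1000000 in
lemma integral_f {g k α β : ℝ} (hg : 0 < g) (hk : 0 < k)
    (hk2 : k ^ 2 = 1 - 8 * g ^ 2) (hα : α = (1 - k) / 2) (hβ : β = (1 + k) / 2)
    (hα0 : 0 < α) :
    ∫ q in Real.sqrt α..Real.sqrt β, Real.sqrt (1 - q ^ 2 - 2 * g ^ 2 / q ^ 2)
      = Real.pi / 4 * (1 - 2 * Real.sqrt 2 * g) := by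
  have hβ0 : 0 < β := by rw [hβ]; linarith
  have hαβ : α < β := by rw [hα, hβ]; linarith
  have hsa : 0 < Real.sqrt α := Real.sqrt_pos.2 hα0
  have hab' : Real.sqrt α ≤ Real.sqrt β := Real.sqrt_le_sqrt hαβ.le
  have hpos : ∀ x ∈ Set.Icc (Real.sqrt α) (Real.sqrt β), x ≠ 0 :=
    fun x hx => (lt_of_lt_of_le hsa hx.1).ne'
  have hcont : ContinuousOn (Faux g k α β) (Set.Icc (Real.sqrt α) (Real.sqrt β)) := by
    unfold Faux
    apply ContinuousOn.sub
    · apply ContinuousOn.add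
      · exact (continuous_const.mul (Real.continuous_sqrt.comp (by continuity))).continuousOn
      · exact (continuous_const.mul (Real.continuous_arcsin.comp (by continuity))).continuousOn
    · apply ContinuousOn.mul continuousOn_const
      apply Real.continuous_arcsin.comp_continuousOn
      apply ContinuousOn.div (by fun_prop) (by fun_prop)
      intro x hx
      have := hpos x hx
      positivity
  have hderiv : ∀ x ∈ Set.Ioo (Real.sqrt α) (Real.sqrt β),
      HasDerivWithinAt (Faux g k α β)
        (Real.sqrt (1 - x ^ 2 - 2 * g ^ 2 / x ^ 2)) (Set.Ioi x) x := by
    intro x hx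
    have hx0 : 0 < x := lt_trans hsa hx.1
    have hxa : α < x ^ 2 := (Real.sqrt_lt' hx0).1 hx.1
    have hxb : x ^ 2 < β := (Real.lt_sqrt hx0.le).1 hx.2
    exact (hasDeriv_Faux hg hk hk2 hα hβ hx0 hxa hxb).hasDerivWithinAt
  have hint : IntervalIntegrable (fun q => Real.sqrt (1 - q ^ 2 - 2 * g ^ 2 / q ^ 2))
      MeasureTheory.volume (Real.sqrt α) (Real.sqrt β) := by
    apply ContinuousOn.intervalIntegrable
    rw [Set.uIcc_of_le hab']
    apply Real.continuous_sqrt.comp_continuousOn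
    apply ContinuousOn.sub (by fun_prop)
    apply ContinuousOn.div (by fun_prop) (by fun_prop)
    intro x hx
    have := hpos x hx
    positivity
  rw [intervalIntegral.integral_eq_sub_of_hasDeriv_right_of_le hab' hcont hderiv hint]
  have hsqa : Real.sqrt α ^ 2 = α := Real.sq_sqrt hα0.le
  have hsqb : Real.sqrt β ^ 2 = β := Real.sq_sqrt hβ0.le
  unfold Faux
  rw [hsqa, hsqb]
  have e1 : (2 * β - 1) / k = 1 := by rw [hβ]; field_simp; ring
  have e2 : (2 * α - 1) / k = -1 := by rw [hα]; field_simp; ring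
  have e3 : (β - 4 * g ^ 2) / (k * β) = 1 := by
    have hg2 : g ^ 2 = (1 - k ^ 2) / 8 := by linarith
    rw [hβ, hg2, div_eq_one_iff_eq (by nlinarith : (k * ((1 + k) / 2)) ≠ 0)]
    ring
  have e4 : (α - 4 * g ^ 2) / (k * α) = -1 := by
    have hg2 : g ^ 2 = (1 - k ^ 2) / 8 := by linarith
    have hk1 : k < 1 := by rw [hα] at hα0; linarith
    rw [hα, hg2, div_eq_iff (by nlinarith : (k * ((1 - k) / 2)) ≠ 0)]; ring
  rw [e1, e2, e3, e4, Real.arcsin_one, Real.arcsin_neg_one]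
  rw [show (β - β) * (β - α) = 0 by ring, show (β - α) * (α - α) = 0 by ring,
    Real.sqrt_zero]
  ring

set_option maxHeartbeats 1000000 in
/-- Proposition 4.3(ii): the characteristic-function classical fidelity for the
perturbed harmonic oscillator satisfies `F̃_C(t,g) ≥ 1 - 2√2 g`. -/
theorem classical_fidelity_HO_char_lower_bound (g : ℝ) (hg : 0 < g) (t : ℝ) :
    1 - 2 * Real.sqrt 2 * g ≤
      (1 / Real.pi) * (volume {x : ℝ × ℝ | x.1 ≠ 0 ∧ x.1 ^ 2 + x.2 ^ 2 ≤ 1 ∧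
        x.1 ^ 2 + x.2 ^ 2 + 2 * g ^ 2 / x.1 ^ 2
          - 2 * g ^ 2 / ((x.1 * Real.cos t + x.2 * Real.sin t) ^ 2
              + 2 * g ^ 2 * (Real.sin t) ^ 2 / x.1 ^ 2) ≤ 1}).toReal := by
  have hπ : 0 < Real.pi := Real.pi_pos
  set T := {x : ℝ × ℝ | x.1 ≠ 0 ∧ x.1 ^ 2 + x.2 ^ 2 ≤ 1 ∧
        x.1 ^ 2 + x.2 ^ 2 + 2 * g ^ 2 / x.1 ^ 2
          - 2 * g ^ 2 / ((x.1 * Real.cos t + x.2 * Real.sin t) ^ 2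
              + 2 * g ^ 2 * (Real.sin t) ^ 2 / x.1 ^ 2) ≤ 1} with hT
  rcases le_or_gt 1 (2 * Real.sqrt 2 * g) with hbig | hsmall
  · have h1 : (0:ℝ) ≤ (1 / Real.pi) * (volume T).toReal := by positivity
    linarith
  -- main case
  have hs2 : Real.sqrt 2 ^ 2 = 2 := Real.sq_sqrt (by norm_num)
  have hs2nn : (0:ℝ) ≤ Real.sqrt 2 := Real.sqrt_nonneg 2
  have h8 : 8 * g ^ 2 < 1 := by nlinarith
  set k := Real.sqrt (1 - 8 * g ^ 2) with hkdef
  have hk : 0 < k := Real.sqrt_pos.2 (by linarith)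
  have hk2 : k ^ 2 = 1 - 8 * g ^ 2 := Real.sq_sqrt (by linarith)
  have hk1 : k < 1 := by nlinarith
  set α := (1 - k) / 2 with hα
  set β := (1 + k) / 2 with hβ
  have hα0 : 0 < α := by rw [hα]; linarith
  have hβ0 : 0 < β := by rw [hβ]; linarith
  have hβ1 : β ≤ 1 := by rw [hβ]; linarith
  have hαβ : α < β := by rw [hα, hβ]; linarith
  set f : ℝ → ℝ := fun q => Real.sqrt (1 - q ^ 2 - 2 * g ^ 2 / q ^ 2) with hf
  set sa := Real.sqrt α with hsa
  set sb := Real.sqrt β with hsb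
  have hsa0 : 0 < sa := Real.sqrt_pos.2 hα0
  have hsab : sa < sb := Real.sqrt_lt_sqrt hα0.le hαβ
  -- radicand positivity inside (sa, sb) resp (-sb, -sa)
  have hrad : ∀ q : ℝ, α < q ^ 2 → q ^ 2 < β → q ≠ 0 → 0 < 1 - q ^ 2 - 2 * g ^ 2 / q ^ 2 := by
    intro q h1 h2 h0
    have hq2 : (0:ℝ) < q ^ 2 := by positivity
    have hnum : 0 < q ^ 2 - q ^ 4 - 2 * g ^ 2 := by nlinarith
    have he : 1 - q ^ 2 - 2 * g ^ 2 / q ^ 2 = (q ^ 2 - q ^ 4 - 2 * g ^ 2) / q ^ 2 := by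
      field_simp
    rw [he]; positivity
  -- the two region subsets
  set S₁ := regionBetween (fun q => - f q) f (Set.Ioo sa sb) with hS₁
  set S₂ := regionBetween (fun q => - f q) f (Set.Ioo (-sb) (-sa)) with hS₂
  -- subset lemma
  have hsubaux : ∀ x : ℝ × ℝ, α < x.1 ^ 2 → x.1 ^ 2 < β → x.1 ≠ 0 →
      -f x.1 < x.2 → x.2 < f x.1 → x ∈ T := by
    intro x h1 h2 h0 h3 h4
    have hradx := hrad x.1 h1 h2 h0
    have hp2 : x.2 ^ 2 < 1 - x.1 ^ 2 - 2 * g ^ 2 / x.1 ^ 2 := by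
      have := sq_lt_sq' h3 h4
      rwa [hf, Real.sq_sqrt hradx.le] at this
    have hq2 : (0:ℝ) ≤ 2 * g ^ 2 / x.1 ^ 2 := by positivity
    have hY : (0:ℝ) ≤ 2 * g ^ 2 / ((x.1 * Real.cos t + x.2 * Real.sin t) ^ 2
              + 2 * g ^ 2 * (Real.sin t) ^ 2 / x.1 ^ 2) := by positivity
    refine ⟨h0, by linarith, by linarith⟩
  have hsub₁ : S₁ ⊆ T := by
    rintro x ⟨hx1, hx2⟩
    have hq0 : 0 < x.1 := hsa0.trans hx1.1
    exact hsubaux x ((Real.sqrt_lt' hq0).1 hx1.1) ((Real.lt_sqrt hq0.le).1 hx1.2) hq0.ne'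
      hx2.1 hx2.2
  have hsub₂ : S₂ ⊆ T := by
    rintro x ⟨hx1, hx2⟩
    have hq0 : x.1 < 0 := by
      have := hx1.2; have := hsa0; nlinarith [hx1.2]
    have hn0 : 0 < -x.1 := by linarith
    have h1 : α < x.1 ^ 2 := by
      have := (Real.sqrt_lt' hn0).1 (by linarith [hx1.2] : sa < -x.1)
      nlinarith [this]
    have h2 : x.1 ^ 2 < β := by
      have := (Real.lt_sqrt hn0.le).1 (by linarith [hx1.1] : -x.1 < sb)
      nlinarith [this]
    exact hsubaux x h1 h2 hq0.ne hx2.1 hx2.2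
  -- measurability
  have hfm : Measurable f := by
    apply Real.continuous_sqrt.measurable.comp
    fun_prop
  have hmeas₁ : MeasurableSet S₁ := measurableSet_regionBetween hfm.neg hfm measurableSet_Ioo
  have hmeas₂ : MeasurableSet S₂ := measurableSet_regionBetween hfm.neg hfm measurableSet_Ioo
  have hdisj : Disjoint S₁ S₂ := by
    rw [Set.disjoint_left]
    rintro x ⟨hx1, -⟩ ⟨hy1, -⟩
    have := hx1.1; have := hy1.2
    nlinarith [hsa0]
  -- continuity of f away from 0
  have hfc : ContinuousOn f {x : ℝ | x ≠ 0} := by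
    apply Real.continuous_sqrt.comp_continuousOn
    apply ContinuousOn.sub (by fun_prop)
    exact ContinuousOn.div (by fun_prop) (by fun_prop) (fun x hx => pow_ne_zero 2 hx)
  have hint₁ : IntegrableOn f (Set.Ioo sa sb) := by
    apply IntegrableOn.mono_set _ Set.Ioo_subset_Icc_self
    apply ContinuousOn.integrableOn_Icc
    exact hfc.mono (fun x hx => (hsa0.trans_le hx.1).ne')
  have hint₂ : IntegrableOn f (Set.Ioo (-sb) (-sa)) := by
    apply IntegrableOn.mono_set _ Set.Ioo_subset_Icc_self
    apply ContinuousOn.integrableOn_Icc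
    apply hfc.mono
    intro x hx
    have hx2 := hx.2
    intro h0
    rw [h0] at hx2
    linarith
  -- volumes of the two regions
  have hnonneg : ∀ x : ℝ, x ∈ Set.Ioo (-sb) (-sa) ∪ Set.Ioo sa sb → True := fun _ _ => trivial
  have hvol₁ : volume S₁ = ENNReal.ofReal (∫ y in Set.Ioo sa sb, (f - fun q => -f q) y) := by
    rw [hS₁, Measure.volume_eq_prod]
    exact volume_regionBetween_eq_integral hint₁.neg hint₁ measurableSet_Ioo
      (fun x hx => by have h0 : 0 ≤ f x := Real.sqrt_nonneg _; show -f x ≤ f x; linarith)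
  have hvol₂ : volume S₂ = ENNReal.ofReal (∫ y in Set.Ioo (-sb) (-sa), (f - fun q => -f q) y) := by
    rw [hS₂, Measure.volume_eq_prod]
    exact volume_regionBetween_eq_integral hint₂.neg hint₂ measurableSet_Ioo
      (fun x hx => by have h0 : 0 ≤ f x := Real.sqrt_nonneg _; show -f x ≤ f x; linarith)
  have hIf : ∫ y in sa..sb, f y = Real.pi / 4 * (1 - 2 * Real.sqrt 2 * g) := by
    rw [hf]
    exact integral_f hg hk hk2 hα hβ hα0
  have hsub_app : ∀ y : ℝ, (f - fun q => -f q) y = 2 * f y := by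
    intro y; simp only [Pi.sub_apply]; ring
  have hI₁ : ∫ y in Set.Ioo sa sb, (f - fun q => -f q) y
      = Real.pi / 2 * (1 - 2 * Real.sqrt 2 * g) := by
    simp only [hsub_app]
    rw [← MeasureTheory.integral_Ioc_eq_integral_Ioo,
      ← intervalIntegral.integral_of_le hsab.le,
      intervalIntegral.integral_const_mul, hIf]
    ring
  have hfeven : ∀ y : ℝ, f (-y) = f y := by
    intro y; simp only [hf, neg_sq]
  have hI₂ : ∫ y in Set.Ioo (-sb) (-sa), (f - fun q => -f q) y
      = Real.pi / 2 * (1 - 2 * Real.sqrt 2 * g) := by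
    simp only [hsub_app]
    rw [← MeasureTheory.integral_Ioc_eq_integral_Ioo,
      ← intervalIntegral.integral_of_le (by linarith : -sb ≤ -sa),
      ← intervalIntegral.integral_comp_neg (fun y => 2 * f y)]
    simp only [hfeven]
    rw [intervalIntegral.integral_const_mul, hIf]
    ring
  have hIpos : 0 ≤ Real.pi / 2 * (1 - 2 * Real.sqrt 2 * g) := by
    have h1 : (0:ℝ) < 1 - 2 * Real.sqrt 2 * g := by linarith
    positivity
  have hunion : ENNReal.ofReal (Real.pi / 2 * (1 - 2 * Real.sqrt 2 * g))
      + ENNReal.ofReal (Real.pi / 2 * (1 - 2 * Real.sqrt 2 * g)) ≤ volume T := by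
    calc ENNReal.ofReal (Real.pi / 2 * (1 - 2 * Real.sqrt 2 * g))
          + ENNReal.ofReal (Real.pi / 2 * (1 - 2 * Real.sqrt 2 * g))
        = volume S₁ + volume S₂ := by rw [hvol₁, hI₁, hvol₂, hI₂]
      _ = volume (S₁ ∪ S₂) := (measure_union hdisj hmeas₂).symm
      _ ≤ volume T := measure_mono (Set.union_subset hsub₁ hsub₂)
  have hTfin : volume T ≠ ⊤ := by
    have hTsub : T ⊆ Set.Icc (-1:ℝ) 1 ×ˢ Set.Icc (-1:ℝ) 1 := by
      rintro x ⟨-, hx2, -⟩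
      constructor
      · constructor <;> nlinarith [sq_nonneg (x.1 + 1), sq_nonneg (x.1 - 1), sq_nonneg x.2]
      · constructor <;> nlinarith [sq_nonneg (x.2 + 1), sq_nonneg (x.2 - 1), sq_nonneg x.1]
    refine ne_top_of_le_ne_top ?_ (measure_mono hTsub)
    rw [Measure.volume_eq_prod, Measure.prod_prod, Real.volume_Icc]
    exact ENNReal.mul_ne_top ENNReal.ofReal_ne_top ENNReal.ofReal_ne_top
  have h2I := ENNReal.toReal_mono hTfin hunion
  rw [ENNReal.toReal_add ENNReal.ofReal_ne_top ENNReal.ofReal_ne_top,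
    ENNReal.toReal_ofReal hIpos] at h2I
  have hfinal : Real.pi * (1 - 2 * Real.sqrt 2 * g) ≤ (volume T).toReal := by linarith
  have h3 : (1:ℝ) / Real.pi * (Real.pi * (1 - 2 * Real.sqrt 2 * g))
      ≤ 1 / Real.pi * (volume T).toReal :=
    mul_le_mul_of_nonneg_left hfinal (by positivity)
  calc 1 - 2 * Real.sqrt 2 * g
      = 1 / Real.pi * (Real.pi * (1 - 2 * Real.sqrt 2 * g)) := by field_simp
    _ ≤ 1 / Real.pi * (volume T).toReal := h3
end

section
/- Define, for t ∈ ℝ, F_C(t) := (1/π) ∫_{ℝ²} exp(-q² - p² + (1/2)/((q·cos t + p·sin t)² + sin²t/q²) - 1/(2q²)) dq dp, with the integrand taken to be 0 on the line q = 0. Then log(F_C(t))/|t| tends to -∞ as t → 0 with t ≠ 0; equivalently, for every A > 0 there is δ > 0 such that F_C(t) ≤ exp(-A·|t|) whenever 0 < |t| < δ. -/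
open MeasureTheory Real Set

noncomputable section CFP

def uf (ct st : ℝ) (x : ℝ × ℝ) : ℝ := x.1 * ct + x.2 * st
def vf (ct st : ℝ) (x : ℝ × ℝ) : ℝ := x.2 * ct - x.1 * st
def Yf (ct st : ℝ) (x : ℝ × ℝ) : ℝ := (uf ct st x) ^ 2 + st ^ 2 / x.1 ^ 2
def Df (ct st : ℝ) (x : ℝ × ℝ) : ℝ := uf ct st x * vf ct st x + st * ct / x.1 ^ 2
def Phi (ct st : ℝ) (x : ℝ × ℝ) : ℝ × ℝ := (Real.sqrt (Yf ct st x), Df ct st x / Real.sqrt (Yf ct st x))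

def L1 (a b : ℝ) : (ℝ × ℝ) →L[ℝ] ℝ :=
  a • (ContinuousLinearMap.fst ℝ ℝ ℝ) + b • (ContinuousLinearMap.snd ℝ ℝ ℝ)

lemma L1_apply (a b : ℝ) (v : ℝ × ℝ) : L1 a b v = a * v.1 + b * v.2 := by
  simp [L1, smul_eq_mul]

def L2 (a b c d : ℝ) : (ℝ × ℝ) →L[ℝ] (ℝ × ℝ) := (L1 a b).prod (L1 c d)

lemma L2_det (a b c d : ℝ) : (L2 a b c d).det = a * d - b * c := by
  have h := LinearMap.det_toMatrix (Module.Basis.finTwoProd ℝ) ((L2 a b c d) : (ℝ×ℝ) →ₗ[ℝ] (ℝ×ℝ))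
  rw [ContinuousLinearMap.det, ← h, Matrix.det_fin_two]
  simp [LinearMap.toMatrix_apply, L2, L1, Module.Basis.finTwoProd, smul_eq_mul]

def Yq (ct st : ℝ) (x : ℝ × ℝ) : ℝ := 2 * uf ct st x * ct - 2 * st ^ 2 / x.1 ^ 3
def Yp (ct st : ℝ) (x : ℝ × ℝ) : ℝ := 2 * uf ct st x * st
def Dq (ct st : ℝ) (x : ℝ × ℝ) : ℝ := ct * vf ct st x - st * uf ct st x - 2 * st * ct / x.1 ^ 3
def Dp (ct st : ℝ) (x : ℝ × ℝ) : ℝ := st * vf ct st x + ct * uf ct st x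

def Phi' (ct st : ℝ) (x : ℝ × ℝ) : (ℝ × ℝ) →L[ℝ] (ℝ × ℝ) :=
  L2 (Yq ct st x / (2 * Real.sqrt (Yf ct st x))) (Yp ct st x / (2 * Real.sqrt (Yf ct st x)))
     (Dq ct st x / Real.sqrt (Yf ct st x) - Df ct st x * Yq ct st x / (2 * Yf ct st x * Real.sqrt (Yf ct st x)))
     (Dp ct st x / Real.sqrt (Yf ct st x) - Df ct st x * Yp ct st x / (2 * Yf ct st x * Real.sqrt (Yf ct st x)))

lemma Yf_pos (ct : ℝ) {st : ℝ} (hs : st ≠ 0) {x : ℝ × ℝ} (hq : x.1 ≠ 0) : 0 < Yf ct st x := by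
  have h1 : 0 < st ^ 2 / x.1 ^ 2 := by positivity
  have h2 : 0 ≤ (uf ct st x) ^ 2 := sq_nonneg _
  unfold Yf; linarith

lemma hasFDerivAt_uf (ct st : ℝ) (x : ℝ × ℝ) : HasFDerivAt (uf ct st) (L1 ct st) x := by
  have hfun : (uf ct st) = fun v : ℝ × ℝ => (L1 ct st) v := by
    funext v; rw [L1_apply]; simp only [uf]; ring
  rw [hfun]
  exact (L1 ct st).hasFDerivAt

lemma hasFDerivAt_vf (ct st : ℝ) (x : ℝ × ℝ) : HasFDerivAt (vf ct st) (L1 (-st) ct) x := by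
  have hfun : (vf ct st) = fun v : ℝ × ℝ => (L1 (-st) ct) v := by
    funext v; rw [L1_apply]; simp only [vf]; ring
  rw [hfun]
  exact (L1 (-st) ct).hasFDerivAt

lemma hasFDerivAt_inv_sq (b : ℝ) {x : ℝ × ℝ} (hq : x.1 ≠ 0) :
    HasFDerivAt (fun v : ℝ × ℝ => b / v.1 ^ 2) (L1 (-2 * b / x.1 ^ 3) 0) x := by
  have h1 : HasFDerivAt (fun v : ℝ × ℝ => v.1 ^ 2)
      (((2 : ℕ) * x.1 ^ 1) • (ContinuousLinearMap.fst ℝ ℝ ℝ)) x :=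
    (hasDerivAt_pow 2 x.1).comp_hasFDerivAt x hasFDerivAt_fst
  have h2 : HasFDerivAt (fun v : ℝ × ℝ => (v.1 ^ 2)⁻¹)
      ((-((x.1 ^ 2) ^ 2)⁻¹) • (((2 : ℕ) * x.1 ^ 1) • (ContinuousLinearMap.fst ℝ ℝ ℝ))) x :=
    (hasDerivAt_inv (pow_ne_zero 2 hq)).comp_hasFDerivAt x h1
  have h3 := h2.const_mul b
  have hfun : (fun v : ℝ × ℝ => b / v.1 ^ 2) = fun v : ℝ × ℝ => b * (v.1 ^ 2)⁻¹ := by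
    funext v; rw [div_eq_mul_inv]
  rw [hfun]
  refine h3.congr_fderiv (ContinuousLinearMap.ext fun v => ?_)
  simp only [ContinuousLinearMap.smul_apply, ContinuousLinearMap.coe_fst', L1_apply,
    smul_eq_mul, Nat.cast_ofNat, pow_one]
  field_simp
  ring

lemma hasFDerivAt_Yf (ct st : ℝ) {x : ℝ × ℝ} (hq : x.1 ≠ 0) :
    HasFDerivAt (Yf ct st) (L1 (Yq ct st x) (Yp ct st x)) x := by
  have h1 : HasFDerivAt (fun v => (uf ct st v) ^ 2)
      (((2 : ℕ) * uf ct st x ^ 1) • (L1 ct st)) x :=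
    (hasDerivAt_pow 2 (uf ct st x)).comp_hasFDerivAt x (hasFDerivAt_uf ct st x)
  have h2 := hasFDerivAt_inv_sq (st ^ 2) hq
  refine (h1.add h2).congr_fderiv (ContinuousLinearMap.ext fun v => ?_)
  simp only [ContinuousLinearMap.add_apply, ContinuousLinearMap.smul_apply, L1_apply,
    smul_eq_mul, Nat.cast_ofNat, pow_one, Yq, Yp]
  ring

lemma hasFDerivAt_Df (ct st : ℝ) {x : ℝ × ℝ} (hq : x.1 ≠ 0) :
    HasFDerivAt (Df ct st) (L1 (Dq ct st x) (Dp ct st x)) x := by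
  have h1 : HasFDerivAt (fun v => uf ct st v * vf ct st v)
      (uf ct st x • (L1 (-st) ct) + vf ct st x • (L1 ct st)) x :=
    (hasFDerivAt_uf ct st x).mul (hasFDerivAt_vf ct st x)
  have h2 := hasFDerivAt_inv_sq (st * ct) hq
  refine (h1.add h2).congr_fderiv (ContinuousLinearMap.ext fun v => ?_)
  simp only [ContinuousLinearMap.add_apply, ContinuousLinearMap.smul_apply, L1_apply,
    smul_eq_mul, Dq, Dp]
  ring

lemma hasFDerivAt_Phi (ct : ℝ) {st : ℝ} (hs : st ≠ 0) {x : ℝ × ℝ} (hq : x.1 ≠ 0) :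
    HasFDerivAt (Phi ct st) (Phi' ct st x) x := by
  have hY := Yf_pos ct hs hq
  have hr0 : Real.sqrt (Yf ct st x) ≠ 0 := by positivity
  have hsq : (Real.sqrt (Yf ct st x)) ^ 2 = Yf ct st x := Real.sq_sqrt hY.le
  have h1 : HasFDerivAt (fun v => Real.sqrt (Yf ct st v))
      ((1 / (2 * Real.sqrt (Yf ct st x))) • (L1 (Yq ct st x) (Yp ct st x))) x :=
    (hasFDerivAt_Yf ct st hq).sqrt hY.ne'
  have h2 : HasFDerivAt (fun v => (Real.sqrt (Yf ct st v))⁻¹)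
      ((-((Real.sqrt (Yf ct st x)) ^ 2)⁻¹) •
        ((1 / (2 * Real.sqrt (Yf ct st x))) • (L1 (Yq ct st x) (Yp ct st x)))) x :=
    (hasDerivAt_inv hr0).comp_hasFDerivAt x h1
  have h3 : HasFDerivAt (fun v => Df ct st v * (Real.sqrt (Yf ct st v))⁻¹)
      (Df ct st x • ((-((Real.sqrt (Yf ct st x)) ^ 2)⁻¹) •
        ((1 / (2 * Real.sqrt (Yf ct st x))) • (L1 (Yq ct st x) (Yp ct st x)))) +
        (Real.sqrt (Yf ct st x))⁻¹ • (L1 (Dq ct st x) (Dp ct st x))) x :=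
    (hasFDerivAt_Df ct st hq).mul h2
  have hfun : Phi ct st = fun v => (Real.sqrt (Yf ct st v), Df ct st v * (Real.sqrt (Yf ct st v))⁻¹) := by
    funext v; simp only [Phi, div_eq_mul_inv]
  rw [hfun]
  refine (h1.prodMk h3).congr_fderiv (ContinuousLinearMap.ext fun v => ?_)
  simp only [ContinuousLinearMap.prod_apply, Phi', L2, ContinuousLinearMap.add_apply,
    ContinuousLinearMap.smul_apply, L1_apply, smul_eq_mul]
  rw [Prod.mk.injEq]
  constructor
  · field_simp
  · rw [hsq]
    field_simp
    ring

lemma detPhi' (ct : ℝ) {st : ℝ} (hc : ct ^ 2 + st ^ 2 = 1) (hs : st ≠ 0) {x : ℝ × ℝ} (hq : x.1 ≠ 0) :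
    (Phi' ct st x).det = 1 := by
  have hY := Yf_pos ct hs hq
  have hK1 : Yq ct st x * Dp ct st x - Yp ct st x * Dq ct st x = 2 * (ct ^ 2 + st ^ 2) * Yf ct st x := by
    simp only [Yq, Yp, Dq, Dp, Yf, uf, vf]; field_simp; ring
  rw [hc] at hK1
  rw [Phi', L2_det]
  set r := Real.sqrt (Yf ct st x) with hr
  have hr0 : r ≠ 0 := by rw [hr]; positivity
  have hsq : r ^ 2 = Yf ct st x := Real.sq_sqrt hY.le
  rw [← hsq] at hK1 ⊢
  field_simp
  linear_combination (2 * r ^ 2) * hK1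

lemma K2e (ct : ℝ) {st : ℝ} (hc : ct ^ 2 + st ^ 2 = 1) (hs : st ≠ 0) {x : ℝ × ℝ} (hq : x.1 ≠ 0) :
    -(Yf ct st x) - (Df ct st x) ^ 2 / (Yf ct st x)
      = 2 * ((1/2) / Yf ct st x - (x.1 ^ 2 + x.2 ^ 2) / 2 - 1 / (2 * x.1 ^ 2)) := by
  have hY := (Yf_pos ct hs hq).ne'
  simp only [Yf, Df, uf, vf] at *
  field_simp
  linear_combination ((-1:ℝ)*x.1^8*ct^2 + (-2:ℝ)*x.1^7*x.2^1*ct^1*st^1 + (-1:ℝ)*x.1^6*x.2^2*st^2 + (-1:ℝ)*x.1^6*x.2^2*ct^2 + (-2:ℝ)*x.1^5*x.2^3*ct^1*st^1 + (-2:ℝ)*x.1^3*x.2^1*ct^1*st^1 + (-1:ℝ)*x.1^4*x.2^4*st^2 + (-2:ℝ)*x.1^2*x.2^2*st^2 + (-1:ℝ)*st^2 + (1:ℝ)*x.1^4) * hc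
lemma K2 (ct st : ℝ) (hc : ct ^ 2 + st ^ 2 = 1) (x : ℝ × ℝ) (hq : x.1 ≠ 0) :
    (x.1 ^ 2 + x.2 ^ 2 + 1 / x.1 ^ 2) * Yf ct st x = (Yf ct st x) ^ 2 + (Df ct st x) ^ 2 + 1 := by
  simp only [Yf, Df, uf, vf]
  field_simp
  linear_combination ((1:ℝ)*x.1^4 + (-1:ℝ)*x.1^8*ct^2 + (-2:ℝ)*x.1^7*x.2^1*ct^1*st^1 + (-1:ℝ)*x.1^6*x.2^2*st^2 + (-1:ℝ)*x.1^6*x.2^2*ct^2 + (-2:ℝ)*x.1^5*x.2^3*ct^1*st^1 + (-2:ℝ)*x.1^3*x.2^1*ct^1*st^1 + (-1:ℝ)*x.1^4*x.2^4*st^2 + (-2:ℝ)*x.1^2*x.2^2*st^2 + (-1:ℝ)*st^2) * hc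

lemma K4 (ct st : ℝ) (hc : ct ^ 2 + st ^ 2 = 1) (x : ℝ × ℝ) (hq : x.1 ≠ 0) :
    x.1 ^ 2 * Yf ct st x = (Yf ct st x * ct - Df ct st x * st) ^ 2 + st ^ 2 := by
  simp only [Yf, Df, uf, vf]
  field_simp
  linear_combination ((-1:ℝ)*x.1^6*x.2^2*st^2 + (-1:ℝ)*x.1^6*x.2^2*st^4 + (-1:ℝ)*x.1^6*x.2^2*ct^2*st^2 + (-2:ℝ)*x.1^7*x.2*ct*st + (-2:ℝ)*x.1^7*x.2*ct*st^3 + (-2:ℝ)*x.1^7*x.2*ct^3*st + (-1:ℝ)*x.1^8*ct^2 + (-1:ℝ)*x.1^8*ct^2*st^2 + (-1:ℝ)*x.1^8*ct^4) * hc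

lemma K5 (ct st : ℝ) (hc : ct ^ 2 + st ^ 2 = 1) (x : ℝ × ℝ) (hq : x.1 ≠ 0) :
    x.2 * x.1 * Yf ct st x = (Yf ct st x * ct - Df ct st x * st) * (Df ct st x * ct + Yf ct st x * st) - st * ct := by
  simp only [Yf, Df, uf, vf]
  field_simp
  linear_combination ((-1:ℝ)*x.1^7*x.2^1*ct^4 + (-2:ℝ)*x.1^6*x.2^2*ct^3*st^1 + (-1:ℝ)*x.1^7*x.2^1*ct^2*st^2 + (-1:ℝ)*x.1^4*ct^3*st^1 + (-2:ℝ)*x.1^6*x.2^2*ct^1*st^3 + (-1:ℝ)*x.1^4*ct^1*st^3 + (-1:ℝ)*x.1^5*x.2^3*ct^2*st^2 + (-1:ℝ)*x.1^3*x.2^1*ct^2*st^2 + (-1:ℝ)*x.1^5*x.2^3*st^4 + (-1:ℝ)*x.1^3*x.2^1*st^4 + (-1:ℝ)*x.1^7*x.2^1*ct^2 + (-2:ℝ)*x.1^6*x.2^2*ct^1*st^1 + (-1:ℝ)*x.1^4*ct^1*st^1 + (-1:ℝ)*x.1^5*x.2^3*st^2 + (-1:ℝ)*x.1^3*x.2^1*st^2)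 * hc

lemma Phi_eq_YD (ct : ℝ) {st : ℝ} (hs : st ≠ 0) {x x' : ℝ × ℝ} (hq : x.1 ≠ 0) (hq' : x'.1 ≠ 0)
    (h : Phi ct st x = Phi ct st x') : Yf ct st x = Yf ct st x' ∧ Df ct st x = Df ct st x' := by
  have hY := Yf_pos ct hs hq
  have hY' := Yf_pos ct hs hq'
  have h1 : Real.sqrt (Yf ct st x) = Real.sqrt (Yf ct st x') := congrArg Prod.fst h
  have h2 : Df ct st x / Real.sqrt (Yf ct st x) = Df ct st x' / Real.sqrt (Yf ct st x') :=
    congrArg Prod.snd h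
  have hYeq : Yf ct st x = Yf ct st x' := by
    rw [← Real.sq_sqrt hY.le, ← Real.sq_sqrt hY'.le, h1]
  refine ⟨hYeq, ?_⟩
  rw [h1] at h2
  have hr0 : Real.sqrt (Yf ct st x') ≠ 0 := by have := Yf_pos ct hs hq'; positivity
  field_simp at h2
  exact h2

lemma Phi_inj_core (ct : ℝ) {st : ℝ} (hc : ct ^ 2 + st ^ 2 = 1) (hs : st ≠ 0) {x x' : ℝ × ℝ}
    (hq : x.1 ≠ 0) (hq' : x'.1 ≠ 0) (h : Phi ct st x = Phi ct st x') :
    x.1 ^ 2 = x'.1 ^ 2 ∧ x.2 * x.1 = x'.2 * x'.1 := by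
  obtain ⟨hYeq, hDeq⟩ := Phi_eq_YD ct hs hq hq' h
  have hY := Yf_pos ct hs hq
  have k4 := K4 ct st hc x hq
  have k4' := K4 ct st hc x' hq'
  have k5 := K5 ct st hc x hq
  have k5' := K5 ct st hc x' hq'
  rw [← hYeq, ← hDeq] at k4' k5'
  constructor
  · have : x.1 ^ 2 * Yf ct st x = x'.1 ^ 2 * Yf ct st x := by rw [k4, k4']
    exact mul_right_cancel₀ hY.ne' this
  · have : x.2 * x.1 * Yf ct st x = x'.2 * x'.1 * Yf ct st x := by rw [k5, k5']
    exact mul_right_cancel₀ hY.ne' this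

lemma injOn_Phi_pos (ct : ℝ) {st : ℝ} (hc : ct ^ 2 + st ^ 2 = 1) (hs : st ≠ 0) :
    InjOn (Phi ct st) ((Ioi (0:ℝ)) ×ˢ (univ : Set ℝ)) := by
  rintro x ⟨hx, -⟩ x' ⟨hx', -⟩ h
  simp only [mem_Ioi] at hx hx'
  obtain ⟨h1, h2⟩ := Phi_inj_core ct hc hs hx.ne' hx'.ne' h
  have hq : x.1 = x'.1 := by nlinarith
  have hp : x.2 = x'.2 := by
    rw [hq] at h2; exact mul_right_cancel₀ (by linarith : x'.1 ≠ 0) h2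
  exact Prod.ext hq hp

lemma injOn_Phi_neg (ct : ℝ) {st : ℝ} (hc : ct ^ 2 + st ^ 2 = 1) (hs : st ≠ 0) :
    InjOn (Phi ct st) ((Iio (0:ℝ)) ×ˢ (univ : Set ℝ)) := by
  rintro x ⟨hx, -⟩ x' ⟨hx', -⟩ h
  simp only [mem_Iio] at hx hx'
  obtain ⟨h1, h2⟩ := Phi_inj_core ct hc hs hx.ne hx'.ne h
  have hq : x.1 = x'.1 := by nlinarith
  have hp : x.2 = x'.2 := by
    rw [hq] at h2; exact mul_right_cancel₀ (by linarith : x'.1 ≠ 0) h2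
  exact Prod.ext hq hp

lemma image_Phi_subset (ct : ℝ) {st : ℝ} (hs : st ≠ 0) {s : Set (ℝ × ℝ)}
    (hsub : ∀ x ∈ s, x.1 ≠ 0) :
    Phi ct st '' s ⊆ (Ioi (0:ℝ)) ×ˢ (univ : Set ℝ) := by
  rintro y ⟨x, hx, rfl⟩
  have hY := Yf_pos ct hs (hsub x hx)
  exact ⟨Real.sqrt_pos.mpr hY, mem_univ _⟩


def Wf (x : ℝ × ℝ) : ℝ := Real.exp (-(x.1 ^ 2 + x.2 ^ 2) / 2)
def Vf (ct st : ℝ) (x : ℝ × ℝ) : ℝ :=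
  if x.1 = 0 then 0 else
    Real.exp ((1/2) / Yf ct st x - (x.1 ^ 2 + x.2 ^ 2) / 2 - 1 / (2 * x.1 ^ 2))
def gG (y : ℝ × ℝ) : ℝ := Real.exp (-1 * y.1 ^ 2) * Real.exp (-1 * y.2 ^ 2)

lemma Vf_nonneg (ct st : ℝ) (x : ℝ × ℝ) : 0 ≤ Vf ct st x := by
  unfold Vf; split
  · exact le_refl 0
  · exact (Real.exp_pos _).le

lemma Wf_pos (x : ℝ × ℝ) : 0 < Wf x := Real.exp_pos _

lemma gG_int : Integrable gG := by
  have h := (integrable_exp_neg_mul_sq (one_pos : (0:ℝ) < 1)).mul_prod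
    (integrable_exp_neg_mul_sq (one_pos : (0:ℝ) < 1))
  rw [← Measure.volume_eq_prod] at h
  exact h

lemma gG_nonneg (y : ℝ × ℝ) : 0 ≤ gG y := by
  unfold gG; positivity

lemma smul_det_gG_eq (ct : ℝ) {st : ℝ} (hc : ct ^ 2 + st ^ 2 = 1) (hs : st ≠ 0) {x : ℝ × ℝ}
    (hq : x.1 ≠ 0) : |(Phi' ct st x).det| • gG (Phi ct st x) = (Vf ct st x) ^ 2 := by
  have hY := Yf_pos ct hs hq
  rw [detPhi' ct hc hs hq, abs_one, one_smul]
  unfold gG Phi Vf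
  rw [if_neg hq]
  simp only []
  rw [← Real.exp_add]
  conv_rhs => rw [sq, ← Real.exp_add]
  congr 1
  have h1 : (Real.sqrt (Yf ct st x)) ^ 2 = Yf ct st x := Real.sq_sqrt hY.le
  have hYY : Real.sqrt (Yf ct st x) * Real.sqrt (Yf ct st x) = Yf ct st x :=
    Real.mul_self_sqrt hY.le
  rw [div_pow, h1]
  have h2e := K2e ct hc hs hq
  linarith [h2e]


lemma integral_gG_Sp : ∫ y in (Ioi (0:ℝ)) ×ˢ (univ : Set ℝ), gG y = Real.pi / 2 := by
  unfold gG
  rw [Measure.volume_eq_prod]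
  rw [setIntegral_prod_mul (fun a : ℝ => Real.exp (-1 * a ^ 2)) (fun a : ℝ => Real.exp (-1 * a ^ 2))
    (Ioi (0:ℝ)) (univ : Set ℝ)]
  rw [integral_gaussian_Ioi 1, Measure.restrict_univ, integral_gaussian 1]
  rw [div_one]
  rw [div_mul_eq_mul_div, Real.mul_self_sqrt Real.pi_nonneg]

lemma covP (ct : ℝ) {st : ℝ} (hc : ct ^ 2 + st ^ 2 = 1) (hs : st ≠ 0) :
    (∫ x in (Ioi (0:ℝ)) ×ˢ (univ : Set ℝ), (Vf ct st x) ^ 2 ≤ Real.pi / 2) ∧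
      IntegrableOn (fun x => (Vf ct st x) ^ 2) ((Ioi (0:ℝ)) ×ˢ (univ : Set ℝ)) := by
  have hmeas : MeasurableSet ((Ioi (0:ℝ)) ×ˢ (univ : Set ℝ)) :=
    measurableSet_Ioi.prod MeasurableSet.univ
  have hne : ∀ x ∈ (Ioi (0:ℝ)) ×ˢ (univ : Set ℝ), x.1 ≠ 0 := by
    rintro x ⟨hx, -⟩; exact (mem_Ioi.mp hx).ne'
  have hderiv : ∀ x ∈ (Ioi (0:ℝ)) ×ˢ (univ : Set ℝ),
      HasFDerivWithinAt (Phi ct st) (Phi' ct st x) ((Ioi (0:ℝ)) ×ˢ (univ : Set ℝ)) x :=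
    fun x hx => (hasFDerivAt_Phi ct hs (hne x hx)).hasFDerivWithinAt
  have hinj := injOn_Phi_pos ct hc hs
  have hcov := integral_image_eq_integral_abs_det_fderiv_smul volume hmeas hderiv hinj gG
  have hptw : EqOn (fun x => |(Phi' ct st x).det| • gG (Phi ct st x))
      (fun x => (Vf ct st x) ^ 2) ((Ioi (0:ℝ)) ×ˢ (univ : Set ℝ)) :=
    fun x hx => smul_det_gG_eq ct hc hs (hne x hx)
  constructor
  · have h1 : ∫ x in (Ioi (0:ℝ)) ×ˢ (univ : Set ℝ), (Vf ct st x) ^ 2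
        = ∫ y in Phi ct st '' ((Ioi (0:ℝ)) ×ˢ (univ : Set ℝ)), gG y := by
      rw [hcov]
      exact (setIntegral_congr_fun hmeas hptw).symm
    rw [h1, ← integral_gG_Sp]
    refine setIntegral_mono_set gG_int.integrableOn ?_ ?_
    · exact Filter.Eventually.of_forall fun y => gG_nonneg y
    · exact Filter.Eventually.of_forall (image_Phi_subset ct hs hne)
  · have h2 := (integrableOn_image_iff_integrableOn_abs_det_fderiv_smul volume hmeas hderiv hinj gG).mp
      (gG_int.integrableOn)
    exact (h2.congr_fun hptw hmeas)

lemma covM (ct : ℝ) {st : ℝ} (hc : ct ^ 2 + st ^ 2 = 1) (hs : st ≠ 0) :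
    (∫ x in (Iio (0:ℝ)) ×ˢ (univ : Set ℝ), (Vf ct st x) ^ 2 ≤ Real.pi / 2) ∧
      IntegrableOn (fun x => (Vf ct st x) ^ 2) ((Iio (0:ℝ)) ×ˢ (univ : Set ℝ)) := by
  have hmeas : MeasurableSet ((Iio (0:ℝ)) ×ˢ (univ : Set ℝ)) :=
    measurableSet_Iio.prod MeasurableSet.univ
  have hne : ∀ x ∈ (Iio (0:ℝ)) ×ˢ (univ : Set ℝ), x.1 ≠ 0 := by
    rintro x ⟨hx, -⟩; exact (mem_Iio.mp hx).ne
  have hderiv : ∀ x ∈ (Iio (0:ℝ)) ×ˢ (univ : Set ℝ),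
      HasFDerivWithinAt (Phi ct st) (Phi' ct st x) ((Iio (0:ℝ)) ×ˢ (univ : Set ℝ)) x :=
    fun x hx => (hasFDerivAt_Phi ct hs (hne x hx)).hasFDerivWithinAt
  have hinj := injOn_Phi_neg ct hc hs
  have hcov := integral_image_eq_integral_abs_det_fderiv_smul volume hmeas hderiv hinj gG
  have hptw : EqOn (fun x => |(Phi' ct st x).det| • gG (Phi ct st x))
      (fun x => (Vf ct st x) ^ 2) ((Iio (0:ℝ)) ×ˢ (univ : Set ℝ)) :=
    fun x hx => smul_det_gG_eq ct hc hs (hne x hx)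
  constructor
  · have h1 : ∫ x in (Iio (0:ℝ)) ×ˢ (univ : Set ℝ), (Vf ct st x) ^ 2
        = ∫ y in Phi ct st '' ((Iio (0:ℝ)) ×ˢ (univ : Set ℝ)), gG y := by
      rw [hcov]
      exact (setIntegral_congr_fun hmeas hptw).symm
    rw [h1, ← integral_gG_Sp]
    refine setIntegral_mono_set gG_int.integrableOn ?_ ?_
    · exact Filter.Eventually.of_forall fun y => gG_nonneg y
    · exact Filter.Eventually.of_forall (image_Phi_subset ct hs hne)
  · have h2 := (integrableOn_image_iff_integrableOn_abs_det_fderiv_smul volume hmeas hderiv hinj gG).mp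
      (gG_int.integrableOn)
    exact (h2.congr_fun hptw hmeas)


lemma L0_null : volume {x : ℝ × ℝ | x.1 = 0} = 0 := by
  have h : {x : ℝ × ℝ | x.1 = 0} = (({0} : Set ℝ) ×ˢ (univ : Set ℝ)) := by
    ext x
    simp only [mem_setOf_eq, Set.mem_prod, mem_singleton_iff, mem_univ, and_true]
  rw [h, Measure.volume_eq_prod, Measure.prod_prod, Real.volume_singleton, zero_mul]

lemma univ_split : (univ : Set (ℝ × ℝ)) =
    ((Ioi (0:ℝ)) ×ˢ (univ : Set ℝ)) ∪ (((Iio (0:ℝ)) ×ˢ (univ : Set ℝ)) ∪ {x : ℝ × ℝ | x.1 = 0}) := by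
  ext x
  simp only [mem_univ, true_iff, mem_union, mem_prod, mem_Ioi, mem_Iio, mem_setOf_eq, and_true]
  rcases lt_trichotomy x.1 0 with h | h | h
  · exact Or.inr (Or.inl h)
  · exact Or.inr (Or.inr h)
  · exact Or.inl h

lemma Vsq_integrable (ct : ℝ) {st : ℝ} (hc : ct ^ 2 + st ^ 2 = 1) (hs : st ≠ 0) :
    Integrable (fun x => (Vf ct st x) ^ 2) := by
  rw [← integrableOn_univ, univ_split]
  refine IntegrableOn.union (covP ct hc hs).2 (IntegrableOn.union (covM ct hc hs).2 ?_)
  rw [IntegrableOn, Measure.restrict_eq_zero.mpr L0_null]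
  exact integrable_zero_measure

lemma Vsq_int_le (ct : ℝ) {st : ℝ} (hc : ct ^ 2 + st ^ 2 = 1) (hs : st ≠ 0) :
    ∫ x : ℝ × ℝ, (Vf ct st x) ^ 2 ≤ Real.pi := by
  have hd1 : Disjoint ((Ioi (0:ℝ)) ×ˢ (univ : Set ℝ))
      (((Iio (0:ℝ)) ×ˢ (univ : Set ℝ)) ∪ {x : ℝ × ℝ | x.1 = 0}) := by
    rw [Set.disjoint_left]
    rintro a ⟨ha, -⟩ hb
    simp only [mem_union, mem_prod, mem_Iio, mem_setOf_eq] at hb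
    rcases hb with ⟨hb, -⟩ | hb
    · exact absurd (mem_Ioi.mp ha) (by linarith)
    · exact absurd (mem_Ioi.mp ha) (by rw [hb]; exact lt_irrefl 0)
  have hd2 : Disjoint ((Iio (0:ℝ)) ×ˢ (univ : Set ℝ)) {x : ℝ × ℝ | x.1 = 0} := by
    rw [Set.disjoint_left]
    rintro a ⟨ha, -⟩ hb
    simp only [mem_setOf_eq] at hb
    exact absurd (mem_Iio.mp ha) (by rw [hb]; exact lt_irrefl 0)
  have hm2 : MeasurableSet (((Iio (0:ℝ)) ×ˢ (univ : Set ℝ)) ∪ {x : ℝ × ℝ | x.1 = 0}) := by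
    refine (measurableSet_Iio.prod MeasurableSet.univ).union ?_
    exact (measurableSet_singleton (0:ℝ)).preimage measurable_fst
  have hm3 : MeasurableSet ({x : ℝ × ℝ | x.1 = 0}) :=
    (measurableSet_singleton (0:ℝ)).preimage measurable_fst
  have hi0 : IntegrableOn (fun x => (Vf ct st x) ^ 2) {x : ℝ × ℝ | x.1 = 0} := by
    rw [IntegrableOn, Measure.restrict_eq_zero.mpr L0_null]
    exact integrable_zero_measure
  calc ∫ x : ℝ × ℝ, (Vf ct st x) ^ 2
      = ∫ x in ((Ioi (0:ℝ)) ×ˢ (univ : Set ℝ)) ∪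
          (((Iio (0:ℝ)) ×ˢ (univ : Set ℝ)) ∪ {x : ℝ × ℝ | x.1 = 0}), (Vf ct st x) ^ 2 := by
        rw [← univ_split, setIntegral_univ]
    _ = (∫ x in (Ioi (0:ℝ)) ×ˢ (univ : Set ℝ), (Vf ct st x) ^ 2) +
        ((∫ x in (Iio (0:ℝ)) ×ˢ (univ : Set ℝ), (Vf ct st x) ^ 2) +
          (∫ x in {x : ℝ × ℝ | x.1 = 0}, (Vf ct st x) ^ 2)) := by
        rw [setIntegral_union hd1 hm2 (covP ct hc hs).2 ((covM ct hc hs).2.union hi0)]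
        rw [setIntegral_union hd2 hm3 (covM ct hc hs).2 hi0]
    _ ≤ Real.pi / 2 + (Real.pi / 2 + 0) := by
        have h0 : (∫ x in {x : ℝ × ℝ | x.1 = 0}, (Vf ct st x) ^ 2) = 0 := by
          rw [Measure.restrict_eq_zero.mpr L0_null, integral_zero_measure]
        rw [h0]
        exact add_le_add (covP ct hc hs).1 (add_le_add (covM ct hc hs).1 le_rfl)
    _ = Real.pi := by ring

lemma Wf_eq_prod : Wf = fun x : ℝ × ℝ =>
    Real.exp (-(1/2) * x.1 ^ 2) * Real.exp (-(1/2) * x.2 ^ 2) := by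
  funext x; unfold Wf; rw [← Real.exp_add]; congr 1; ring

lemma Wsq_eq_prod : (fun x : ℝ × ℝ => (Wf x) ^ 2) = fun x : ℝ × ℝ =>
    Real.exp (-1 * x.1 ^ 2) * Real.exp (-1 * x.2 ^ 2) := by
  funext x; unfold Wf
  rw [sq, ← Real.exp_add, ← Real.exp_add]; congr 1; ring

lemma Wf_int : Integrable Wf := by
  rw [Wf_eq_prod]
  have h := (integrable_exp_neg_mul_sq (by norm_num : (0:ℝ) < 1/2)).mul_prod
    (integrable_exp_neg_mul_sq (by norm_num : (0:ℝ) < 1/2))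
  rw [← Measure.volume_eq_prod] at h
  exact h

lemma Wsq_int : Integrable (fun x : ℝ × ℝ => (Wf x) ^ 2) := by
  rw [Wsq_eq_prod]
  have h := (integrable_exp_neg_mul_sq (one_pos : (0:ℝ) < 1)).mul_prod
    (integrable_exp_neg_mul_sq (one_pos : (0:ℝ) < 1))
  rw [← Measure.volume_eq_prod] at h
  exact h

lemma Wf_integral : ∫ x : ℝ × ℝ, Wf x = 2 * Real.pi := by
  rw [Wf_eq_prod, Measure.volume_eq_prod]
  rw [integral_prod_mul (fun a : ℝ => Real.exp (-(1/2) * a ^ 2))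
    (fun a : ℝ => Real.exp (-(1/2) * a ^ 2))]
  have h : ∫ a : ℝ, Real.exp (-(1/2) * a ^ 2) = Real.sqrt (Real.pi / (1/2)) := by
    have := integral_gaussian (1/2)
    simpa using this
  rw [h, Real.mul_self_sqrt (by positivity)]
  ring

lemma Wsq_integral : ∫ x : ℝ × ℝ, (Wf x) ^ 2 = Real.pi := by
  rw [Wsq_eq_prod, Measure.volume_eq_prod]
  rw [integral_prod_mul (fun a : ℝ => Real.exp (-1 * a ^ 2)) (fun a : ℝ => Real.exp (-1 * a ^ 2))]
  rw [integral_gaussian 1, div_one, Real.mul_self_sqrt Real.pi_nonneg]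


lemma Wf_measurable : Measurable Wf := by
  unfold Wf
  exact Real.measurable_exp.comp
    (((measurable_fst.pow_const 2).add (measurable_snd.pow_const 2)).neg.div_const 2)

lemma Vf_measurable (ct st : ℝ) : Measurable (Vf ct st) := by
  unfold Vf
  refine Measurable.ite ?_ measurable_const ?_
  · exact (measurableSet_singleton (0:ℝ)).preimage measurable_fst
  · refine Real.measurable_exp.comp ?_
    unfold Yf uf
    refine Measurable.sub (Measurable.sub ?_ ?_) ?_
    · refine measurable_const.div ?_
      exact (((measurable_fst.mul_const ct).add (measurable_snd.mul_const st)).pow_const 2).add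
        (measurable_const.div (measurable_fst.pow_const 2))
    · exact ((measurable_fst.pow_const 2).add (measurable_snd.pow_const 2)).div_const 2
    · exact measurable_const.div ((measurable_fst.pow_const 2).const_mul 2)

lemma WV_int (ct : ℝ) {st : ℝ} (hc : ct ^ 2 + st ^ 2 = 1) (hs : st ≠ 0) :
    Integrable (fun x => Wf x * Vf ct st x) := by
  have hg : Integrable (fun x => ((Wf x) ^ 2 + (Vf ct st x) ^ 2) / 2) :=
    (Wsq_int.add (Vsq_integrable ct hc hs)).div_const 2
  refine hg.mono' ((Wf_measurable.mul (Vf_measurable ct st)).aestronglyMeasurable) ?_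
  refine Filter.Eventually.of_forall fun a => ?_
  rw [Real.norm_eq_abs, abs_of_nonneg (mul_nonneg (Wf_pos a).le (Vf_nonneg ct st a))]
  nlinarith [sq_nonneg (Wf a - Vf ct st a)]

lemma WmV2_expand (ct st : ℝ) : (fun x => (Wf x - Vf ct st x) ^ 2)
    = fun x => ((Wf x) ^ 2 + (Vf ct st x) ^ 2) - 2 * (Wf x * Vf ct st x) := by
  funext x; ring

lemma WmV2_int (ct : ℝ) {st : ℝ} (hc : ct ^ 2 + st ^ 2 = 1) (hs : st ≠ 0) :
    Integrable (fun x => (Wf x - Vf ct st x) ^ 2) := by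
  rw [WmV2_expand]
  exact (Wsq_int.add (Vsq_integrable ct hc hs)).sub ((WV_int ct hc hs).const_mul 2)

lemma WV_integral_eq (ct : ℝ) {st : ℝ} (hc : ct ^ 2 + st ^ 2 = 1) (hs : st ≠ 0) :
    ∫ x : ℝ × ℝ, Wf x * Vf ct st x
      = ((∫ x : ℝ × ℝ, (Wf x) ^ 2) + (∫ x : ℝ × ℝ, (Vf ct st x) ^ 2)
          - ∫ x : ℝ × ℝ, (Wf x - Vf ct st x) ^ 2) / 2 := by
  have h1 : ∫ x : ℝ × ℝ, (Wf x - Vf ct st x) ^ 2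
      = ((∫ x : ℝ × ℝ, (Wf x) ^ 2) + (∫ x : ℝ × ℝ, (Vf ct st x) ^ 2))
        - 2 * ∫ x : ℝ × ℝ, Wf x * Vf ct st x := by
    have hA : Integrable (fun x : ℝ × ℝ => (Wf x) ^ 2 + (Vf ct st x) ^ 2) :=
      Wsq_int.add (Vsq_integrable ct hc hs)
    have hB : Integrable (fun x : ℝ × ℝ => 2 * (Wf x * Vf ct st x)) :=
      (WV_int ct hc hs).const_mul 2
    rw [WmV2_expand]
    rw [integral_sub hA hB]
    rw [integral_add Wsq_int (Vsq_integrable ct hc hs), MeasureTheory.integral_const_mul]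
  linarith


lemma Vf_le_on_R (ct : ℝ) {st : ℝ} (hs : st ≠ 0) {x : ℝ × ℝ} (hx : x.1 ^ 2 ≤ |st| / 2) :
    Vf ct st x ≤ Real.exp (-(3 / (4 * |st|))) := by
  have habs : 0 < |st| := abs_pos.mpr hs
  by_cases hq : x.1 = 0
  · rw [Vf, if_pos hq]; exact (Real.exp_pos _).le
  · rw [Vf, if_neg hq]
    rw [Real.exp_le_exp]
    have h1 : 0 < x.1 ^ 2 := by positivity
    have hsq_abs : st ^ 2 = |st| ^ 2 := (sq_abs st).symm
    -- Yf ≥ 2|st|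
    have hY1 : st ^ 2 / x.1 ^ 2 ≤ Yf ct st x := by
      unfold Yf; nlinarith [sq_nonneg (uf ct st x)]
    have hY2 : 2 * |st| ≤ st ^ 2 / x.1 ^ 2 := by
      rw [le_div_iff₀ h1]; nlinarith
    have hYlb : 2 * |st| ≤ Yf ct st x := le_trans hY2 hY1
    have hYpos : 0 < Yf ct st x := lt_of_lt_of_le (by positivity) hYlb
    -- (1/2)/Y ≤ 1/(4|st|)
    have hA : (1/2) / Yf ct st x ≤ 1 / (4 * |st|) := by
      rw [div_le_div_iff₀ hYpos (by positivity)]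
      nlinarith
    -- -1/(2 x1^2) ≤ -1/|st|
    have hB : 1 / |st| ≤ 1 / (2 * x.1 ^ 2) := by
      rw [div_le_div_iff₀ habs (by positivity)]
      nlinarith
    have hC : 0 ≤ (x.1 ^ 2 + x.2 ^ 2) / 2 := by positivity
    have goal : (1/2) / Yf ct st x - (x.1 ^ 2 + x.2 ^ 2) / 2 - 1 / (2 * x.1 ^ 2)
        ≤ 1 / (4 * |st|) - 0 - 1 / |st| := by
      linarith [hA, hB, hC]
    calc (1/2) / Yf ct st x - (x.1 ^ 2 + x.2 ^ 2) / 2 - 1 / (2 * x.1 ^ 2)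
        ≤ 1 / (4 * |st|) - 0 - 1 / |st| := goal
      _ = -(3 / (4 * |st|)) := by field_simp; ring


lemma sqrt_pi_ge : (17/10 : ℝ) ≤ Real.sqrt Real.pi := by
  have h : (289/100 : ℝ) ≤ Real.pi := by nlinarith [Real.pi_gt_three]
  have h2 := Real.sqrt_le_sqrt h
  rwa [show (289/100:ℝ) = (17/10)^2 by norm_num, Real.sqrt_sq (by norm_num : (0:ℝ) ≤ 17/10)] at h2

lemma eps_le {st : ℝ} (hs : st ≠ 0) :
    Real.exp (-(3 / (4 * |st|))) ≤ 64 * |st| ^ 3 := by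
  have habs : 0 < |st| := abs_pos.mpr hs
  set y : ℝ := 1 / (4 * |st|) with hy
  have hypos : 0 < y := by positivity
  have h1 : y ≤ Real.exp y := by linarith [Real.add_one_le_exp y]
  have h2 : y ^ 3 ≤ (Real.exp y) ^ 3 := by
    exact pow_le_pow_left₀ hypos.le h1 3
  have h3 : (Real.exp y) ^ 3 = Real.exp (y + y + y) := by
    rw [Real.exp_add, Real.exp_add]; ring
  have h4 : -(3 / (4 * |st|)) = -(y + y + y) := by rw [hy]; ring
  rw [h4, Real.exp_neg]
  have h5 : (0:ℝ) < y ^ 3 := by positivity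
  have h6 : y ^ 3 ≤ Real.exp (y + y + y) := by rw [← h3]; exact h2
  have h7 : (Real.exp (y + y + y))⁻¹ ≤ (y ^ 3)⁻¹ := by
    exact inv_anti₀ h5 h6
  refine h7.trans ?_
  rw [hy]
  rw [div_pow, one_pow, inv_div]
  rw [show (4 * |st|) ^ 3 = 64 * |st| ^ 3 by ring]
  rw [div_one]

set_option maxHeartbeats 2000000 in
lemma I2_lower (ct : ℝ) {st : ℝ} (hc : ct ^ 2 + st ^ 2 = 1) (hs : st ≠ 0)
    (hsmall : |st| ≤ 1/50) :
    2 * Real.sqrt (|st| / 2) ≤ ∫ x : ℝ × ℝ, (Wf x - Vf ct st x) ^ 2 := by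
  have habs : 0 < |st| := abs_pos.mpr hs
  obtain ⟨b, hbdef⟩ : ∃ b : ℝ, b = Real.sqrt (|st| / 2) := ⟨_, rfl⟩
  rw [← hbdef]
  have hb2 : b ^ 2 = |st| / 2 := by rw [hbdef]; exact Real.sq_sqrt (by positivity)
  have hbpos : 0 < b := by rw [hbdef]; exact Real.sqrt_pos.mpr (by positivity)
  have hble : b ≤ 1/10 := by nlinarith
  obtain ⟨R, hRdef⟩ : ∃ R : Set (ℝ × ℝ), R = (Icc (-b) b) ×ˢ (univ : Set ℝ) := ⟨_, rfl⟩
  have hRmeas : MeasurableSet R := by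
    rw [hRdef]; exact measurableSet_Icc.prod MeasurableSet.univ
  obtain ⟨ε, hεdef⟩ : ∃ e : ℝ, e = Real.exp (-(3 / (4 * |st|))) := ⟨_, rfl⟩
  have hεpos : 0 < ε := by rw [hεdef]; exact Real.exp_pos _
  have hεle : ε ≤ 512 * b ^ 6 := by
    have h := eps_le hs
    have h8 : |st| ^ 3 = 8 * b ^ 6 := by
      rw [show |st| = 2 * b ^ 2 by linarith]; ring
    rw [hεdef]; rw [h8] at h; linarith
  -- Step 3 : lower bound for ∫_R W²
  have hvol : (volume (Icc (-b) b)).toReal = 2 * b := by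
    rw [Real.volume_Icc, ENNReal.toReal_ofReal (by linarith)]; ring
  have hprod : ∫ x in R, (Wf x) ^ 2
      = (∫ a in Icc (-b) b, Real.exp (-1 * a ^ 2)) * Real.sqrt Real.pi := by
    have hcong : ∀ x : ℝ × ℝ, (Wf x) ^ 2 = Real.exp (-1 * x.1 ^ 2) * Real.exp (-1 * x.2 ^ 2) :=
      fun x => by simpa using congrFun Wsq_eq_prod x
    rw [setIntegral_congr_fun hRmeas (fun x _ => hcong x)]
    rw [hRdef, Measure.volume_eq_prod]
    rw [setIntegral_prod_mul (fun a : ℝ => Real.exp (-1 * a ^ 2))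
      (fun a : ℝ => Real.exp (-1 * a ^ 2)) (Icc (-b) b) (univ : Set ℝ)]
    rw [Measure.restrict_univ, integral_gaussian 1, div_one]
  have hinner : (1 - b ^ 2) * (2 * b) ≤ ∫ a in Icc (-b) b, Real.exp (-1 * a ^ 2) := by
    have hbd : ∀ a ∈ Icc (-b) b, (1 : ℝ) - b ^ 2 ≤ Real.exp (-1 * a ^ 2) := by
      intro a ha
      rw [mem_Icc] at ha
      have ha2 : a ^ 2 ≤ b ^ 2 := sq_le_sq' ha.1 ha.2
      have h := Real.add_one_le_exp (-1 * a ^ 2)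
      nlinarith
    have hge := setIntegral_ge_of_const_le (μ := volume) (s := Icc (-b) b)
      (f := fun a : ℝ => Real.exp (-1 * a ^ 2)) (c := 1 - b ^ 2) measurableSet_Icc
      (by rw [Real.volume_Icc]; exact ENNReal.ofReal_ne_top) hbd
      ((integrable_exp_neg_mul_sq (one_pos : (0:ℝ) < 1)).integrableOn)
    rw [measureReal_def, hvol] at hge
    simp only [smul_eq_mul] at hge
    linarith [hge]
  have hstep3 : (1 - b ^ 2) * (2 * b) * Real.sqrt Real.pi ≤ ∫ x in R, (Wf x) ^ 2 := by
    rw [hprod]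
    exact mul_le_mul_of_nonneg_right hinner (Real.sqrt_nonneg _)
  -- Step 4 : upper bound for ∫_R W V
  have hstep4 : ∫ x in R, Wf x * Vf ct st x ≤ ε * (2 * Real.pi) := by
    have h41 : ∫ x in R, Wf x * Vf ct st x ≤ ∫ x in R, ε * Wf x := by
      refine setIntegral_mono_on ((WV_int ct hc hs).integrableOn)
        ((Wf_int.const_mul ε).integrableOn) hRmeas (fun x hx => ?_)
      rw [hRdef] at hx
      obtain ⟨h1, h2⟩ := mem_Icc.mp hx.1
      have hx2 : x.1 ^ 2 ≤ |st| / 2 := by nlinarith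
      calc Wf x * Vf ct st x ≤ Wf x * ε := by
            exact mul_le_mul_of_nonneg_left (hεdef ▸ Vf_le_on_R ct hs hx2) (Wf_pos x).le
        _ = ε * Wf x := mul_comm _ _
    have h42 : ∫ x in R, ε * Wf x = ε * ∫ x in R, Wf x := by
      exact MeasureTheory.integral_const_mul ε _
    have h43 : ∫ x in R, Wf x ≤ ∫ x : ℝ × ℝ, Wf x := by
      refine setIntegral_le_integral Wf_int ?_
      exact Filter.Eventually.of_forall fun x => (Wf_pos x).le
    calc ∫ x in R, Wf x * Vf ct st x ≤ ε * ∫ x in R, Wf x := by rw [← h42]; exact h41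
      _ ≤ ε * (2 * Real.pi) := by
          rw [← Wf_integral]
          exact mul_le_mul_of_nonneg_left h43 hεpos.le
  -- Step 1-2 : assemble
  have hIL : IntegrableOn (fun x => (Wf x) ^ 2 - 2 * (Wf x * Vf ct st x)) R := by
    exact (Wsq_int.sub ((WV_int ct hc hs).const_mul 2)).integrableOn
  have hstep2 : ∫ x in R, ((Wf x) ^ 2 - 2 * (Wf x * Vf ct st x))
      = (∫ x in R, (Wf x) ^ 2) - 2 * ∫ x in R, Wf x * Vf ct st x := by
    have hA : Integrable (fun x : ℝ × ℝ => (Wf x) ^ 2) (volume.restrict R) :=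
      Wsq_int.integrableOn
    have hB : Integrable (fun x : ℝ × ℝ => 2 * (Wf x * Vf ct st x)) (volume.restrict R) :=
      ((WV_int ct hc hs).const_mul 2).integrableOn
    rw [integral_sub hA hB, MeasureTheory.integral_const_mul]
  have hstep1 : ∫ x in R, ((Wf x) ^ 2 - 2 * (Wf x * Vf ct st x))
      ≤ ∫ x in R, (Wf x - Vf ct st x) ^ 2 := by
    refine setIntegral_mono_on hIL ((WmV2_int ct hc hs).integrableOn) hRmeas (fun x _ => ?_)
    nlinarith [sq_nonneg (Vf ct st x)]
  have hstep0 : ∫ x in R, (Wf x - Vf ct st x) ^ 2 ≤ ∫ x : ℝ × ℝ, (Wf x - Vf ct st x) ^ 2 := by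
    refine setIntegral_le_integral (WmV2_int ct hc hs) ?_
    exact Filter.Eventually.of_forall fun x => sq_nonneg _
  -- numeric conclusion
  have f1 : (99/100 : ℝ) ≤ 1 - b ^ 2 := by nlinarith
  have f2 : (1683/1000 : ℝ) ≤ (1 - b ^ 2) * Real.sqrt Real.pi := by nlinarith [sqrt_pi_ge]
  have e1 : (1683/1000) * (2 * b) ≤ (1 - b ^ 2) * (2 * b) * Real.sqrt Real.pi := by
    nlinarith [f2, hbpos]
  have e2 : 2 * (ε * (2 * Real.pi)) ≤ 16 * ε := by nlinarith [hεpos, Real.pi_le_four]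
  have hb5 : b ^ 5 ≤ (1/10 : ℝ) ^ 5 := pow_le_pow_left₀ hbpos.le hble 5
  have e3 : 16 * ε ≤ (1366/1000) * b := by nlinarith [hεle, hb5, hbpos]
  calc 2 * b ≤ (1683/1000) * (2 * b) - (1366/1000) * b := by nlinarith [hbpos]
    _ ≤ (1 - b ^ 2) * (2 * b) * Real.sqrt Real.pi - 2 * (ε * (2 * Real.pi)) := by
        linarith [e1, e2, e3]
    _ ≤ (∫ x in R, (Wf x) ^ 2) - 2 * ∫ x in R, Wf x * Vf ct st x := by
        have := mul_le_mul_of_nonneg_left hstep4 (by norm_num : (0:ℝ) ≤ 2)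
        linarith [hstep3]
    _ = ∫ x in R, ((Wf x) ^ 2 - 2 * (Wf x * Vf ct st x)) := hstep2.symm
    _ ≤ ∫ x in R, (Wf x - Vf ct st x) ^ 2 := hstep1
    _ ≤ ∫ x : ℝ × ℝ, (Wf x - Vf ct st x) ^ 2 := hstep0


lemma integrand_eq (t : ℝ) :
    (fun x : ℝ × ℝ => (if x.1 = 0 then 0 else
        Real.exp (- x.1 ^ 2 - x.2 ^ 2
          + (1 / 2) / ((x.1 * Real.cos t + x.2 * Real.sin t) ^ 2
              + (Real.sin t) ^ 2 / x.1 ^ 2)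
          - 1 / (2 * x.1 ^ 2))))
      = fun x : ℝ × ℝ => Wf x * Vf (Real.cos t) (Real.sin t) x := by
  funext x
  by_cases hq : x.1 = 0
  · rw [if_pos hq, Vf, if_pos hq, mul_zero]
  · rw [if_neg hq, Vf, if_neg hq, Wf, ← Real.exp_add]
    congr 1
    unfold Yf uf
    ring

end CFP

set_option maxHeartbeats 2000000 in
/-- Proposition 4.5: the rescaled (g-independent) Gaussian classical fidelity
for the perturbed harmonic oscillator decays faster than `e^{-A|t|}` for every
`A > 0` near `t = 0`. -/
theorem classical_fidelity_HO_cusp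
    (F : ℝ → ℝ)
    (hF : F = fun t => (1 / Real.pi) * ∫ x : ℝ × ℝ,
      (if x.1 = 0 then 0 else
        Real.exp (- x.1 ^ 2 - x.2 ^ 2
          + (1 / 2) / ((x.1 * Real.cos t + x.2 * Real.sin t) ^ 2
              + (Real.sin t) ^ 2 / x.1 ^ 2)
          - 1 / (2 * x.1 ^ 2)))) :
    ∀ A : ℝ, 0 < A → ∃ δ : ℝ, 0 < δ ∧
      ∀ t : ℝ, 0 < |t| → |t| < δ → F t ≤ Real.exp (- A * |t|) := by
  intro A hA
  refine ⟨min (1/50) (1/(64 * A ^ 2)), lt_min (by norm_num) (by positivity), ?_⟩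
  intro t ht0 htδ
  have h50 : |t| < 1/50 := lt_of_lt_of_le htδ (min_le_left _ _)
  have hA2 : |t| < 1/(64 * A ^ 2) := lt_of_lt_of_le htδ (min_le_right _ _)
  have hπ := Real.pi_gt_three
  have habs := abs_lt.mp h50
  have hc : Real.cos t ^ 2 + Real.sin t ^ 2 = 1 := by
    rw [add_comm]; exact Real.sin_sq_add_cos_sq t
  have htne : t ≠ 0 := by
    intro h; rw [h] at ht0; simp at ht0
  have hs : Real.sin t ≠ 0 := by
    intro h
    exact htne ((Real.sin_eq_zero_iff_of_lt_of_lt (by linarith : -Real.pi < t)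
      (by linarith : t < Real.pi)).mp h)
  have hsabs : |Real.sin t| ≤ |t| := Real.abs_sin_le_abs
  have hsmall : |Real.sin t| ≤ 1/50 := le_trans hsabs h50.le
  -- |t|/2 ≤ |sin t|
  have habs_eq : |Real.sin t| = Real.sin |t| := by
    rcases le_or_gt 0 t with h | h
    · rw [abs_of_nonneg h, abs_of_nonneg]
      exact Real.sin_nonneg_of_nonneg_of_le_pi h (by linarith)
    · have hnp : Real.sin t ≤ 0 := by
        have h2 : 0 ≤ Real.sin (-t) :=
          Real.sin_nonneg_of_nonneg_of_le_pi (by linarith) (by linarith)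
        rw [Real.sin_neg] at h2; linarith
      rw [abs_of_neg h, Real.sin_neg, abs_of_nonpos hnp]
  have hhalf : |t| / 2 ≤ |Real.sin t| := by
    rw [habs_eq]
    have h1 : |t| ≤ 1 := by linarith
    have h2 := Real.sin_gt_sub_cube ht0
    have h4 : |t| ^ 2 ≤ 1 := by nlinarith [abs_nonneg t]
    have h3 : |t| ^ 3 ≤ |t| := by nlinarith [abs_nonneg t, h4]
    linarith
  -- main bound
  have hWVle : ∫ x : ℝ × ℝ, Wf x * Vf (Real.cos t) (Real.sin t) x
      ≤ Real.pi - Real.sqrt (|Real.sin t| / 2) := by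
    have h1 := WV_integral_eq (Real.cos t) hc hs
    have h2 := Vsq_int_le (Real.cos t) hc hs
    have h3 := I2_lower (Real.cos t) hc hs hsmall
    rw [h1, Wsq_integral]
    linarith
  have hFt : F t = (1 / Real.pi) * ∫ x : ℝ × ℝ, Wf x * Vf (Real.cos t) (Real.sin t) x := by
    rw [hF]
    simp only []
    rw [integrand_eq t]
  -- numeric conclusion
  have hsq : Real.sqrt (|t|) / 2 ≤ Real.sqrt (|Real.sin t| / 2) := by
    have h1 : |t| / 4 ≤ |Real.sin t| / 2 := by linarith
    have h2 := Real.sqrt_le_sqrt h1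
    have h3 : Real.sqrt (|t| / 4) = Real.sqrt (|t|) / 2 := by
      rw [show |t| / 4 = |t| * (1/2) ^ 2 by ring, Real.sqrt_mul (abs_nonneg t),
        Real.sqrt_sq (by norm_num : (0:ℝ) ≤ 1/2)]
      ring
    rw [h3] at h2; exact h2
  have hr2 : (Real.sqrt |t|) ^ 2 = |t| := Real.sq_sqrt (abs_nonneg t)
  have hrpos : 0 < Real.sqrt |t| := Real.sqrt_pos.mpr ht0
  have hAr : A * Real.sqrt |t| ≤ 1/8 := by
    have h1 : A ^ 2 * |t| < 1/64 := by
      rw [lt_div_iff₀ (by positivity)] at hA2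
      calc A ^ 2 * |t| = |t| * (64 * A ^ 2) / 64 := by ring
        _ < 1 / 64 := by linarith
    nlinarith [mul_nonneg hA.le hrpos.le]
  have hkey : A * |t| ≤ Real.sqrt (|Real.sin t| / 2) / Real.pi := by
    rw [le_div_iff₀ Real.pi_pos]
    have h1 : A * |t| * Real.pi ≤ A * |t| * 4 := by
      have : 0 ≤ A * |t| := by positivity
      nlinarith [Real.pi_le_four]
    have hr2' : Real.sqrt |t| * Real.sqrt |t| = |t| := Real.mul_self_sqrt (abs_nonneg t)
    have h2 : A * |t| * 4 ≤ Real.sqrt |t| / 2 := by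
      have h21 := mul_le_mul_of_nonneg_right hAr hrpos.le
      nlinarith [h21, hr2']
    linarith [hsq]
  have hexp : 1 - A * |t| ≤ Real.exp (- A * |t|) := by
    have := Real.add_one_le_exp (- A * |t|)
    linarith
  rw [hFt]
  have hπpos := Real.pi_pos
  calc (1 / Real.pi) * ∫ x : ℝ × ℝ, Wf x * Vf (Real.cos t) (Real.sin t) x
      ≤ (1 / Real.pi) * (Real.pi - Real.sqrt (|Real.sin t| / 2)) := by
        exact mul_le_mul_of_nonneg_left hWVle (by positivity)
    _ = 1 - Real.sqrt (|Real.sin t| / 2) / Real.pi := by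
        field_simp
    _ ≤ 1 - A * |t| := by linarith [hkey]
    _ ≤ Real.exp (- A * |t|) := hexp
end

section
/- Let g > 0 satisfy 2√2·g ≤ 1. Then the two-dimensional Lebesgue measure of the set {(q,p) ∈ ℝ² : q ≠ 0 and p² + q² + 2g²/q² ≤ 1} equals π·(1 - 2√2·g). -/
open MeasureTheory Set
open scoped ENNReal

lemma lintegral_image_eq_lintegral_abs_deriv_mul' {s : Set ℝ} {f : ℝ → ℝ} {f' : ℝ → ℝ}
    (hs : MeasurableSet s) (hf' : ∀ x ∈ s, HasDerivWithinAt f (f' x) s x)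
    (hf : Set.InjOn f s) (g : ℝ → ℝ≥0∞) :
    ∫⁻ x in f '' s, g x = ∫⁻ x in s, ENNReal.ofReal |f' x| * g (f x) := by
  simpa only [ContinuousLinearMap.det_toSpanSingleton] using
    lintegral_image_eq_lintegral_abs_det_fderiv_mul volume hs
      (fun x hx => (hf' x hx).hasFDerivWithinAt) hf g

lemma vol_sq_le (c : ℝ) : volume {p : ℝ | p ^ 2 ≤ c} = ENNReal.ofReal (2 * Real.sqrt c) := by
  by_cases hc : 0 ≤ c
  · have h : {p : ℝ | p ^ 2 ≤ c} = Icc (-Real.sqrt c) (Real.sqrt c) := by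
      ext p
      simp only [mem_setOf_eq, mem_Icc, ← abs_le]
      constructor
      · exact Real.abs_le_sqrt
      · intro h
        nlinarith [Real.sq_sqrt hc, sq_abs p, abs_nonneg p]
    rw [h, Real.volume_Icc]
    ring_nf
  · have h : {p : ℝ | p ^ 2 ≤ c} = ∅ := by
      ext p; simp only [mem_setOf_eq, mem_empty_iff_false, iff_false]
      nlinarith [sq_nonneg p]
    rw [h, Real.sqrt_eq_zero'.mpr (le_of_lt (not_le.1 hc))]
    simp

lemma disk_integral {R : ℝ} (hR0 : 0 ≤ R) (hR1 : R ≤ 1) :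
    ∫ u : ℝ, 2 * Real.sqrt (R - u ^ 2) = Real.pi * R := by
  rcases hR0.eq_or_lt with h0 | h0
  · have h1 : ∀ u : ℝ, 2 * Real.sqrt (R - u ^ 2) = 0 := by
      intro u
      rw [Real.sqrt_eq_zero'.mpr (by nlinarith [sq_nonneg u])]
      ring
    simp only [h1, integral_zero]
    rw [← h0, mul_zero]
  · set r := Real.sqrt R with hr_def
    have hr : 0 < r := Real.sqrt_pos.mpr h0
    have hr2 : r ^ 2 = R := Real.sq_sqrt hR0
    have hzero : ∀ u : ℝ, u ∉ Icc (-r) r → 2 * Real.sqrt (R - u ^ 2) = 0 := by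
      intro u hu
      rw [mem_Icc, not_and_or, not_le, not_le] at hu
      have h2 : R - u ^ 2 ≤ 0 := by
        rcases hu with hu | hu
        · nlinarith
        · nlinarith
      rw [Real.sqrt_eq_zero'.mpr h2]; ring
    rw [← setIntegral_eq_integral_of_ae_compl_eq_zero
        (Filter.Eventually.of_forall hzero)]
    rw [integral_Icc_eq_integral_Ioc, ← intervalIntegral.integral_of_le (by linarith)]
    have hsub : (∫ x in (-1 : ℝ)..1, r • ((fun u => 2 * Real.sqrt (R - u ^ 2)) ∘ fun x => r * x) x)
        = ∫ u in (r * (-1))..(r * 1), 2 * Real.sqrt (R - u ^ 2) := by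
      apply intervalIntegral.integral_comp_smul_deriv (f := fun x => r * x) (f' := fun _ => r)
      · intro x _
        simpa using (hasDerivAt_id x).const_mul r
      · exact continuousOn_const
      · have h3 : Continuous fun u : ℝ => R - u ^ 2 := by continuity
        exact continuous_const.mul h3.sqrt
    rw [mul_neg_one, mul_one] at hsub
    rw [← hsub]
    have heq : ∀ x : ℝ, r • ((fun u => 2 * Real.sqrt (R - u ^ 2)) ∘ fun x => r * x) x
        = (2 * R) * Real.sqrt (1 - x ^ 2) := by
      intro x
      have h4 : R - (r * x) ^ 2 = r ^ 2 * (1 - x ^ 2) := by linear_combination -hr2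
      simp only [Function.comp_apply, smul_eq_mul, h4]
      rw [Real.sqrt_mul (sq_nonneg r), Real.sqrt_sq hr.le]
      nlinarith [Real.sqrt_nonneg (1 - x ^ 2)]
    simp only [heq]
    rw [intervalIntegral.integral_const_mul, integral_sqrt_one_sub_sq]
    ring

section COV
variable {a : ℝ}

lemma sqrt_gt_abs (ha : 0 < a) (u : ℝ) : |u| < Real.sqrt (u ^ 2 + 4 * a) := by
  rw [← Real.sqrt_sq_eq_abs]
  exact Real.sqrt_lt_sqrt (sq_nonneg u) (by linarith)

lemma sqrt_pos' (ha : 0 < a) (u : ℝ) : 0 < Real.sqrt (u ^ 2 + 4 * a) :=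
  (abs_nonneg u).trans_lt (sqrt_gt_abs ha u)

lemma sq_sqrt' (ha : 0 < a) (u : ℝ) : Real.sqrt (u ^ 2 + 4 * a) ^ 2 = u ^ 2 + 4 * a :=
  Real.sq_sqrt (by positivity)

lemma hasDerivAt_qp (ha : 0 < a) (u : ℝ) :
    HasDerivAt (fun u : ℝ => (u + Real.sqrt (u ^ 2 + 4 * a)) / 2)
      ((1 + u / Real.sqrt (u ^ 2 + 4 * a)) / 2) u := by
  have hs := sqrt_pos' ha u
  have hinner : HasDerivAt (fun u : ℝ => u ^ 2 + 4 * a) (2 * u) u := by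
    simpa using (hasDerivAt_pow 2 u).add_const (4 * a)
  have hsqrt : HasDerivAt (fun u : ℝ => Real.sqrt (u ^ 2 + 4 * a))
      (1 / (2 * Real.sqrt (u ^ 2 + 4 * a)) * (2 * u)) u :=
    (Real.hasDerivAt_sqrt (by positivity)).comp u hinner
  have h := ((hasDerivAt_id u).add hsqrt).div_const 2
  refine h.congr_deriv ?_
  field_simp

lemma hasDerivAt_qm (ha : 0 < a) (u : ℝ) :
    HasDerivAt (fun u : ℝ => (u - Real.sqrt (u ^ 2 + 4 * a)) / 2)
      ((1 - u / Real.sqrt (u ^ 2 + 4 * a)) / 2) u := by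
  have hs := sqrt_pos' ha u
  have hinner : HasDerivAt (fun u : ℝ => u ^ 2 + 4 * a) (2 * u) u := by
    simpa using (hasDerivAt_pow 2 u).add_const (4 * a)
  have hsqrt : HasDerivAt (fun u : ℝ => Real.sqrt (u ^ 2 + 4 * a))
      (1 / (2 * Real.sqrt (u ^ 2 + 4 * a)) * (2 * u)) u :=
    (Real.hasDerivAt_sqrt (by positivity)).comp u hinner
  have h := ((hasDerivAt_id u).sub hsqrt).div_const 2
  refine h.congr_deriv ?_
  field_simp

lemma qp_pos (ha : 0 < a) (u : ℝ) : 0 < (u + Real.sqrt (u ^ 2 + 4 * a)) / 2 := by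
  have h := sqrt_gt_abs ha u
  have := neg_abs_le u
  linarith

lemma qm_neg (ha : 0 < a) (u : ℝ) : (u - Real.sqrt (u ^ 2 + 4 * a)) / 2 < 0 := by
  have h := sqrt_gt_abs ha u
  have := le_abs_self u
  linarith

lemma qp_root (ha : 0 < a) (u : ℝ) :
    ((u + Real.sqrt (u ^ 2 + 4 * a)) / 2) ^ 2
      - u * ((u + Real.sqrt (u ^ 2 + 4 * a)) / 2) - a = 0 := by
  linear_combination (sq_sqrt' ha u) / 4

lemma qm_root (ha : 0 < a) (u : ℝ) :
    ((u - Real.sqrt (u ^ 2 + 4 * a)) / 2) ^ 2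
      - u * ((u - Real.sqrt (u ^ 2 + 4 * a)) / 2) - a = 0 := by
  linear_combination (sq_sqrt' ha u) / 4

lemma dp_pos (ha : 0 < a) (u : ℝ) : 0 < (1 + u / Real.sqrt (u ^ 2 + 4 * a)) / 2 := by
  have hs := sqrt_pos' ha u
  have h := sqrt_gt_abs ha u
  have h2 := neg_abs_le u
  have : -1 < u / Real.sqrt (u ^ 2 + 4 * a) := by
    rw [lt_div_iff₀ hs]
    linarith
  linarith

lemma dm_pos (ha : 0 < a) (u : ℝ) : 0 < (1 - u / Real.sqrt (u ^ 2 + 4 * a)) / 2 := by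
  have hs := sqrt_pos' ha u
  have h := sqrt_gt_abs ha u
  have h2 := le_abs_self u
  have : u / Real.sqrt (u ^ 2 + 4 * a) < 1 := by
    rw [div_lt_iff₀ hs]
    linarith
  linarith

lemma image_qp (ha : 0 < a) :
    (fun u : ℝ => (u + Real.sqrt (u ^ 2 + 4 * a)) / 2) '' univ = Ioi 0 := by
  apply Subset.antisymm
  · rintro q ⟨u, -, rfl⟩
    exact qp_pos ha u
  · rintro q (hq : 0 < q)
    refine ⟨q - a / q, mem_univ _, ?_⟩
    have hq0 : q ≠ 0 := ne_of_gt hq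
    have key : (q - a / q) ^ 2 + 4 * a = (q + a / q) ^ 2 := by
      field_simp
      ring
    have hpos : 0 < q + a / q := by
      have := div_pos ha hq
      linarith
    show ((q - a / q) + Real.sqrt ((q - a / q) ^ 2 + 4 * a)) / 2 = q
    rw [key, Real.sqrt_sq hpos.le]
    field_simp
    ring

lemma image_qm (ha : 0 < a) :
    (fun u : ℝ => (u - Real.sqrt (u ^ 2 + 4 * a)) / 2) '' univ = Iio 0 := by
  apply Subset.antisymm
  · rintro q ⟨u, -, rfl⟩
    exact qm_neg ha u
  · rintro q (hq : q < 0)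
    refine ⟨q - a / q, mem_univ _, ?_⟩
    have hq0 : q ≠ 0 := ne_of_lt hq
    have key : (q - a / q) ^ 2 + 4 * a = (q + a / q) ^ 2 := by
      field_simp
      ring
    have hneg : q + a / q ≤ 0 := by
      have := div_neg_of_pos_of_neg ha hq
      linarith
    show ((q - a / q) - Real.sqrt ((q - a / q) ^ 2 + 4 * a)) / 2 = q
    rw [key, Real.sqrt_sq_eq_abs, abs_of_nonpos hneg]
    field_simp
    ring

lemma injOn_qp (ha : 0 < a) :
    Set.InjOn (fun u : ℝ => (u + Real.sqrt (u ^ 2 + 4 * a)) / 2) univ := by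
  intro u1 _ u2 _ h
  have h1 := qp_root ha u1
  have h2 := qp_root ha u2
  have hpos := qp_pos ha u1
  simp only at h
  rw [h] at h1 hpos
  have : (u1 - u2) * ((u2 + Real.sqrt (u2 ^ 2 + 4 * a)) / 2) = 0 := by
    linear_combination h2 - h1
  rcases mul_eq_zero.mp this with h3 | h3
  · linarith
  · exact absurd h3 (ne_of_gt hpos)

lemma injOn_qm (ha : 0 < a) :
    Set.InjOn (fun u : ℝ => (u - Real.sqrt (u ^ 2 + 4 * a)) / 2) univ := by
  intro u1 _ u2 _ h
  have h1 := qm_root ha u1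
  have h2 := qm_root ha u2
  have hneg := qm_neg ha u1
  simp only at h
  rw [h] at h1 hneg
  have : (u1 - u2) * ((u2 - Real.sqrt (u2 ^ 2 + 4 * a)) / 2) = 0 := by
    linear_combination h2 - h1
  rcases mul_eq_zero.mp this with h3 | h3
  · linarith
  · exact absurd h3 (ne_of_lt hneg)

lemma cov_pos (ha : 0 < a) (F : ℝ → ℝ≥0∞) :
    ∫⁻ q in Ioi (0 : ℝ), F q
      = ∫⁻ u : ℝ, ENNReal.ofReal ((1 + u / Real.sqrt (u ^ 2 + 4 * a)) / 2)
          * F ((u + Real.sqrt (u ^ 2 + 4 * a)) / 2) := by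
  rw [← image_qp ha,
    lintegral_image_eq_lintegral_abs_deriv_mul' MeasurableSet.univ
      (fun x _ => (hasDerivAt_qp ha x).hasDerivWithinAt) (injOn_qp ha) F]
  rw [setLIntegral_univ]
  refine lintegral_congr fun u => ?_
  rw [abs_of_pos (dp_pos ha u)]

lemma cov_neg (ha : 0 < a) (F : ℝ → ℝ≥0∞) :
    ∫⁻ q in Iio (0 : ℝ), F q
      = ∫⁻ u : ℝ, ENNReal.ofReal ((1 - u / Real.sqrt (u ^ 2 + 4 * a)) / 2)
          * F ((u - Real.sqrt (u ^ 2 + 4 * a)) / 2) := by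
  rw [← image_qm ha,
    lintegral_image_eq_lintegral_abs_deriv_mul' MeasurableSet.univ
      (fun x _ => (hasDerivAt_qm ha x).hasDerivWithinAt) (injOn_qm ha) F]
  rw [setLIntegral_univ]
  refine lintegral_congr fun u => ?_
  rw [abs_of_pos (dm_pos ha u)]

end COV

lemma key_id (g : ℝ) (u q : ℝ) (hq : q ≠ 0)
    (hroot : q ^ 2 - u * q - Real.sqrt 2 * g = 0) :
    1 - q ^ 2 - 2 * g ^ 2 / q ^ 2 = (1 - 2 * Real.sqrt 2 * g) - u ^ 2 := by
  have h2 : (Real.sqrt 2 : ℝ) ^ 2 = 2 := Real.sq_sqrt (by norm_num)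
  have ha' : 2 * g ^ 2 / q ^ 2 = (q - u) ^ 2 := by
    have hqu : Real.sqrt 2 * g = q * (q - u) := by linear_combination -hroot
    calc 2 * g ^ 2 / q ^ 2 = (Real.sqrt 2 * g) ^ 2 / q ^ 2 := by
          rw [mul_pow, h2]
      _ = (q * (q - u)) ^ 2 / q ^ 2 := by rw [hqu]
      _ = (q - u) ^ 2 := by
          rw [mul_pow]
          field_simp
  rw [ha']
  linear_combination -2 * hroot

lemma key_id' (g a : ℝ) (hag : a = Real.sqrt 2 * g) (u q : ℝ) (hq : q ≠ 0)
    (hroot : q ^ 2 - u * q - a = 0) :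
    1 - q ^ 2 - 2 * g ^ 2 / q ^ 2 = (1 - 2 * Real.sqrt 2 * g) - u ^ 2 := by
  subst hag
  exact key_id g u q hq hroot

/-- Key area computation in Proposition 4.3(ii): the area of the sublevel set
`{p² + q² + 2g²/q² ≤ 1}` equals `π(1 - 2√2 g)`. -/
theorem area_sublevel_set (g : ℝ) (hg : 0 < g) (hg' : 2 * Real.sqrt 2 * g ≤ 1) :
    (volume {x : ℝ × ℝ | x.1 ≠ 0 ∧
        x.2 ^ 2 + x.1 ^ 2 + 2 * g ^ 2 / x.1 ^ 2 ≤ 1}).toReal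
      = Real.pi * (1 - 2 * Real.sqrt 2 * g) := by
  have sqrt2_pos : (0 : ℝ) < Real.sqrt 2 := Real.sqrt_pos.mpr (by norm_num)
  set a : ℝ := Real.sqrt 2 * g with ha_def
  have ha : 0 < a := mul_pos sqrt2_pos hg
  set R : ℝ := 1 - 2 * Real.sqrt 2 * g with hR_def
  have hR0 : 0 ≤ R := by rw [hR_def]; linarith
  have hR1 : R ≤ 1 := by rw [hR_def]; nlinarith
  set S := {x : ℝ × ℝ | x.1 ≠ 0 ∧ x.2 ^ 2 + x.1 ^ 2 + 2 * g ^ 2 / x.1 ^ 2 ≤ 1}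
    with hS_def
  -- measurability
  have hS : MeasurableSet S := by
    have hmeas : Measurable fun x : ℝ × ℝ => x.2 ^ 2 + x.1 ^ 2 + 2 * g ^ 2 / x.1 ^ 2 :=
      ((measurable_snd.pow_const 2).add (measurable_fst.pow_const 2)).add
        (measurable_const.div (measurable_fst.pow_const 2))
    exact MeasurableSet.inter (measurable_fst (measurableSet_singleton (0 : ℝ)).compl)
      (measurableSet_le hmeas measurable_const)
  -- the fiber function
  set F : ℝ → ℝ≥0∞ :=
    fun q => ENNReal.ofReal (2 * Real.sqrt (1 - q ^ 2 - 2 * g ^ 2 / q ^ 2)) with hF_def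
  set A : ℝ → ℝ≥0∞ := fun u => ENNReal.ofReal (2 * Real.sqrt (R - u ^ 2)) with hA_def
  -- Fubini
  have hvol : volume S = ∫⁻ q : ℝ, volume (Prod.mk q ⁻¹' S) := by
    rw [Measure.volume_eq_prod, Measure.prod_apply hS]
  -- fiber computation
  have hsec : ∀ q : ℝ, q ≠ 0 → volume (Prod.mk q ⁻¹' S) = F q := by
    intro q hq
    have hset : Prod.mk q ⁻¹' S = {p : ℝ | p ^ 2 ≤ 1 - q ^ 2 - 2 * g ^ 2 / q ^ 2} := by
      ext p
      simp only [hS_def, mem_preimage, mem_setOf_eq]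
      constructor
      · rintro ⟨-, h⟩; linarith
      · intro h; exact ⟨hq, by linarith⟩
    rw [hset, vol_sq_le, hF_def]
  have step1 : volume S = ∫⁻ q : ℝ, F q := by
    rw [hvol]
    apply lintegral_congr_ae
    have h0 : ∀ᵐ q : ℝ ∂(volume : Measure ℝ), q ≠ 0 :=
      compl_mem_ae_iff.mpr (measure_singleton 0)
    filter_upwards [h0] with q hq
    exact hsec q hq
  have step2 : ∫⁻ q : ℝ, F q = (∫⁻ q in Iio (0 : ℝ), F q) + ∫⁻ q in Ioi (0 : ℝ), F q := by
    rw [← setLIntegral_univ F, ← lintegral_union measurableSet_Ioi ((Iic_disjoint_Ioi le_rfl).mono_left Iio_subset_Iic_self)]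
    apply setLIntegral_congr
    rw [Iio_union_Ioi]
    exact (ae_eq_univ.mpr (by rw [compl_compl]; exact measure_singleton 0)).symm
  -- pointwise identities after the change of variables
  have hFqp : ∀ u : ℝ, F ((u + Real.sqrt (u ^ 2 + 4 * a)) / 2) = A u := by
    intro u
    have hq := qp_pos ha u
    have hkey := key_id' g a ha_def u _ (ne_of_gt hq) (qp_root ha u)
    simp only [hF_def, hA_def]
    rw [hkey, ← hR_def]
  have hFqm : ∀ u : ℝ, F ((u - Real.sqrt (u ^ 2 + 4 * a)) / 2) = A u := by
    intro u
    have hq := qm_neg ha u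
    have hkey := key_id' g a ha_def u _ (ne_of_lt hq) (qm_root ha u)
    simp only [hF_def, hA_def]
    rw [hkey, ← hR_def]
  have step3 : (∫⁻ q in Iio (0 : ℝ), F q) + ∫⁻ q in Ioi (0 : ℝ), F q = ∫⁻ u : ℝ, A u := by
    rw [cov_pos ha F, cov_neg ha F]
    simp only [hFqp, hFqm]
    have hc : Continuous fun u : ℝ => u / Real.sqrt (u ^ 2 + 4 * a) := by
      apply continuous_id.div (Real.continuous_sqrt.comp ((continuous_pow 2).add continuous_const))
      exact fun u => ne_of_gt (sqrt_pos' ha u)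
    have hA_meas : Measurable A := by
      rw [hA_def]
      exact (continuous_const.mul
        (Real.continuous_sqrt.comp (continuous_const.sub (continuous_pow 2)))).measurable.ennreal_ofReal
    have hm : Measurable fun u : ℝ =>
        ENNReal.ofReal ((1 - u / Real.sqrt (u ^ 2 + 4 * a)) / 2) * A u :=
      (((continuous_const.sub hc).div_const 2).measurable.ennreal_ofReal).mul hA_meas
    rw [← lintegral_add_left hm]
    refine lintegral_congr fun u => ?_
    rw [← add_mul, ← ENNReal.ofReal_add (le_of_lt (dm_pos ha u)) (le_of_lt (dp_pos ha u))]
    have h1 : (1 - u / Real.sqrt (u ^ 2 + 4 * a)) / 2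
        + (1 + u / Real.sqrt (u ^ 2 + 4 * a)) / 2 = 1 := by ring
    rw [h1, ENNReal.ofReal_one, one_mul]
  have hint : Integrable fun u : ℝ => 2 * Real.sqrt (R - u ^ 2) := by
    have hcont : Continuous fun u : ℝ => 2 * Real.sqrt (R - u ^ 2) :=
      continuous_const.mul (Real.continuous_sqrt.comp (continuous_const.sub (continuous_pow 2)))
    apply hcont.integrable_of_hasCompactSupport
    apply HasCompactSupport.intro (isCompact_Icc (a := (-1 : ℝ)) (b := 1))
    intro x hx
    rw [mem_Icc, not_and_or, not_le, not_le] at hx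
    have h2 : R - x ^ 2 ≤ 0 := by
      rcases hx with hx | hx
      · nlinarith
      · nlinarith
    rw [Real.sqrt_eq_zero'.mpr h2, mul_zero]
  have step4 : ∫⁻ u : ℝ, A u = ENNReal.ofReal (Real.pi * R) := by
    rw [hA_def, ← disk_integral hR0 hR1]
    exact (ofReal_integral_eq_lintegral_ofReal hint
      (Filter.Eventually.of_forall fun u => by positivity)).symm
  rw [step1, step2, step3, step4, ENNReal.toReal_ofReal (mul_nonneg Real.pi_pos.le hR0)]
end

section
/- Let g > 0. For t, q ≠ 0, p real, set Y² := (q·cosh t + p·sinh t)² + 2g²·sinh²t/q², and define G_C(t,g) := (1/π) ∫_{ℝ²} exp( -(1/2)·[ (q·cosh t + p·sinh t)² + (q·sinh t + p·cosh t)² + 2Y² + p² - q² + 2g²/q² - 2g²/Y² ] ) dq dp, with the integrand taken to be 0 on the line q = 0. Then G_C(t,g) ≥ e^{-2g} for every real t. -/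
open MeasureTheory Real Set

lemma glasser_image {c : ℝ} (hc : 0 < c) :
    (fun x : ℝ => x - c / x) '' (Ioi 0) = univ := by
  ext y
  simp only [mem_image, mem_univ, iff_true, mem_Ioi]
  have hr : Real.sqrt (y^2+4*c) ^ 2 = y^2 + 4*c := Real.sq_sqrt (by positivity)
  have h1 : |y| < Real.sqrt (y^2+4*c) := by
    rw [← Real.sqrt_sq_eq_abs]
    exact Real.sqrt_lt_sqrt (sq_nonneg y) (by linarith)
  have hx : 0 < (y + Real.sqrt (y^2+4*c)) / 2 := by
    have := neg_abs_le y; linarith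
  refine ⟨(y + Real.sqrt (y^2+4*c)) / 2, hx, ?_⟩
  have hd : c / ((y + Real.sqrt (y^2+4*c)) / 2) = (Real.sqrt (y^2+4*c) - y)/2 := by
    rw [div_eq_iff hx.ne']
    linear_combination -hr / 4
  simp only [hd]
  ring

lemma glasser_mono {c : ℝ} (hc : 0 < c) :
    StrictMonoOn (fun x : ℝ => x - c / x) (Ioi 0) := by
  intro a ha b hb hab
  have h2 : c / b < c / a := div_lt_div_of_pos_left hc ha hab
  simp only
  linarith

lemma glasser_deriv {c : ℝ} (hc : 0 < c) {x : ℝ} (hx : x ∈ Ioi (0:ℝ)) :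
    HasDerivWithinAt (fun x : ℝ => x - c / x) (1 + c / x^2) (Ioi 0) x := by
  have hx0 : x ≠ 0 := ne_of_gt hx
  have h := (hasDerivAt_id x).sub ((hasDerivAt_inv hx0).const_mul c)
  have : (fun x : ℝ => x - c / x) = fun x : ℝ => id x - c * x⁻¹ := by
    funext z; simp [div_eq_mul_inv]
  rw [this]
  exact h.hasDerivWithinAt.congr_deriv (by ring)

lemma glasser_sqrtpi {c : ℝ} (hc : 0 < c) :
    ∫ x in Ioi (0:ℝ), (1 + c/x^2) * Real.exp (-(x - c/x)^2) = Real.sqrt π := by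
  have h := integral_image_eq_integral_abs_deriv_smul (f := fun x : ℝ => x - c / x)
    (f' := fun x => 1 + c / x^2) measurableSet_Ioi (fun x hx => glasser_deriv hc hx)
    ((glasser_mono hc).injOn) (fun y => Real.exp (-y^2))
  rw [glasser_image hc, Measure.restrict_univ] at h
  have h2 : ∫ y : ℝ, Real.exp (-y^2) = Real.sqrt π := by
    simpa using integral_gaussian 1
  have h3 : ∫ x in Ioi (0:ℝ), (1 + c/x^2) * Real.exp (-(x - c/x)^2)
      = ∫ x in Ioi (0:ℝ), |1 + c/x^2| • Real.exp (-(x - c/x)^2) := by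
    refine setIntegral_congr_fun measurableSet_Ioi (fun x hx => ?_)
    have hx0 : (0:ℝ) < x := hx
    rw [smul_eq_mul, abs_of_pos (by positivity)]
  rw [h3, ← h]
  exact h2

lemma glasser_integrable {c : ℝ} (hc : 0 < c) :
    IntegrableOn (fun x : ℝ => (1 + c/x^2) * Real.exp (-(x - c/x)^2)) (Ioi 0) := by
  have h := (integrableOn_image_iff_integrableOn_abs_deriv_smul (f := fun x : ℝ => x - c / x)
    (f' := fun x => 1 + c / x^2) measurableSet_Ioi (fun x hx => glasser_deriv hc hx)
    ((glasser_mono hc).injOn) (fun y => Real.exp (-y^2))).mp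
  rw [glasser_image hc] at h
  have h2 : IntegrableOn (fun y : ℝ => Real.exp (-y^2)) univ := by
    rw [integrableOn_univ]
    simpa using integrable_exp_neg_mul_sq (b := 1) one_pos
  refine ((h h2).congr_fun (fun x hx => ?_) measurableSet_Ioi)
  have hx0 : (0:ℝ) < x := hx
  beta_reduce; rw [smul_eq_mul, abs_of_pos (by positivity)]

lemma glasser_flip_deriv {c : ℝ} (hc : 0 < c) {x : ℝ} (hx : x ∈ Ioi (0:ℝ)) :
    HasDerivWithinAt (fun x : ℝ => c / x) (-(c / x^2)) (Ioi 0) x := by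
  have hx0 : x ≠ 0 := ne_of_gt hx
  have h := (hasDerivAt_inv hx0).const_mul c
  have : (fun x : ℝ => c / x) = fun x : ℝ => c * x⁻¹ := by
    funext z; simp [div_eq_mul_inv]
  rw [this]
  exact h.hasDerivWithinAt.congr_deriv (by ring)

lemma glasser_flip_image {c : ℝ} (hc : 0 < c) :
    (fun x : ℝ => c / x) '' (Ioi 0) = Ioi 0 := by
  ext y
  simp only [mem_image, mem_Ioi]
  constructor
  · rintro ⟨x, hx, rfl⟩; positivity
  · intro hy; exact ⟨c / y, by positivity, by field_simp⟩

lemma glasser_flip_inj {c : ℝ} (hc : 0 < c) : Set.InjOn (fun x : ℝ => c / x) (Ioi 0) := by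
  intro a ha b hb hab
  simp only [div_eq_div_iff (ne_of_gt ha) (ne_of_gt (show (0:ℝ) < b from hb))] at hab
  exact (mul_left_cancel₀ (ne_of_gt hc) hab).symm

lemma glasser_flip {c : ℝ} (hc : 0 < c) :
    ∫ x in Ioi (0:ℝ), (c/x^2) * Real.exp (-(x - c/x)^2)
      = ∫ x in Ioi (0:ℝ), Real.exp (-(x - c/x)^2) := by
  have h := integral_image_eq_integral_abs_deriv_smul (f := fun x : ℝ => c / x)
    (f' := fun x => -(c / x^2)) measurableSet_Ioi (fun x hx => glasser_flip_deriv hc hx)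
    (glasser_flip_inj hc) (fun y => Real.exp (-(y - c/y)^2))
  rw [glasser_flip_image hc] at h
  have h2 : ∫ x in Ioi (0:ℝ), (c/x^2) * Real.exp (-(x - c/x)^2)
      = ∫ x in Ioi (0:ℝ), |(-(c / x^2))| • Real.exp (-(c/x - c/(c/x))^2) := by
    refine setIntegral_congr_fun measurableSet_Ioi (fun x hx => ?_)
    have hx0 : (0:ℝ) < x := hx
    have hcx : c / (c / x) = x := by field_simp
    rw [smul_eq_mul, abs_neg, abs_of_pos (by positivity), hcx]
    congr 1
    ring
  rw [h2, ← h]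

lemma glasser_emeas {c : ℝ} : Measurable (fun x : ℝ => Real.exp (-(x - c/x)^2)) :=
  Real.measurable_exp.comp (((measurable_id.sub (measurable_const.div measurable_id)).pow_const 2).neg)

lemma glasser_J {c : ℝ} (hc : 0 < c) :
    ∫ x in Ioi (0:ℝ), Real.exp (-(x - c/x)^2) = Real.sqrt π / 2 := by
  have hb : ∀ x : ℝ, x ∈ Ioi (0:ℝ) →
      Real.exp (-(x - c/x)^2) ≤ (1 + c/x^2) * Real.exp (-(x - c/x)^2) := by
    intro x hx
    have hx0 : (0:ℝ) < x := hx
    nlinarith [Real.exp_pos (-(x - c/x)^2), div_nonneg hc.le (sq_nonneg x)]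
  have h1 : IntegrableOn (fun x : ℝ => Real.exp (-(x - c/x)^2)) (Ioi 0) := by
    refine (glasser_integrable hc).mono' glasser_emeas.aestronglyMeasurable ?_
    rw [ae_restrict_iff' measurableSet_Ioi]
    filter_upwards with x hx
    rw [Real.norm_eq_abs, abs_of_pos (Real.exp_pos _)]
    exact hb x hx
  have h2 : IntegrableOn (fun x : ℝ => (c/x^2) * Real.exp (-(x - c/x)^2)) (Ioi 0) := by
    refine (glasser_integrable hc).mono' ?_ ?_
    · exact ((measurable_const.div (measurable_id.pow_const 2)).mul glasser_emeas).aestronglyMeasurable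
    · rw [ae_restrict_iff' measurableSet_Ioi]
      filter_upwards with x hx
      have hx0 : (0:ℝ) < x := hx
      rw [Real.norm_eq_abs, abs_of_nonneg (by positivity)]
      nlinarith [Real.exp_pos (-(x - c/x)^2)]
  have hsplit : ∫ x in Ioi (0:ℝ), (1 + c/x^2) * Real.exp (-(x - c/x)^2)
      = (∫ x in Ioi (0:ℝ), Real.exp (-(x - c/x)^2))
        + ∫ x in Ioi (0:ℝ), (c/x^2) * Real.exp (-(x - c/x)^2) := by
    rw [← integral_add h1 h2]
    refine setIntegral_congr_fun measurableSet_Ioi (fun x hx => ?_)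
    ring
  have hval := glasser_sqrtpi hc
  rw [hsplit, glasser_flip hc] at hval
  linarith

lemma glasser_line {c : ℝ} (hc : 0 < c) :
    ∫ x : ℝ, Real.exp (-(x - c/x)^2) = Real.sqrt π := by
  have heven : (fun x : ℝ => Real.exp (-(|x| - c/|x|)^2)) = fun x => Real.exp (-(x - c/x)^2) := by
    funext x
    rcases le_or_gt 0 x with h | h
    · rw [abs_of_nonneg h]
    · rw [abs_of_neg h]
      congr 1
      rw [div_neg]
      ring
  have h := integral_comp_abs (f := fun x : ℝ => Real.exp (-(x - c/x)^2))
  rw [heven] at h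
  rw [h, glasser_J hc]
  ring

lemma glasser_core {c : ℝ} (hc : 0 < c) :
    ∫ x : ℝ, Real.exp (-(x^2 + c^2/x^2)) = Real.sqrt π * Real.exp (-(2*c)) := by
  have hae : ∀ᵐ x : ℝ, Real.exp (-(x^2 + c^2/x^2))
      = Real.exp (-(2*c)) * Real.exp (-(x - c/x)^2) := by
    have h0 : ∀ᵐ x : ℝ, x ≠ 0 := by
      refine ae_iff.mpr ?_
      simp only [ne_eq, not_not, setOf_eq_eq_singleton]
      exact measure_singleton 0
    filter_upwards [h0] with x hx
    rw [← Real.exp_add]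
    congr 1
    field_simp
    ring
  rw [integral_congr_ae hae, integral_const_mul, glasser_line hc]
  ring

lemma glasser_main {a b : ℝ} (ha : 0 < a) (hb : 0 < b) :
    ∫ x : ℝ, Real.exp (-(a*x^2 + b/x^2))
      = Real.sqrt (π/a) * Real.exp (-(2 * Real.sqrt (a*b))) := by
  set c := Real.sqrt (a*b) with hcdef
  have hc : 0 < c := Real.sqrt_pos.mpr (by positivity)
  have hc2 : c^2 = a*b := Real.sq_sqrt (by positivity)
  have hsa : Real.sqrt a ^ 2 = a := Real.sq_sqrt ha.le
  have hsa0 : (0:ℝ) < Real.sqrt a := Real.sqrt_pos.mpr ha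
  have key : (fun x : ℝ => Real.exp (-(a*x^2 + b/x^2)))
      = fun x => Real.exp (-((Real.sqrt a * x)^2 + c^2/(Real.sqrt a * x)^2)) := by
    funext x
    congr 1
    rcases eq_or_ne x 0 with rfl | hx
    · norm_num
    · rw [mul_pow, hsa, hc2]
      congr 1
      rw [mul_div_mul_left b (x^2) (ne_of_gt ha)]
  rw [key]
  have hcomp := MeasureTheory.Measure.integral_comp_mul_left
    (fun y : ℝ => Real.exp (-(y^2 + c^2/y^2))) (Real.sqrt a)
  rw [hcomp, glasser_core hc, smul_eq_mul]
  rw [abs_of_pos (by positivity : (0:ℝ) < (Real.sqrt a)⁻¹)]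
  rw [Real.sqrt_div Real.pi_nonneg]
  field_simp

lemma inner_gauss {C2 S2 : ℝ} (hC2 : 0 < C2) (hrel : C2^2 - S2^2 = 1) (q B : ℝ) :
    ∫ p : ℝ, Real.exp (-(C2*q^2 + C2*p^2 + 2*S2*q*p + B))
      = Real.sqrt (π/C2) * Real.exp (-(q^2/C2 + B)) := by
  have key : (fun p : ℝ => Real.exp (-(C2*q^2 + C2*p^2 + 2*S2*q*p + B)))
      = fun p => Real.exp (-(q^2/C2 + B)) * Real.exp (-C2 * (p + S2*q/C2)^2) := by
    funext p
    rw [← Real.exp_add]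
    congr 1
    field_simp
    ring_nf
    linear_combination (-(q^2)) * hrel
  rw [key, integral_const_mul]
  rw [integral_add_right_eq_self (fun p : ℝ => Real.exp (-C2 * p^2)) (S2*q/C2)]
  rw [integral_gaussian]
  ring

lemma key_ident (g c s q p : ℝ) (hcs : c^2 - s^2 = 1) (hq : q ≠ 0) :
    -(1/2) * ((q*c + p*s)^2 + (q*s + p*c)^2 + 2*((q*c+p*s)^2 + 2*g^2*s^2/q^2)
      + p^2 - q^2 + 2*g^2/q^2 - 2*g^2/((q*c+p*s)^2 + 2*g^2*s^2/q^2))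
    = -((c^2+s^2)*q^2 + (c^2+s^2)*p^2 + 2*(2*s*c)*q*p + (c^2+s^2)*g^2/q^2)
      + g^2/((q*c+p*s)^2 + 2*g^2*s^2/q^2) := by
  have hsplit : ∀ A WW : ℝ, -(1/2) * (A - 2*g^2/WW) = -(1/2)*A + g^2/WW := by
    intro A WW; ring
  rw [show ((q*c + p*s)^2 + (q*s + p*c)^2 + 2*((q*c+p*s)^2 + 2*g^2*s^2/q^2)
      + p^2 - q^2 + 2*g^2/q^2 - 2*g^2/((q*c+p*s)^2 + 2*g^2*s^2/q^2))
    = (((q*c + p*s)^2 + (q*s + p*c)^2 + 2*((q*c+p*s)^2 + 2*g^2*s^2/q^2)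
      + p^2 - q^2 + 2*g^2/q^2) - 2*g^2/((q*c+p*s)^2 + 2*g^2*s^2/q^2)) from by ring]
  rw [hsplit]
  rw [add_left_inj]
  field_simp
  ring_nf
  linear_combination (q^2*p^2 - q^4 + 2*g^2) * hcs

lemma strip_lemma (g c s q p : ℝ) (hg : 0 < g) (hcs : c^2 - s^2 = 1) (hs : s ≠ 0) (hq : q ≠ 0)
    (hX : (q*c+p*s)^2 ≤ g) :
    q^2/(2*s^2) - ((c^2+s^2)*q^2 + (c^2+s^2)*p^2 + 2*(2*s*c)*q*p + (c^2+s^2)*g^2/q^2)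
      ≤ (g/(8*c^2*s^2) + 4*g*c^2/s^2) - q^2/(8*s^2) - p^2/(16*c^2) := by
  have hs2 : 0 < s^2 := by positivity
  have hc2 : 0 < c^2 := by nlinarith
  have hq2 : 0 < q^2 := by positivity
  have hgq : 0 ≤ (c^2+s^2)*g^2/q^2 := by positivity
  rw [← sub_nonneg]
  have hid : 16*s^2*c^2*((c^2+s^2)*q^2 + (c^2+s^2)*p^2 + 2*(2*s*c)*q*p)
      = 8*c^2*((1+c^2+3*s^2)*(q*c+p*s)^2 - 4*(q*c+p*s)*q*c + 2*q^2) := by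
    linear_combination (16*c^2*q^2 - 8*c^4*q^2 - 16*c^3*s*q*p - 16*c^2*s^2*q^2 + 8*c^2*s^2*p^2) * hcs
  have e1 : s^2*p^2 ≤ 2*(q*c+p*s)^2 + 2*c^2*q^2 := by nlinarith [sq_nonneg (q*c+p*s+q*c)]
  have e2 : 32*((q*c+p*s)*q)*c^3 ≤ 4*c^2*q^2 + 64*c^4*(q*c+p*s)^2 := by
    nlinarith [sq_nonneg (2*c*q - 8*c^2*(q*c+p*s))]
  have e3 : 64*c^4*(q*c+p*s)^2 ≤ 64*c^4*g :=
    mul_le_mul_of_nonneg_left hX (by positivity : (0:ℝ) ≤ 64*c^4)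
  have e4 : 0 ≤ 8*c^2*(1+c^2+3*s^2)*(q*c+p*s)^2 := by positivity
  have key : 0 ≤ 16*s^2*c^2*((c^2+s^2)*q^2 + (c^2+s^2)*p^2 + 2*(2*s*c)*q*p)
      + 2*g + 64*g*c^4 - (10*c^2*q^2 + s^2*p^2) := by
    rw [hid]; nlinarith [e1, e2, e3, e4, hX]
  have expand : (g/(8*c^2*s^2) + 4*g*c^2/s^2) - q^2/(8*s^2) - p^2/(16*c^2)
      - (q^2/(2*s^2) - ((c^2+s^2)*q^2 + (c^2+s^2)*p^2 + 2*(2*s*c)*q*p + (c^2+s^2)*g^2/q^2))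
      = (16*s^2*c^2*((c^2+s^2)*q^2 + (c^2+s^2)*p^2 + 2*(2*s*c)*q*p)
        + 2*g + 64*g*c^4 - (10*c^2*q^2 + s^2*p^2))/(16*s^2*c^2) + (c^2+s^2)*g^2/q^2 := by
    have hc0 : c ≠ 0 := fun h => by simp [h] at hc2
    field_simp
    ring
  rw [expand]
  have h1 : 0 ≤ (16*s^2*c^2*((c^2+s^2)*q^2 + (c^2+s^2)*p^2 + 2*(2*s*c)*q*p)
      + 2*g + 64*g*c^4 - (10*c^2*q^2 + s^2*p^2))/(16*s^2*c^2) :=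
    div_nonneg key (by positivity)
  linarith

lemma quad_low (C2 S2 g q p : ℝ) (hq : q ≠ 0) (hC2 : 0 < C2) :
    (C2 - |S2|)*q^2 + (C2 - |S2|)*p^2 ≤ C2*q^2 + C2*p^2 + 2*S2*q*p + C2*g^2/q^2 := by
  have h1 : 0 ≤ (|S2| + S2) * (q+p)^2 := by
    have := neg_abs_le S2; nlinarith [sq_nonneg (q+p)]
  have h2 : 0 ≤ (|S2| - S2) * (q-p)^2 := by
    have := le_abs_self S2; nlinarith [sq_nonneg (q-p)]
  have h3 : 0 ≤ C2*g^2/q^2 := by positivity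
  nlinarith

lemma delta_pos (c s : ℝ) (hcs : c^2 - s^2 = 1) : 0 < c^2 + s^2 - |2*s*c| := by
  have h1 : |2*s*c|^2 = (2*s*c)^2 := sq_abs _
  nlinarith [abs_nonneg (2*s*c), sq_nonneg (c^2-s^2), sq_nonneg (c+s), sq_nonneg (c-s)]

lemma gauss_prod_integrable {a b : ℝ} (ha : 0 < a) (hb : 0 < b) :
    Integrable (fun x : ℝ×ℝ => Real.exp (-a*x.1^2) * Real.exp (-b*x.2^2)) := by
  have h := (integrable_exp_neg_mul_sq ha).mul_prod (integrable_exp_neg_mul_sq hb)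
  rwa [← Measure.volume_eq_prod] at h

lemma Hfun_meas (C2 S2 gg : ℝ) :
    Measurable (fun x : ℝ×ℝ => if x.1 = 0 then (0:ℝ)
      else Real.exp (-(C2*x.1^2 + C2*x.2^2 + 2*S2*x.1*x.2 + C2*gg^2/x.1^2))) := by
  refine Measurable.ite ?_ measurable_const ?_
  · exact measurable_fst (measurableSet_singleton 0)
  · fun_prop

lemma Hfun_integrable {C2 S2 : ℝ} (gg : ℝ) (hcs2 : 0 < C2 - |S2|) :
    Integrable (fun x : ℝ×ℝ => if x.1 = 0 then (0:ℝ)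
      else Real.exp (-(C2*x.1^2 + C2*x.2^2 + 2*S2*x.1*x.2 + C2*gg^2/x.1^2))) := by
  have hC2 : 0 < C2 := lt_of_le_of_lt (abs_nonneg S2) (by linarith)
  refine (gauss_prod_integrable hcs2 hcs2).mono'
    (Hfun_meas C2 S2 gg).aestronglyMeasurable ?_
  filter_upwards with x
  by_cases hq : x.1 = 0
  · rw [if_pos hq, norm_zero]; positivity
  · rw [if_neg hq, Real.norm_eq_abs, abs_of_pos (Real.exp_pos _), ← Real.exp_add]
    apply Real.exp_le_exp.mpr
    have := quad_low C2 S2 gg x.1 x.2 hq hC2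
    linarith

lemma Hfun_integral {C2 S2 gg : ℝ} (hrel : C2^2 - S2^2 = 1) (hcs2 : 0 < C2 - |S2|) (hgg : 0 < gg) :
    ∫ x : ℝ×ℝ, (if x.1 = 0 then (0:ℝ)
        else Real.exp (-(C2*x.1^2 + C2*x.2^2 + 2*S2*x.1*x.2 + C2*gg^2/x.1^2)))
      = π * Real.exp (-(2*gg)) := by
  have hC2 : 0 < C2 := lt_of_le_of_lt (abs_nonneg S2) (by linarith)
  have hInt := Hfun_integrable gg hcs2
  rw [Measure.volume_eq_prod] at hInt ⊢
  rw [integral_prod _ hInt]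
  have hin : ∀ a : ℝ, (∫ b : ℝ, if a = 0 then (0:ℝ)
      else Real.exp (-(C2*a^2 + C2*b^2 + 2*S2*a*b + C2*gg^2/a^2)))
      = if a = 0 then (0:ℝ) else Real.sqrt (π/C2) * Real.exp (-(C2⁻¹*a^2 + (C2*gg^2)/a^2)) := by
    intro a
    by_cases ha : a = 0
    · simp [ha]
    · rw [if_neg ha]
      simp only [if_neg ha]
      rw [inner_gauss hC2 hrel a (C2*gg^2/a^2)]
      congr 2
      ring
  simp only [hin]
  have hae : (fun a : ℝ => if a = 0 then (0:ℝ)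
      else Real.sqrt (π/C2) * Real.exp (-(C2⁻¹*a^2 + (C2*gg^2)/a^2)))
      =ᶠ[ae volume] (fun a : ℝ => Real.sqrt (π/C2) * Real.exp (-(C2⁻¹*a^2 + (C2*gg^2)/a^2))) := by
    have h0 : ∀ᵐ (a : ℝ), a ≠ 0 := by
      refine ae_iff.mpr ?_
      simp only [ne_eq, not_not, setOf_eq_eq_singleton]
      exact measure_singleton 0
    filter_upwards [h0] with a ha
    rw [if_neg ha]
  rw [integral_congr_ae hae, integral_const_mul]
  rw [glasser_main (inv_pos.mpr hC2) (by positivity : (0:ℝ) < C2*gg^2)]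
  have h4 : C2⁻¹*(C2*gg^2) = gg^2 := by field_simp
  rw [h4, Real.sqrt_sq hgg.le]
  have h5 : π/C2⁻¹ = π*C2 := by field_simp
  rw [h5, ← mul_assoc]
  have h6 : Real.sqrt (π/C2) * Real.sqrt (π*C2) = π := by
    rw [← Real.sqrt_mul (by positivity)]
    rw [show π/C2*(π*C2) = π^2 from by field_simp]
    exact Real.sqrt_sq Real.pi_nonneg
  rw [h6]

lemma F_le_sum {g c s : ℝ} (hg : 0 < g) (hcs : c^2 - s^2 = 1) (hcpos : 0 < c) (hs : s ≠ 0)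
    (x : ℝ × ℝ) :
    (if x.1 = 0 then (0:ℝ) else
      Real.exp (-(1/2) * ((x.1*c + x.2*s)^2 + (x.1*s + x.2*c)^2
        + 2*((x.1*c + x.2*s)^2 + 2*g^2*s^2/x.1^2) + x.2^2 - x.1^2 + 2*g^2/x.1^2
        - 2*g^2/((x.1*c + x.2*s)^2 + 2*g^2*s^2/x.1^2))))
    ≤ Real.exp g * (Real.exp (-(c^2+s^2-|2*s*c|)*x.1^2) * Real.exp (-(c^2+s^2-|2*s*c|)*x.2^2))
      + Real.exp (g/(8*c^2*s^2) + 4*g*c^2/s^2)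
        * (Real.exp (-(1/(8*s^2))*x.1^2) * Real.exp (-(1/(16*c^2))*x.2^2)) := by
  obtain ⟨q, p⟩ := x
  simp only
  by_cases hq : q = 0
  · rw [if_pos hq]; positivity
  · rw [if_neg hq]
    have hδpos := delta_pos c s hcs
    have hs2 : 0 < s^2 := by positivity
    have hc2 : 0 < c^2 := by positivity
    have hq2 : 0 < q^2 := by positivity
    have hC2pos : 0 < c^2 + s^2 := by positivity
    have hkey := key_ident g c s q p hcs hq
    rw [show (q*c + p*s)^2 + (q*s + p*c)^2
        + 2*((q*c + p*s)^2 + 2*g^2*s^2/q^2) + p^2 - q^2 + 2*g^2/q^2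
        - 2*g^2/((q*c + p*s)^2 + 2*g^2*s^2/q^2)
      = (q*c + p*s)^2 + (q*s + p*c)^2
        + 2*((q*c+p*s)^2 + 2*g^2*s^2/q^2) + p^2 - q^2 + 2*g^2/q^2
        - 2*g^2/((q*c+p*s)^2 + 2*g^2*s^2/q^2) from rfl]
    rw [hkey]
    have hquad := quad_low (c^2+s^2) (2*s*c) g q p hq hC2pos
    rcases le_or_gt g ((q*c+p*s)^2) with hX | hX
    · -- off-strip : dominate by first gaussian
      have hnn : (0:ℝ) ≤ 2*g^2*s^2/q^2 := by positivity
      have hWge : g ≤ (q*c+p*s)^2 + 2*g^2*s^2/q^2 := by linarith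
      have hWpos : 0 < (q*c+p*s)^2 + 2*g^2*s^2/q^2 := lt_of_lt_of_le hg hWge
      have h1 : g^2/((q*c+p*s)^2 + 2*g^2*s^2/q^2) ≤ g := by
        rw [div_le_iff₀ hWpos]; nlinarith
      have h3 : -((c^2+s^2)*q^2 + (c^2+s^2)*p^2 + 2*(2*s*c)*q*p + (c^2+s^2)*g^2/q^2)
          + g^2/((q*c+p*s)^2 + 2*g^2*s^2/q^2)
          ≤ g + (-(c^2+s^2-|2*s*c|)*q^2) + (-(c^2+s^2-|2*s*c|)*p^2) := by
        linarith
      refine le_trans (le_trans (Real.exp_le_exp.mpr h3) ?_) (le_add_of_nonneg_right (by positivity))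
      rw [Real.exp_add, Real.exp_add, mul_assoc]
    · -- strip
      have hWpos2 : 0 < 2*g^2*s^2/q^2 := by positivity
      have h1 : g^2/((q*c+p*s)^2 + 2*g^2*s^2/q^2) ≤ g^2/(2*g^2*s^2/q^2) := by
        apply div_le_div_of_nonneg_left (sq_nonneg g) hWpos2
        nlinarith [sq_nonneg (q*c+p*s)]
      have h2 : g^2/(2*g^2*s^2/q^2) = q^2/(2*s^2) := by
        field_simp
      have h3 := strip_lemma g c s q p hg hcs hs hq hX.le
      have h4 : -((c^2+s^2)*q^2 + (c^2+s^2)*p^2 + 2*(2*s*c)*q*p + (c^2+s^2)*g^2/q^2)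
          + g^2/((q*c+p*s)^2 + 2*g^2*s^2/q^2)
          ≤ (g/(8*c^2*s^2) + 4*g*c^2/s^2) + (-(1/(8*s^2))*q^2) + (-(1/(16*c^2))*p^2) := by
        rw [h2] at h1
        have e1 : q^2/(8*s^2) = (1/(8*s^2))*q^2 := by ring
        have e2 : p^2/(16*c^2) = (1/(16*c^2))*p^2 := by ring
        rw [e1, e2] at h3
        linarith
      refine le_trans (le_trans (Real.exp_le_exp.mpr h4) ?_) (le_add_of_nonneg_left (by positivity))
      rw [Real.exp_add, Real.exp_add, mul_assoc]

/-- Proposition 6.3, first inequality: the Gaussian classical fidelity for the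
perturbed inverted oscillator satisfies `G_C(t,g) ≥ e^{-2g}`. -/
theorem classical_fidelity_IHO_lower_bound (g : ℝ) (hg : 0 < g) (t : ℝ) :
    Real.exp (-(2 * g)) ≤
      (1 / Real.pi) * ∫ x : ℝ × ℝ,
        (if x.1 = 0 then 0 else
          Real.exp (-(1 / 2) *
            ((x.1 * Real.cosh t + x.2 * Real.sinh t) ^ 2
              + (x.1 * Real.sinh t + x.2 * Real.cosh t) ^ 2
              + 2 * ((x.1 * Real.cosh t + x.2 * Real.sinh t) ^ 2
                  + 2 * g ^ 2 * (Real.sinh t) ^ 2 / x.1 ^ 2)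
              + x.2 ^ 2 - x.1 ^ 2 + 2 * g ^ 2 / x.1 ^ 2
              - 2 * g ^ 2 / ((x.1 * Real.cosh t + x.2 * Real.sinh t) ^ 2
                  + 2 * g ^ 2 * (Real.sinh t) ^ 2 / x.1 ^ 2)))) := by
  have hπ : (0:ℝ) < π := Real.pi_pos
  set c := Real.cosh t with hcdef
  set s := Real.sinh t with hsdef
  have hcs : c^2 - s^2 = 1 := Real.cosh_sq_sub_sinh_sq t
  have hcpos : 0 < c := Real.cosh_pos t
  set F := fun x : ℝ × ℝ => (if x.1 = 0 then (0:ℝ) else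
          Real.exp (-(1 / 2) *
            ((x.1 * c + x.2 * s) ^ 2
              + (x.1 * s + x.2 * c) ^ 2
              + 2 * ((x.1 * c + x.2 * s) ^ 2
                  + 2 * g ^ 2 * s ^ 2 / x.1 ^ 2)
              + x.2 ^ 2 - x.1 ^ 2 + 2 * g ^ 2 / x.1 ^ 2
              - 2 * g ^ 2 / ((x.1 * c + x.2 * s) ^ 2
                  + 2 * g ^ 2 * s ^ 2 / x.1 ^ 2)))) with hFdef
  
  have hFnn : ∀ x : ℝ×ℝ, 0 ≤ F x := by
    intro x; simp only [hFdef]; split_ifs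
    exacts [le_refl 0, (Real.exp_pos _).le]
  have hFmeas : Measurable F := by
    rw [hFdef]
    refine Measurable.ite ?_ measurable_const ?_
    · exact measurable_fst (measurableSet_singleton 0)
    · fun_prop
  have hC2pos : 0 < c^2 + s^2 := by positivity
  have hrel : (c^2+s^2)^2 - (2*s*c)^2 = 1 := by linear_combination (c^2-s^2+1)*hcs
  have hδ : 0 < c^2+s^2 - |2*s*c| := delta_pos c s hcs
  have hIntH := Hfun_integrable (C2 := c^2+s^2) (S2 := 2*s*c) g hδ
  have hIH := Hfun_integral (C2 := c^2+s^2) (S2 := 2*s*c) hrel hδ hg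
  have hHF : ∀ x : ℝ×ℝ, (if x.1 = 0 then (0:ℝ) else
      Real.exp (-((c^2+s^2)*x.1^2 + (c^2+s^2)*x.2^2 + 2*(2*s*c)*x.1*x.2 + (c^2+s^2)*g^2/x.1^2)))
      ≤ F x := by
    intro x
    simp only [hFdef]
    by_cases hq : x.1 = 0
    · rw [if_pos hq, if_pos hq]
    · rw [if_neg hq, if_neg hq, key_ident g c s x.1 x.2 hcs hq]
      apply Real.exp_le_exp.mpr
      have h0 : 0 ≤ g^2/((x.1*c+x.2*s)^2 + 2*g^2*s^2/x.1^2) := by positivity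
      linarith
  have hIntF : Integrable F := by
    rcases eq_or_ne s 0 with hs0 | hs0
    · have ht0 : t = 0 := by
        rw [← Real.sinh_eq_zero, ← hsdef]; exact hs0
      have hc1 : c = 1 := by rw [hcdef, ht0, Real.cosh_zero]
      refine (gauss_prod_integrable one_pos one_pos).mono' hFmeas.aestronglyMeasurable ?_
      filter_upwards with x
      rw [Real.norm_eq_abs, abs_of_nonneg (hFnn x)]
      simp only [hFdef, hc1, hs0]
      by_cases hq : x.1 = 0
      · rw [if_pos hq]; positivity
      · rw [if_neg hq]
        apply le_of_eq
        rw [← Real.exp_add]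
        congr 1
        have hq2 : (x.1:ℝ)^2 ≠ 0 := pow_ne_zero 2 hq
        norm_num
        field_simp
        ring
    · have maj := ((gauss_prod_integrable hδ hδ).const_mul (Real.exp g)).add
        ((gauss_prod_integrable (a := 1/(8*s^2)) (b := 1/(16*c^2))
          (by positivity) (by positivity)).const_mul
          (Real.exp (g/(8*c^2*s^2) + 4*g*c^2/s^2)))
      refine maj.mono' hFmeas.aestronglyMeasurable ?_
      filter_upwards with x
      rw [Real.norm_eq_abs, abs_of_nonneg (hFnn x)]
      simp only [hFdef]
      exact F_le_sum hg hcs hcpos hs0 x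
  have hmono := integral_mono hIntH hIntF hHF
  rw [hIH] at hmono
  calc Real.exp (-(2*g)) = (1/π) * (π * Real.exp (-(2*g))) := by field_simp
    _ ≤ (1/π) * ∫ x, F x := mul_le_mul_of_nonneg_left hmono (by positivity)
end
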